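/- arXiv:1712.10198 — 7 statements merged into one kernel-verified Lean document; each statement's English description precedes it below -/
import Mathlib

section
/- If X and Y are k-dimensional subspaces of V at distance m in the Grassmann graph, then every geodesic from X to Y in the Grassmann graph consists of k-dimensional subspaces containing X ∩ Y. -/
open Module

/-- The Grassmann graph: vertices are the `k`-dimensional subspaces of `V`,
two subspaces being adjacent iff their intersection has dimension `k - 1`. -/
def GrassmannGraph (F V : Type*) [Field F] [AddCommGroup V] [Module F V] (k : ℕ) :
    SimpleGraph {X : Submodule F V // finrank F X = k} where
  Adj X Y := X ≠ Y ∧ finrank F (X.1 ⊓ Y.1 : Submodule F V) = k - 1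
  symm := by
    constructor
    rintro X Y ⟨h1, h2⟩
    exact ⟨h1.symm, by rwa [inf_comm]⟩
  loopless := by constructor; rintro X ⟨h1, -⟩; exact h1 rfl

section Helpers

variable {F V : Type*} [Field F] [AddCommGroup V] [Module F V] [FiniteDimensional F V]

lemma finrank_sup_span_singleton (W : Submodule F V) {v : V} (hv : v ∉ W) :
    finrank F (W ⊔ (F ∙ v) : Submodule F V) = finrank F W + 1 := by
  have hv0 : v ≠ 0 := fun h => hv (h ▸ W.zero_mem)
  have hdisj : W ⊓ (F ∙ v) = ⊥ :=
    disjoint_iff.mp ((Submodule.disjoint_span_singleton' hv0).mpr hv)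
  have key := Submodule.finrank_sup_add_finrank_inf_eq W (F ∙ v)
  rw [hdisj, finrank_bot, add_zero, finrank_span_singleton hv0] at key
  exact key

lemma exists_intermediate_submodule (W X : Submodule F V) (hWX : W ≤ X) :
    ∀ r, finrank F W ≤ r → r ≤ finrank F X → ∃ H, W ≤ H ∧ H ≤ X ∧ finrank F H = r := by
  intro r hr
  induction r, hr using Nat.le_induction with
  | base => exact fun _ => ⟨W, le_rfl, hWX, rfl⟩
  | succ r hr ih =>
    intro hrX
    obtain ⟨H, hWH, hHX, hHr⟩ := ih (by omega)
    have hlt : finrank F (H.comap X.subtype) < finrank F X := by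
      rw [(Submodule.comapSubtypeEquivOfLe hHX).finrank_eq, hHr]; omega
    obtain ⟨x, hx⟩ := Submodule.exists_of_finrank_lt (H.comap X.subtype) hlt
    have hxH : (x : V) ∉ H := by simpa using hx 1 one_ne_zero
    refine ⟨H ⊔ (F ∙ (x : V)), hWH.trans le_sup_left, sup_le hHX ?_, ?_⟩
    · rw [Submodule.span_le, Set.singleton_subset_iff]; exact x.2
    · rw [finrank_sup_span_singleton H hxH, hHr]

variable {k : ℕ}

lemma grassmann_adj_k_pos {Z W : {X : Submodule F V // finrank F X = k}}
    (h : (GrassmannGraph F V k).Adj Z W) : 1 ≤ k := by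
  by_contra hk
  have hk0 : k = 0 := by omega
  apply h.1
  have hZ : Z.1 = ⊥ := Submodule.finrank_eq_zero.mp (by rw [Z.2, hk0])
  have hW : W.1 = ⊥ := Submodule.finrank_eq_zero.mp (by rw [W.2, hk0])
  exact Subtype.ext (hZ.trans hW.symm)

lemma grassmann_step (S : Submodule F V) {Z W : {X : Submodule F V // finrank F X = k}}
    (h : (GrassmannGraph F V k).Adj Z W) :
    finrank F (S ⊓ Z.1 : Submodule F V) ≤ finrank F (S ⊓ W.1 : Submodule F V) + 1 := by
  have hk := grassmann_adj_k_pos h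
  have h1 : (S ⊓ Z.1) ⊓ (Z.1 ⊓ W.1) ≤ S ⊓ W.1 :=
    le_inf (inf_le_left.trans inf_le_left) (inf_le_right.trans inf_le_right)
  have h2 : (S ⊓ Z.1) ⊔ (Z.1 ⊓ W.1) ≤ Z.1 := sup_le inf_le_right inf_le_left
  have key := Submodule.finrank_sup_add_finrank_inf_eq (S ⊓ Z.1) (Z.1 ⊓ W.1)
  have hB : finrank F (Z.1 ⊓ W.1 : Submodule F V) = k - 1 := h.2
  have hsup : finrank F ((S ⊓ Z.1) ⊔ (Z.1 ⊓ W.1) : Submodule F V) ≤ k := by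
    have := Submodule.finrank_mono h2; rwa [Z.2] at this
  have hinf : finrank F ((S ⊓ Z.1) ⊓ (Z.1 ⊓ W.1) : Submodule F V)
      ≤ finrank F (S ⊓ W.1 : Submodule F V) := Submodule.finrank_mono h1
  omega

lemma grassmann_walk_lb (S : Submodule F V) {A B : {X : Submodule F V // finrank F X = k}}
    (p : (GrassmannGraph F V k).Walk A B) :
    finrank F (S ⊓ A.1 : Submodule F V) ≤ finrank F (S ⊓ B.1 : Submodule F V) + p.length := by
  induction p with
  | nil => simp
  | cons h q ih =>
    have := grassmann_step S h
    rw [SimpleGraph.Walk.length_cons]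
    omega

lemma grassmann_walk_ub :
    ∀ t (X Y : {X : Submodule F V // finrank F X = k}),
      k ≤ finrank F (X.1 ⊓ Y.1 : Submodule F V) + t →
      ∃ p : (GrassmannGraph F V k).Walk X Y,
        p.length + finrank F (X.1 ⊓ Y.1 : Submodule F V) ≤ k := by
  intro t
  induction t with
  | zero =>
    intro X Y ht
    have hle : finrank F (X.1 ⊓ Y.1 : Submodule F V) ≤ k := by
      have := Submodule.finrank_mono (inf_le_left : X.1 ⊓ Y.1 ≤ X.1); rwa [X.2] at this
    have hXY : X = Y := by
      have h1 : X.1 ⊓ Y.1 = X.1 :=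
        Submodule.eq_of_le_of_finrank_le inf_le_left (by omega)
      have h2 : X.1 ⊓ Y.1 = Y.1 :=
        Submodule.eq_of_le_of_finrank_le inf_le_right (by rw [Y.2]; omega)
      exact Subtype.ext (by rw [← h1, h2])
    subst hXY
    exact ⟨SimpleGraph.Walk.nil, by simpa using hle⟩
  | succ t ih =>
    intro X Y ht
    by_cases hXY : X = Y
    · subst hXY
      refine ⟨SimpleGraph.Walk.nil, ?_⟩
      simp only [SimpleGraph.Walk.length_nil, Nat.zero_add]
      exact le_trans (Submodule.finrank_mono inf_le_left) (le_of_eq X.2)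
    set d := finrank F (X.1 ⊓ Y.1 : Submodule F V) with hd
    have hdle : d ≤ k := by
      have := Submodule.finrank_mono (inf_le_left : X.1 ⊓ Y.1 ≤ X.1); rwa [X.2] at this
    have hdlt : d < k := by
      rcases lt_or_eq_of_le hdle with h | h
      · exact h
      exfalso; apply hXY
      have h1 : X.1 ⊓ Y.1 = X.1 :=
        Submodule.eq_of_le_of_finrank_le inf_le_left (by omega)
      have h2 : X.1 ⊓ Y.1 = Y.1 :=
        Submodule.eq_of_le_of_finrank_le inf_le_right (by rw [Y.2]; omega)
      exact Subtype.ext (by rw [← h1, h2])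
    -- pick u ∈ Y \ X
    have hlt : X.1 ⊓ Y.1 < Y.1 := by
      refine lt_of_le_of_ne inf_le_right fun h => ?_
      have : d = k := by rw [hd, h]; exact Y.2
      omega
    obtain ⟨u, huY, huXY⟩ := SetLike.exists_of_lt hlt
    have huX : u ∉ X.1 := fun h => huXY (Submodule.mem_inf.mpr ⟨h, huY⟩)
    -- intermediate hyperplane of X containing X ⊓ Y
    obtain ⟨H, hWH, hHX, hHr⟩ := exists_intermediate_submodule (X.1 ⊓ Y.1) X.1
      inf_le_left (k - 1) (by omega) (by rw [X.2]; omega)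
    have huH : u ∉ H := fun h => huX (hHX h)
    have hX'rank : finrank F (H ⊔ (F ∙ u) : Submodule F V) = k := by
      rw [finrank_sup_span_singleton H huH, hHr]; omega
    set X' : {X : Submodule F V // finrank F X = k} := ⟨H ⊔ (F ∙ u), hX'rank⟩ with hX'
    have huX' : u ∈ X'.1 :=
      Submodule.mem_sup_right (Submodule.mem_span_singleton_self u)
    have hneq : X ≠ X' := fun h => huX (h ▸ huX')
    have hinfrank : finrank F (X.1 ⊓ X'.1 : Submodule F V) = k - 1 := by
      have hle1 : H ≤ X.1 ⊓ X'.1 := le_inf hHX le_sup_left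
      have h1 : k - 1 ≤ finrank F (X.1 ⊓ X'.1 : Submodule F V) := by
        have := Submodule.finrank_mono hle1; rwa [hHr] at this
      have h2 : finrank F (X.1 ⊓ X'.1 : Submodule F V) ≤ k := by
        have := Submodule.finrank_mono (inf_le_left : X.1 ⊓ X'.1 ≤ X.1); rwa [X.2] at this
      have hne : finrank F (X.1 ⊓ X'.1 : Submodule F V) ≠ k := by
        intro hk
        have hXle : X.1 ⊓ X'.1 = X.1 :=
          Submodule.eq_of_le_of_finrank_le inf_le_left (by rw [X.2, hk])
        have : X.1 = X'.1 := Submodule.eq_of_le_of_finrank_le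
          (inf_eq_left.mp hXle) (by rw [X.2, X'.2])
        exact huX (this ▸ huX')
      omega
    have hadj : (GrassmannGraph F V k).Adj X X' := ⟨hneq, hinfrank⟩
    have hnext : d + 1 ≤ finrank F (X'.1 ⊓ Y.1 : Submodule F V) := by
      have hle2 : (X.1 ⊓ Y.1) ⊔ (F ∙ u) ≤ X'.1 ⊓ Y.1 := by
        refine le_inf (sup_le (hWH.trans le_sup_left) le_sup_right)
          (sup_le inf_le_right ?_)
        rw [Submodule.span_le, Set.singleton_subset_iff]; exact huY
      have := Submodule.finrank_mono hle2
      rwa [finrank_sup_span_singleton _ huXY] at this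
    obtain ⟨q, hq⟩ := ih X' Y (by omega)
    exact ⟨SimpleGraph.Walk.cons hadj q, by rw [SimpleGraph.Walk.length_cons]; omega⟩

end Helpers

/-- Every geodesic between `X` and `Y` in the Grassmann graph consists of
`k`-dimensional subspaces containing `X ∩ Y`. -/
theorem stmt3 (F : Type*) [Field F] [Fintype F] (V : Type*) [AddCommGroup V] [Module F V]
    [FiniteDimensional F V] (n k m : ℕ) (hn : finrank F V = n)
    (X Y : {X : Submodule F V // finrank F X = k})
    (hm : (GrassmannGraph F V k).dist X Y = m)
    (p : (GrassmannGraph F V k).Walk X Y) (hp : p.length = m) :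
    ∀ Z ∈ p.support, X.1 ⊓ Y.1 ≤ Z.1 := by
  classical
  intro Z hZ
  set c := finrank F (X.1 ⊓ Y.1 : Submodule F V) with hc
  -- decompose the walk at Z
  have hsum : (p.takeUntil Z hZ).length + (p.dropUntil Z hZ).length = m := by
    have := congrArg SimpleGraph.Walk.length (p.take_spec hZ)
    rwa [SimpleGraph.Walk.length_append, hp] at this
  -- lower bounds
  have lb1 := grassmann_walk_lb X.1 (p.takeUntil Z hZ)
  rw [inf_idem, X.2] at lb1
  have lb2 := grassmann_walk_lb Y.1 (p.dropUntil Z hZ).reverse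
  rw [inf_idem, Y.2, SimpleGraph.Walk.length_reverse] at lb2
  -- upper bound on the distance
  obtain ⟨q, hq⟩ := grassmann_walk_ub k X Y (Nat.le_add_left k c)
  have hmq : m ≤ q.length := hm ▸ SimpleGraph.dist_le q
  have hmc : m + c ≤ k := by omega
  -- dimension count at Z
  have key := Submodule.finrank_sup_add_finrank_inf_eq (X.1 ⊓ Z.1) (Y.1 ⊓ Z.1)
  have hsup : finrank F ((X.1 ⊓ Z.1) ⊔ (Y.1 ⊓ Z.1) : Submodule F V) ≤ k := by
    have := Submodule.finrank_mono
      (sup_le inf_le_right inf_le_right : (X.1 ⊓ Z.1) ⊔ (Y.1 ⊓ Z.1) ≤ Z.1)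
    rwa [Z.2] at this
  have hinfle : (X.1 ⊓ Z.1) ⊓ (Y.1 ⊓ Z.1) ≤ X.1 ⊓ Y.1 :=
    le_inf (inf_le_left.trans inf_le_left) (inf_le_right.trans inf_le_left)
  have hinf_rank : finrank F ((X.1 ⊓ Z.1) ⊓ (Y.1 ⊓ Z.1) : Submodule F V) ≤ c :=
    Submodule.finrank_mono hinfle
  have hge : c ≤ finrank F ((X.1 ⊓ Z.1) ⊓ (Y.1 ⊓ Z.1) : Submodule F V) := by omega
  have heq : (X.1 ⊓ Z.1) ⊓ (Y.1 ⊓ Z.1) = X.1 ⊓ Y.1 :=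
    Submodule.eq_of_le_of_finrank_le hinfle hge
  calc X.1 ⊓ Y.1 = (X.1 ⊓ Z.1) ⊓ (Y.1 ⊓ Z.1) := heq.symm
    _ ≤ Z.1 := inf_le_right.trans inf_le_right
end

section
/- If X and Y are k-dimensional subspaces of V at distance m in the Grassmann graph, then the number of geodesics connecting X and Y equals [m]_q^2 · [m-1]_q^2 · ... · [2]_q^2, where [j]_q = (q^j - 1)/(q - 1). -/
open Module

namespace GrassmannAux

/-- The Gaussian natural number `[d]_q` as a geometric sum. -/
def gq (q d : ℕ) : ℕ := ∑ i ∈ Finset.range d, q ^ i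

lemma gq_pos (q : ℕ) {d : ℕ} (hd : 1 ≤ d) : 0 < gq q d := by
  unfold gq
  have : (0:ℕ) < q ^ 0 := by simp
  calc (0:ℕ) < q ^ 0 := this
    _ ≤ ∑ i ∈ Finset.range d, q ^ i :=
      Finset.single_le_sum (f := fun i => q ^ i) (fun i _ => Nat.zero_le _)
        (Finset.mem_range.mpr hd)

lemma gq_one (q : ℕ) : gq q 1 = 1 := by simp [gq]

lemma gq_mul (q : ℕ) (hq : 1 ≤ q) (d : ℕ) : (q - 1) * gq q d = q ^ d - 1 := by
  induction d with
  | zero => simp [gq]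
  | succ d ih =>
    have hQ : 1 ≤ q ^ d := Nat.one_le_pow _ _ hq
    have h1 : gq q (d+1) = gq q d + q ^ d := by simp [gq, Finset.sum_range_succ]
    have h2 : (q - 1) * q ^ d = q * q ^ d - q ^ d := by
      rw [Nat.sub_mul, one_mul]
    rw [h1, Nat.mul_add, ih, h2, pow_succ]
    have hqq : q ^ d ≤ q * q ^ d := Nat.le_mul_of_pos_left _ (by omega)
    rw [mul_comm (q ^ d) q]
    omega

lemma gq_eq_div (q : ℕ) (hq : 2 ≤ q) (d : ℕ) : gq q d = (q ^ d - 1) / (q - 1) := by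
  have h := gq_mul q (by omega) d
  symm
  exact Nat.div_eq_of_eq_mul_left (by omega) (by rw [← h, mul_comm])

/-- `Nat.card` of a sigma type over a `Fintype`. -/
lemma nat_card_sigma {ι : Type*} [Fintype ι] (β : ι → Type*) [∀ i, Fintype (β i)] :
    Nat.card (Σ i, β i) = ∑ i, Nat.card (β i) := by
  simp [Nat.card_eq_fintype_card, Fintype.card_sigma]

variable {F : Type*} [Field F] {V : Type*} [AddCommGroup V] [Module F V]

section Counting

variable [Fintype F]

/-- Number of lines in a finite-dimensional vector space over a finite field. -/
lemma card_lines (q : ℕ) (hq : Fintype.card F = q)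
    (U : Type*) [AddCommGroup U] [Module F U] [FiniteDimensional F U] :
    Nat.card {L : Submodule F U // finrank F L = 1} = gq q (finrank F U) := by
  classical
  have hq2 : 2 ≤ q := hq ▸ Fintype.one_lt_card
  haveI : Finite U := Finite.of_equiv _ ((Module.finBasis F U).equivFun).toEquiv.symm
  letI : Fintype U := Fintype.ofFinite U
  haveI : Finite (Submodule F U) :=
    Finite.of_injective (fun p => (p : Set U)) SetLike.coe_injective
  letI : Fintype {L : Submodule F U // finrank F L = 1} := Fintype.ofFinite _
  have hcardU : Fintype.card U = q ^ finrank F U := by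
    rw [card_eq_pow_finrank (K := F), hq]
  -- the equivalence between nonzero vectors and pairs (line, nonzero vector of the line)
  have e : {v : U // v ≠ 0} ≃
      Σ L : {L : Submodule F U // finrank F L = 1}, {w : (L.1 : Type _) // w ≠ 0} := by
    refine
      { toFun := fun v =>
          ⟨⟨Submodule.span F {v.1}, finrank_span_singleton v.2⟩,
            ⟨⟨v.1, Submodule.mem_span_singleton_self v.1⟩, ?_⟩⟩
        invFun := fun x => ⟨(x.2.1 : U), fun h => x.2.2 (by
          apply Subtype.ext; simpa using h)⟩
        left_inv := fun v => rfl
        right_inv := ?_ }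
    · intro h
      exact v.2 (by simpa using congrArg Subtype.val h)
    · rintro ⟨⟨L, hL⟩, ⟨⟨w, hwL⟩, hw0⟩⟩
      have hw : w ≠ 0 := fun h => hw0 (by apply Subtype.ext; simpa using h)
      have hLs : Submodule.span F {w} = L := by
        apply Submodule.eq_of_le_of_finrank_le
        · exact (Submodule.span_le).mpr (by simpa using hwL)
        · rw [hL, finrank_span_singleton hw]
      subst hLs
      rfl
  have h1 : Nat.card {v : U // v ≠ 0} = q ^ finrank F U - 1 := by
    rw [Nat.card_eq_fintype_card]
    have := Fintype.card_subtype_compl (fun v : U => v = 0)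
    simp only [Fintype.card_subtype_eq] at this
    calc Fintype.card {v : U // v ≠ 0} = Fintype.card {v : U // ¬ (v = 0)} := by rfl
      _ = Fintype.card U - 1 := this
      _ = q ^ finrank F U - 1 := by rw [hcardU]
  have h2 : ∀ L : {L : Submodule F U // finrank F L = 1},
      Nat.card {w : (L.1 : Type _) // w ≠ 0} = q - 1 := by
    intro L
    letI : Fintype (L.1 : Type _) := Fintype.ofFinite _
    have hcardL : Fintype.card (L.1 : Type _) = q := by
      rw [card_eq_pow_finrank (K := F), hq, L.2, pow_one]
    rw [Nat.card_eq_fintype_card]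
    have := Fintype.card_subtype_compl (fun w : (L.1 : Type _) => w = 0)
    simp only [Fintype.card_subtype_eq] at this
    calc Fintype.card {w : (L.1 : Type _) // w ≠ 0}
        = Fintype.card {w : (L.1 : Type _) // ¬ (w = 0)} := by rfl
      _ = Fintype.card (L.1 : Type _) - 1 := this
      _ = q - 1 := by rw [hcardL]
  letI : ∀ L : {L : Submodule F U // finrank F L = 1}, Fintype {w : (L.1 : Type _) // w ≠ 0} :=
    fun L => Fintype.ofFinite _
  have h3 : Nat.card {v : U // v ≠ 0}
      = Nat.card {L : Submodule F U // finrank F L = 1} * (q - 1) := by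
    rw [Nat.card_congr e, nat_card_sigma]
    simp only [h2]
    rw [Finset.sum_const, Finset.card_univ, Nat.card_eq_fintype_card, smul_eq_mul]
  have hpos : 0 < q - 1 := by omega
  apply Nat.eq_of_mul_eq_mul_right hpos
  rw [h3.symm.trans h1, mul_comm]
  exact (gq_mul q (by omega) (finrank F U)).symm

/-- Number of hyperplanes in a finite-dimensional vector space over a finite field. -/
lemma card_hyperplanes (q : ℕ) (hq : Fintype.card F = q)
    (U : Type*) [AddCommGroup U] [Module F U] [FiniteDimensional F U] :
    Nat.card {H : Submodule F U // finrank F H + 1 = finrank F U} = gq q (finrank F U) := by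
  have e : {H : Submodule F U // finrank F H + 1 = finrank F U} ≃
      {L : Submodule F (Dual F U) // finrank F L = 1} := by
    refine
      { toFun := fun H => ⟨H.1.dualAnnihilator, ?_⟩
        invFun := fun L => ⟨L.1.dualCoannihilator, ?_⟩
        left_inv := fun H => Subtype.ext Subspace.dualAnnihilator_dualCoannihilator_eq
        right_inv := fun L => Subtype.ext Subspace.dualCoannihilator_dualAnnihilator_eq }
    · have h1 : finrank F (U ⧸ H.1) + finrank F H.1 = finrank F U :=
        Submodule.finrank_quotient_add_finrank _
      have h2 : finrank F (U ⧸ H.1) = finrank F H.1.dualAnnihilator :=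
        (Subspace.quotEquivAnnihilator H.1).finrank_eq
      have := H.2
      omega
    · have h1 := Subspace.finrank_add_finrank_dualCoannihilator_eq L.1
      have := L.2
      omega
  rw [Nat.card_congr e, card_lines q hq (Dual F U), Subspace.dual_finrank_eq]

end Counting

section Interval

variable [FiniteDimensional F V]

/-- Complement of a subspace inside a larger subspace. -/
lemma exists_compl_le {W X : Submodule F V} (h : W ≤ X) :
    ∃ C : Submodule F V, W ⊓ C = ⊥ ∧ W ⊔ C = X ∧
      finrank F W + finrank F C = finrank F X := by
  obtain ⟨C₀, hC⟩ := Submodule.exists_isCompl (W.comap X.subtype)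
  have hmapW : (W.comap X.subtype).map X.subtype = W := by
    rw [Submodule.map_comap_subtype]; exact inf_eq_right.mpr h
  have hinj : Function.Injective X.subtype := Submodule.injective_subtype X
  refine ⟨C₀.map X.subtype, ?_, ?_, ?_⟩
  · rw [← hmapW, ← Submodule.map_inf _ hinj, hC.inf_eq_bot, Submodule.map_bot]
  · rw [← hmapW, ← Submodule.map_sup, hC.sup_eq_top, Submodule.map_top,
      Submodule.range_subtype]
  · have h1 := Submodule.finrank_sup_add_finrank_inf_eq W (C₀.map X.subtype)
    rw [show W ⊓ C₀.map X.subtype = ⊥ by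
          rw [← hmapW, ← Submodule.map_inf _ hinj, hC.inf_eq_bot, Submodule.map_bot],
        show W ⊔ C₀.map X.subtype = X by
          rw [← hmapW, ← Submodule.map_sup, hC.sup_eq_top, Submodule.map_top,
            Submodule.range_subtype]] at h1
    rw [finrank_bot] at h1
    omega

/-- Subspaces of `V` contained in `C` with given dimension correspond to subspaces of `C`. -/
noncomputable def subEquiv (C : Submodule F V) (t : ℕ) :
    {H : Submodule F V // H ≤ C ∧ finrank F H = t} ≃
      {H' : Submodule F C // finrank F H' = t} where
  toFun H := ⟨H.1.comap C.subtype, by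
    have hmap : (H.1.comap C.subtype).map C.subtype = H.1 := by
      rw [Submodule.map_comap_subtype]; exact inf_eq_right.mpr H.2.1
    have := Submodule.finrank_map_subtype_eq C (H.1.comap C.subtype)
    rw [hmap] at this
    rw [← this]; exact H.2.2⟩
  invFun H' := ⟨H'.1.map C.subtype, Submodule.map_subtype_le _ _,
    by rw [Submodule.finrank_map_subtype_eq]; exact H'.2⟩
  left_inv H := by
    apply Subtype.ext
    simp only
    rw [Submodule.map_comap_subtype]
    exact inf_eq_right.mpr H.2.1
  right_inv H' := by
    apply Subtype.ext
    simp only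
    rw [Submodule.comap_map_eq, Submodule.ker_subtype, sup_bot_eq]

/-- The interval `[W, W ⊔ C]` is isomorphic to `[⊥, C]` when `W ⊓ C = ⊥`. -/
noncomputable def intervalEquiv (W C : Submodule F V) (h : W ⊓ C = ⊥) (t : ℕ) :
    {H : Submodule F V // W ≤ H ∧ H ≤ W ⊔ C ∧ finrank F H = finrank F W + t} ≃
      {H' : Submodule F V // H' ≤ C ∧ finrank F H' = t} where
  toFun H := ⟨H.1 ⊓ C, inf_le_right, by
    obtain ⟨hWH, hH, hrk⟩ := H.2
    have hmod : (W ⊔ C) ⊓ H.1 = W ⊔ (C ⊓ H.1) := sup_inf_assoc_of_le C hWH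
    have hHC : H.1 = W ⊔ (C ⊓ H.1) := by rw [← hmod, inf_eq_right.mpr hH]
    have h1 := Submodule.finrank_sup_add_finrank_inf_eq W (C ⊓ H.1)
    have hWbot : W ⊓ (C ⊓ H.1) = ⊥ := by
      apply le_bot_iff.mp
      rw [← h]
      exact le_inf inf_le_left (le_trans inf_le_right inf_le_left)
    rw [hWbot, finrank_bot, ← hHC] at h1
    rw [inf_comm]
    omega⟩
  invFun H' := ⟨W ⊔ H'.1, le_sup_left, sup_le_sup_left H'.2.1 W, by
    have h1 := Submodule.finrank_sup_add_finrank_inf_eq W H'.1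
    have hWbot : W ⊓ H'.1 = ⊥ := by
      apply le_bot_iff.mp
      rw [← h]
      exact le_inf inf_le_left (le_trans inf_le_right H'.2.1)
    rw [hWbot, finrank_bot] at h1
    have := H'.2.2
    omega⟩
  left_inv H := by
    apply Subtype.ext
    simp only
    obtain ⟨hWH, hH, hrk⟩ := H.2
    have hmod : (W ⊔ C) ⊓ H.1 = W ⊔ (C ⊓ H.1) := sup_inf_assoc_of_le C hWH
    rw [inf_comm C H.1] at hmod
    rw [← hmod, inf_eq_right.mpr hH]
  right_inv H' := by
    apply Subtype.ext
    simp only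
    have hmod : (H'.1 ⊔ W) ⊓ C = H'.1 ⊔ (W ⊓ C) := sup_inf_assoc_of_le W H'.2.1
    rw [sup_comm W H'.1, hmod, h, sup_bot_eq]

end Interval

section Step

variable [Fintype F] [FiniteDimensional F V]

/-- Counting subspaces between `W` and `W ⊔ C` of a given dimension via a complement. -/
lemma card_between (W C : Submodule F V) (hinf : W ⊓ C = ⊥) (t : ℕ) :
    Nat.card {H : Submodule F V // W ≤ H ∧ H ≤ W ⊔ C ∧ finrank F H = finrank F W + t}
      = Nat.card {H' : Submodule F C // finrank F H' = t} :=
  Nat.card_congr ((intervalEquiv W C hinf t).trans (subEquiv C t))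


/-- The number of neighbours of `X` one step closer to `Y`:
the intersection number `c_d = [d]_q ^ 2` of the Grassmann graph. -/
lemma card_step (q : ℕ) (hq : Fintype.card F = q) (k d : ℕ) (hd : 1 ≤ d)
    (X Y : {X : Submodule F V // finrank F X = k})
    (hXY : finrank F (X.1 ⊓ Y.1 : Submodule F V) + d = k) :
    Nat.card {Z : {X : Submodule F V // finrank F X = k} //
        (GrassmannGraph F V k).Adj X Z ∧
          finrank F (Z.1 ⊓ Y.1 : Submodule F V) + d = k + 1}
      = gq q d ^ 2 := by
  classical
  set W : Submodule F V := X.1 ⊓ Y.1 with hW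
  have hWX : W ≤ X.1 := inf_le_left
  have hWY : W ≤ Y.1 := inf_le_right
  have hfX : finrank F X.1 = k := X.2
  have hfY : finrank F Y.1 = k := Y.2
  have hk : 1 ≤ k := by omega
  -- basic structure result for `H ⊔ M`
  have hadd : ∀ H M : Submodule F V, W ≤ H → H ≤ X.1 → finrank F H = finrank F W + (d-1) →
      W ≤ M → M ≤ Y.1 → finrank F M = finrank F W + 1 →
      (H ⊔ M) ⊓ X.1 = H ∧ (H ⊔ M) ⊓ Y.1 = M ∧ finrank F (H ⊔ M : Submodule F V) = k := by
    intro H M hWH hHX hrH hWM hMY hrM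
    have hHM : H ⊓ M = W := le_antisymm (inf_le_inf hHX hMY) (le_inf hWH hWM)
    have h1 := Submodule.finrank_sup_add_finrank_inf_eq H M
    rw [hHM] at h1
    have hrk : finrank F (H ⊔ M : Submodule F V) = k := by omega
    have hMX : M ⊓ X.1 ≤ H := by
      refine le_trans ?_ hWH
      rw [hW]
      exact le_inf inf_le_right (le_trans inf_le_left hMY)
    have hHY : H ⊓ Y.1 ≤ M := by
      refine le_trans ?_ hWM
      rw [hW]
      exact le_inf (le_trans inf_le_left hHX) inf_le_right
    refine ⟨?_, ?_, hrk⟩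
    · rw [sup_inf_assoc_of_le M hHX]
      exact sup_eq_left.mpr hMX
    · rw [sup_comm H M, sup_inf_assoc_of_le H hMY]
      exact sup_eq_left.mpr hHY
  have gadj : ∀ (H M : Submodule F V)
      (h1 : W ≤ H ∧ H ≤ X.1 ∧ finrank F H = finrank F W + (d-1))
      (h2 : W ≤ M ∧ M ≤ Y.1 ∧ finrank F M = finrank F W + 1)
      (hZ : finrank F (H ⊔ M : Submodule F V) = k),
      (GrassmannGraph F V k).Adj X ⟨H ⊔ M, hZ⟩ ∧
        finrank F ((H ⊔ M) ⊓ Y.1 : Submodule F V) + d = k + 1 := by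
    intro H M h1 h2 hZ
    obtain ⟨hZX, hZYeq, hrk⟩ := hadd H M h1.1 h1.2.1 h1.2.2 h2.1 h2.2.1 h2.2.2
    refine ⟨⟨?_, ?_⟩, ?_⟩
    · intro heq
      have hXv : X.1 = H ⊔ M := congrArg Subtype.val heq
      rw [← hXv, inf_idem] at hZX
      rw [hZX] at hfX
      omega
    · show finrank F (X.1 ⊓ (H ⊔ M) : Submodule F V) = k - 1
      rw [inf_comm, hZX, h1.2.2]
      omega
    · rw [hZYeq, h2.2.2]
      omega
  -- the bijection with pairs (hyperplane over W in X, line over W in Y)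
  let HyT := {H : Submodule F V // W ≤ H ∧ H ≤ X.1 ∧ finrank F H = finrank F W + (d-1)}
  let LiT := {M : Submodule F V // W ≤ M ∧ M ≤ Y.1 ∧ finrank F M = finrank F W + 1}
  let g : HyT × LiT → {Z : {X : Submodule F V // finrank F X = k} //
      (GrassmannGraph F V k).Adj X Z ∧
        finrank F (Z.1 ⊓ Y.1 : Submodule F V) + d = k + 1} := fun p =>
    ⟨⟨p.1.1 ⊔ p.2.1,
        (hadd p.1.1 p.2.1 p.1.2.1 p.1.2.2.1 p.1.2.2.2 p.2.2.1 p.2.2.2.1 p.2.2.2.2).2.2⟩,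
      gadj p.1.1 p.2.1 p.1.2 p.2.2 _⟩
  have hgbij : Function.Bijective g := by
    constructor
    · intro p₁ p₂ hpe
      have hv : p₁.1.1 ⊔ p₁.2.1 = p₂.1.1 ⊔ p₂.2.1 :=
        congrArg (fun Z => Z.1.1) hpe
      obtain ⟨e1, f1, -⟩ :=
        hadd p₁.1.1 p₁.2.1 p₁.1.2.1 p₁.1.2.2.1 p₁.1.2.2.2 p₁.2.2.1 p₁.2.2.2.1 p₁.2.2.2.2
      obtain ⟨e2, f2, -⟩ :=
        hadd p₂.1.1 p₂.2.1 p₂.1.2.1 p₂.1.2.2.1 p₂.1.2.2.2 p₂.2.2.1 p₂.2.2.2.1 p₂.2.2.2.2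
      have hH : p₁.1.1 = p₂.1.1 := by rw [← e1, ← e2, hv]
      have hM : p₁.2.1 = p₂.2.1 := by rw [← f1, ← f2, hv]
      exact Prod.ext (Subtype.ext hH) (Subtype.ext hM)
    · rintro ⟨⟨Z, hZk⟩, hadj, hZY⟩
      obtain ⟨hne, hrkZX⟩ : X ≠ ⟨Z, hZk⟩ ∧
          finrank F (X.1 ⊓ Z : Submodule F V) = k - 1 := hadj
      simp only at hZY
      have hfA : finrank F (Z ⊓ X.1 : Submodule F V) = k - 1 := by
        rw [inf_comm]; exact hrkZX
      have le1 : (Z ⊓ X.1) ⊓ (Z ⊓ Y.1) ≤ W := by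
        rw [hW]
        exact le_inf (le_trans inf_le_left inf_le_right) (le_trans inf_le_right inf_le_right)
      have h1 := Submodule.finrank_sup_add_finrank_inf_eq (Z ⊓ X.1) (Z ⊓ Y.1)
      have hABle : (Z ⊓ X.1) ⊔ (Z ⊓ Y.1) ≤ Z := sup_le inf_le_left inf_le_left
      have hrs : finrank F ((Z ⊓ X.1) ⊔ (Z ⊓ Y.1) : Submodule F V) ≤ k :=
        le_trans (Submodule.finrank_mono hABle) (le_of_eq hZk)
      have hmono : finrank F ((Z ⊓ X.1) ⊓ (Z ⊓ Y.1) : Submodule F V) ≤ finrank F W :=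
        Submodule.finrank_mono le1
      have hABW : (Z ⊓ X.1) ⊓ (Z ⊓ Y.1) = W :=
        Submodule.eq_of_le_of_finrank_le le1 (by omega)
      rw [hABW] at h1
      refine ⟨⟨⟨Z ⊓ X.1, ?_, inf_le_right, ?_⟩, ⟨Z ⊓ Y.1, ?_, inf_le_right, ?_⟩⟩, ?_⟩
      · rw [← hABW]; exact inf_le_left
      · omega
      · rw [← hABW]; exact inf_le_right
      · omega
      · apply Subtype.ext
        apply Subtype.ext
        show (Z ⊓ X.1) ⊔ (Z ⊓ Y.1) = Z
        apply Submodule.eq_of_le_of_finrank_le hABle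
        refine le_trans (le_of_eq hZk) ?_
        omega
  have e := (Equiv.ofBijective g hgbij).symm
  rw [Nat.card_congr e, Nat.card_prod]
  -- count the two factors
  obtain ⟨CX, hinfX, hsupX, hrkX⟩ := exists_compl_le hWX
  obtain ⟨CY, hinfY, hsupY, hrkY⟩ := exists_compl_le hWY
  have hfCX : finrank F CX = d := by omega
  have hfCY : finrank F CY = d := by omega
  have hcard1 : Nat.card HyT = gq q d := by
    have e1 : HyT ≃ {H : Submodule F V //
        W ≤ H ∧ H ≤ W ⊔ CX ∧ finrank F H = finrank F W + (d-1)} :=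
      Equiv.subtypeEquivRight (fun H => by rw [hsupX])
    rw [Nat.card_congr e1, card_between W CX hinfX (d-1)]
    have e2 : {H' : Submodule F CX // finrank F H' = d - 1} ≃
        {H' : Submodule F CX // finrank F H' + 1 = finrank F CX} :=
      Equiv.subtypeEquivRight (fun H' => by rw [hfCX]; omega)
    rw [Nat.card_congr e2, card_hyperplanes q hq, hfCX]
  have hcard2 : Nat.card LiT = gq q d := by
    have e1 : LiT ≃ {M : Submodule F V //
        W ≤ M ∧ M ≤ W ⊔ CY ∧ finrank F M = finrank F W + 1} :=
      Equiv.subtypeEquivRight (fun M => by rw [hsupY])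
    rw [Nat.card_congr e1, card_between W CY hinfY 1, card_lines q hq, hfCY]
  rw [hcard1, hcard2, sq]

end Step


section Graph

variable [FiniteDimensional F V]

lemma adj_inf_rank {k : ℕ} {A B : {X : Submodule F V // finrank F X = k}}
    (h : (GrassmannGraph F V k).Adj A B) (C : Submodule F V) :
    finrank F (B.1 ⊓ C : Submodule F V) ≤ finrank F (A.1 ⊓ C : Submodule F V) + 1 := by
  obtain ⟨hne, hrk⟩ : A ≠ B ∧ finrank F (A.1 ⊓ B.1 : Submodule F V) = k - 1 := h
  have hk : 1 ≤ k := by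
    by_contra hk
    have hk0 : k = 0 := by omega
    have hA : A.1 = ⊥ := Submodule.finrank_eq_zero.mp (by rw [A.2, hk0])
    have hB : B.1 = ⊥ := Submodule.finrank_eq_zero.mp (by rw [B.2, hk0])
    exact hne (Subtype.ext (hA.trans hB.symm))
  have h1 := Submodule.finrank_sup_add_finrank_inf_eq (A.1 ⊓ B.1) (B.1 ⊓ C)
  have h2 : (A.1 ⊓ B.1) ⊔ (B.1 ⊓ C) ≤ B.1 := sup_le inf_le_right inf_le_left
  have h3 : finrank F ((A.1 ⊓ B.1) ⊔ (B.1 ⊓ C) : Submodule F V) ≤ k :=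
    le_trans (Submodule.finrank_mono h2) (le_of_eq B.2)
  have h4 : (A.1 ⊓ B.1) ⊓ (B.1 ⊓ C) ≤ A.1 ⊓ C :=
    le_inf (le_trans inf_le_left inf_le_left) (le_trans inf_le_right inf_le_right)
  have h5 := Submodule.finrank_mono (M := V) h4
  omega

lemma walk_length_lb {k : ℕ} (Y Z : {X : Submodule F V // finrank F X = k})
    (p : (GrassmannGraph F V k).Walk Z Y) :
    k ≤ finrank F (Z.1 ⊓ Y.1 : Submodule F V) + p.length := by
  induction p with
  | @nil u =>
    rw [inf_idem, u.2, SimpleGraph.Walk.length_nil]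
    omega
  | @cons u v w huv p ih =>
    have hstep := adj_inf_rank huv w.1
    rw [SimpleGraph.Walk.length_cons]
    omega

variable [Fintype F]

lemma exists_walk {k : ℕ} : ∀ (d : ℕ) (X Y : {X : Submodule F V // finrank F X = k}),
    finrank F (X.1 ⊓ Y.1 : Submodule F V) + d = k →
    ∃ p : (GrassmannGraph F V k).Walk X Y, p.length = d := by
  intro d
  induction d with
  | zero =>
    intro X Y h
    have h1 : X.1 ⊓ Y.1 = X.1 :=
      Submodule.eq_of_le_of_finrank_le inf_le_left (by rw [X.2]; omega)
    have h2 : X.1 ⊓ Y.1 = Y.1 :=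
      Submodule.eq_of_le_of_finrank_le inf_le_right (by rw [Y.2]; omega)
    obtain rfl : X = Y := Subtype.ext (h1.symm.trans h2)
    exact ⟨SimpleGraph.Walk.nil, rfl⟩
  | succ d ih =>
    intro X Y h
    have hcs := card_step (Fintype.card F) rfl k (d+1) (by omega) X Y h
    have hpos : 0 < Nat.card {Z : {X : Submodule F V // finrank F X = k} //
        (GrassmannGraph F V k).Adj X Z ∧
          finrank F (Z.1 ⊓ Y.1 : Submodule F V) + (d+1) = k + 1} := by
      rw [hcs]
      exact pow_pos (gq_pos _ (by omega)) 2
    obtain ⟨⟨Z, hadj, hZY⟩⟩ := (Nat.card_pos_iff.mp hpos).1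
    obtain ⟨p, hp⟩ := ih Z Y (by omega)
    exact ⟨SimpleGraph.Walk.cons hadj p, by simp [hp]⟩

lemma dist_eq {k : ℕ} (d : ℕ) (X Y : {X : Submodule F V // finrank F X = k})
    (h : finrank F (X.1 ⊓ Y.1 : Submodule F V) + d = k) :
    (GrassmannGraph F V k).dist X Y = d := by
  obtain ⟨p, hp⟩ := exists_walk d X Y h
  apply le_antisymm
  · exact hp ▸ SimpleGraph.dist_le p
  · obtain ⟨p₀, hp₀⟩ := SimpleGraph.Reachable.exists_walk_length_eq_dist ⟨p⟩
    have := walk_length_lb Y X p₀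
    omega

lemma inf_rank_of_dist {k m : ℕ} (X Y : {X : Submodule F V // finrank F X = k})
    (h : (GrassmannGraph F V k).dist X Y = m) :
    finrank F (X.1 ⊓ Y.1 : Submodule F V) + m = k := by
  have h1 : finrank F (X.1 ⊓ Y.1 : Submodule F V) ≤ k :=
    le_trans (Submodule.finrank_mono inf_le_left) (le_of_eq X.2)
  have h2 := dist_eq (k - finrank F (X.1 ⊓ Y.1 : Submodule F V)) X Y (by omega)
  omega

lemma count_walks (q : ℕ) (hq : Fintype.card F = q) (k : ℕ) :
    ∀ (m : ℕ) (X Y : {X : Submodule F V // finrank F X = k}),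
      (GrassmannGraph F V k).dist X Y = m →
      Nat.card {p : (GrassmannGraph F V k).Walk X Y // p.length = m}
        = ∏ j ∈ Finset.Icc 1 m, gq q j ^ 2 := by
  classical
  haveI : Finite V := Finite.of_equiv _ ((Module.finBasis F V).equivFun).toEquiv.symm
  haveI : Finite (Submodule F V) :=
    Finite.of_injective (fun p => (p : Set V)) SetLike.coe_injective
  letI : Fintype {X : Submodule F V // finrank F X = k} := Fintype.ofFinite _
  letI : DecidableEq {X : Submodule F V // finrank F X = k} := Classical.decEq _
  letI : (GrassmannGraph F V k).LocallyFinite := fun v => Fintype.ofFinite _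
  intro m
  induction m with
  | zero =>
    intro X Y h
    have hfr := inf_rank_of_dist X Y h
    have h1 : X.1 ⊓ Y.1 = X.1 :=
      Submodule.eq_of_le_of_finrank_le inf_le_left (by rw [X.2]; omega)
    have h2 : X.1 ⊓ Y.1 = Y.1 :=
      Submodule.eq_of_le_of_finrank_le inf_le_right (by rw [Y.2]; omega)
    obtain rfl : X = Y := Subtype.ext (h1.symm.trans h2)
    have hone : Nat.card {p : (GrassmannGraph F V k).Walk X X // p.length = 0} = 1 := by
      apply Nat.card_eq_one_iff_unique.mpr
      have hnil : ∀ r : (GrassmannGraph F V k).Walk X X, r.length = 0 → r = .nil := by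
        intro r hr
        cases r with
        | nil => rfl
        | cons h p => simp at hr
      refine ⟨⟨fun p p' => Subtype.ext ?_⟩, ⟨⟨.nil, rfl⟩⟩⟩
      rw [hnil p.1 p.2, hnil p'.1 p'.2]
    rw [hone, show Finset.Icc 1 0 = ∅ from rfl, Finset.prod_empty]
  | succ m ih =>
    intro X Y h
    have hfr := inf_rank_of_dist X Y h
    letI : Fintype {Z : {X : Submodule F V // finrank F X = k} //
        (GrassmannGraph F V k).Adj X Z ∧
          finrank F (Z.1 ⊓ Y.1 : Submodule F V) + (m+1) = k + 1} := Fintype.ofFinite _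
    haveI fibFin : ∀ u : {X : Submodule F V // finrank F X = k},
        Finite {p : (GrassmannGraph F V k).Walk u Y // p.length = m} := fun u =>
      @Finite.of_fintype _ ((GrassmannGraph F V k).fintypeSetWalkLength u Y m)
    letI : ∀ Z : {Z : {X : Submodule F V // finrank F X = k} //
        (GrassmannGraph F V k).Adj X Z ∧
          finrank F (Z.1 ⊓ Y.1 : Submodule F V) + (m+1) = k + 1},
        Fintype {p : (GrassmannGraph F V k).Walk Z.1 Y // p.length = m} := fun Z =>
      Fintype.ofFinite _
    have e2 : {p : (GrassmannGraph F V k).Walk X Y // p.length = m+1} ≃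
        Σ Z : {Z : {X : Submodule F V // finrank F X = k} //
          (GrassmannGraph F V k).Adj X Z ∧
            finrank F (Z.1 ⊓ Y.1 : Submodule F V) + (m+1) = k + 1},
          {p' : (GrassmannGraph F V k).Walk Z.1 Y // p'.length = m} := by
      symm
      apply Equiv.ofBijective (f := fun x =>
        (⟨SimpleGraph.Walk.cons x.1.2.1 x.2.1, by simp [x.2.2]⟩ :
          {p : (GrassmannGraph F V k).Walk X Y // p.length = m+1}))
      constructor
      · rintro ⟨⟨Z₁, hT₁⟩, p₁, hp₁⟩ ⟨⟨Z₂, hT₂⟩, p₂, hp₂⟩ hpe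
        simp only [Subtype.mk.injEq] at hpe
        rw [SimpleGraph.Walk.cons.injEq] at hpe
        obtain ⟨hZ, hp⟩ := hpe
        subst hZ
        obtain rfl := eq_of_heq hp
        rfl
      · rintro ⟨p, hp⟩
        cases p with
        | nil => simp at hp
        | @cons _ Z _ hadj p' =>
          have hlen : p'.length = m := by simpa using hp
          have hub := adj_inf_rank hadj Y.1
          have hlb := walk_length_lb Y Z p'
          refine ⟨⟨⟨Z, hadj, by omega⟩, ⟨p', hlen⟩⟩, rfl⟩
    rw [Nat.card_congr e2, nat_card_sigma]
    have hfib : ∀ Z : {Z : {X : Submodule F V // finrank F X = k} //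
        (GrassmannGraph F V k).Adj X Z ∧
          finrank F (Z.1 ⊓ Y.1 : Submodule F V) + (m+1) = k + 1},
        Nat.card {p' : (GrassmannGraph F V k).Walk Z.1 Y // p'.length = m}
          = ∏ j ∈ Finset.Icc 1 m, gq q j ^ 2 := fun Z =>
      ih Z.1 Y (dist_eq m Z.1 Y (by have := Z.2.2; omega))
    rw [Finset.sum_congr rfl (fun Z _ => hfib Z), Finset.sum_const, Finset.card_univ,
      smul_eq_mul, ← Nat.card_eq_fintype_card,
      card_step q hq k (m+1) (by omega) X Y hfr,
      Finset.prod_Icc_succ_top (by omega)]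
    ring

end Graph

end GrassmannAux

/-- If `X` and `Y` are at distance `m` in the Grassmann graph, then the number of geodesics
connecting `X` and `Y` equals `[m]_q^2 · [m-1]_q^2 · ... · [2]_q^2`. -/
theorem stmt5 (q : ℕ) (F : Type*) [Field F] [Fintype F] (hq : Fintype.card F = q)
    (V : Type*) [AddCommGroup V] [Module F V]
    [FiniteDimensional F V] (n k m : ℕ) (hn : finrank F V = n)
    (X Y : {X : Submodule F V // finrank F X = k})
    (hm : (GrassmannGraph F V k).dist X Y = m) :
    Nat.card {p : (GrassmannGraph F V k).Walk X Y // p.length = m} =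
      ∏ j ∈ Finset.Icc 2 m, ((q ^ j - 1) / (q - 1)) ^ 2 := by
  subst hq
  rw [GrassmannAux.count_walks (Fintype.card F) rfl k m X Y hm]
  have hq2 : 2 ≤ Fintype.card F := Fintype.one_lt_card
  have hterm : ∀ j, GrassmannAux.gq (Fintype.card F) j ^ 2
      = ((Fintype.card F ^ j - 1) / (Fintype.card F - 1)) ^ 2 := fun j => by
    rw [GrassmannAux.gq_eq_div _ hq2]
  cases m with
  | zero =>
    rw [show Finset.Icc 1 0 = ∅ from rfl, show Finset.Icc 2 0 = ∅ from rfl,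
      Finset.prod_empty, Finset.prod_empty]
  | succ m =>
    have hIcc : Finset.Icc 1 (m+1) = insert 1 (Finset.Icc 2 (m+1)) := by
      ext j
      simp only [Finset.mem_Icc, Finset.mem_insert]
      omega
    rw [hIcc, Finset.prod_insert (by simp), GrassmannAux.gq_one, one_pow, one_mul]
    exact Finset.prod_congr rfl fun j _ => hterm j
end

section
/- Let X and Y be projective [n,k]_q codes with dim(X ∩ Y) = k - 2, where 1 < k < n - 1. If q ≥ n(n-1)/2, then there exist q + 1 distinct projective [n,k]_q codes each adjacent (in the Grassmann graph) to both X and Y. -/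
open Module

/-- The restriction of the `i`-th coordinate functional to the code `C ≤ F^n`. -/
def coordRestrict {F : Type*} [Field F] {n : ℕ} (C : Submodule F (Fin n → F)) (i : Fin n) :
    C →ₗ[F] F :=
  LinearMap.domRestrict (LinearMap.proj i) C

/-- A linear code `C ≤ F^n` is non-degenerate if every coordinate functional
restricts to a nonzero functional on `C`. -/
def IsNondegenerateCode {F : Type*} [Field F] {n : ℕ} (C : Submodule F (Fin n → F)) : Prop :=
  ∀ i, coordRestrict C i ≠ 0

/-- A linear code `C ≤ F^n` is projective if it is non-degenerate and no two distinct
coordinate functionals are proportional on `C`. -/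
def IsProjectiveCode {F : Type*} [Field F] {n : ℕ} (C : Submodule F (Fin n → F)) : Prop :=
  IsNondegenerateCode C ∧
  ∀ i j : Fin n, i ≠ j → ∀ a : F, coordRestrict C j ≠ a • coordRestrict C i

section aux
variable {F : Type*} [Field F] {n : ℕ}

lemma finrank_sup_span_singleton_s9 (p : Submodule F (Fin n → F)) {x : Fin n → F}
    (hx : x ∉ p) : finrank F ↥(p ⊔ Submodule.span F {x}) = finrank F p + 1 := by
  have h0 : x ≠ 0 := fun h => hx (h ▸ p.zero_mem)
  have hinf : p ⊓ Submodule.span F {x} = ⊥ := by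
    rw [eq_bot_iff]
    intro v hv
    rw [Submodule.mem_inf, Submodule.mem_span_singleton] at hv
    obtain ⟨hv1, c, rfl⟩ := hv
    rcases eq_or_ne c 0 with rfl | hc
    · simp
    · exact absurd (by simpa [smul_smul, inv_mul_cancel₀ hc] using p.smul_mem c⁻¹ hv1) hx
  have h := Submodule.finrank_sup_add_finrank_inf_eq p (Submodule.span F {x})
  rw [hinf, finrank_span_singleton h0] at h
  simp at h
  omega

lemma vanish_contra {C : Submodule F (Fin n → F)} (hC : IsProjectiveCode C)
    {i j : Fin n} (hij : i ≠ j) {c₁ c₂ : F} (hc : c₁ ≠ 0 ∨ c₂ ≠ 0)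
    (hv : ∀ v ∈ C, c₁ * v i + c₂ * v j = 0) : False := by
  rcases eq_or_ne c₂ 0 with rfl | hc2
  · have hc1 : c₁ ≠ 0 := by tauto
    apply hC.1 i
    ext ⟨v, hv'⟩
    have h := hv v hv'
    simp only [coordRestrict, LinearMap.domRestrict_apply, LinearMap.proj_apply,
      LinearMap.zero_apply]
    have h2 : c₁ * v i = 0 := by linear_combination h
    exact (mul_eq_zero.1 h2).resolve_left hc1
  · apply hC.2 i j hij (-c₁ / c₂)
    ext ⟨v, hv'⟩
    have h := hv v hv'
    simp only [coordRestrict, LinearMap.domRestrict_apply, LinearMap.proj_apply,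
      LinearMap.smul_apply, smul_eq_mul]
    field_simp
    linear_combination h

lemma not_proj_witness {C : Submodule F (Fin n → F)} (hC : ¬ IsProjectiveCode C)
    (hn : 2 ≤ n) : ∃ i j : Fin n, i < j ∧ ∃ c₁ c₂ : F, (c₁ ≠ 0 ∨ c₂ ≠ 0) ∧
      ∀ v ∈ C, c₁ * v i + c₂ * v j = 0 := by
  have key : ∃ i j : Fin n, i ≠ j ∧ ∃ c₁ c₂ : F, (c₁ ≠ 0 ∨ c₂ ≠ 0) ∧
      ∀ v ∈ C, c₁ * v i + c₂ * v j = 0 := by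
    rw [IsProjectiveCode, not_and_or] at hC
    rcases hC with hC | hC
    · rw [IsNondegenerateCode] at hC
      push_neg at hC
      obtain ⟨i, hi⟩ := hC
      obtain ⟨j, hj⟩ : ∃ j : Fin n, i ≠ j := by
        rcases eq_or_ne i ⟨0, by omega⟩ with rfl | h
        · exact ⟨⟨1, by omega⟩, by simp [Fin.ext_iff]⟩
        · exact ⟨⟨0, by omega⟩, h⟩
      refine ⟨i, j, hj, 1, 0, Or.inl one_ne_zero, fun v hv => ?_⟩
      have h : coordRestrict C i ⟨v, hv⟩ = 0 := by rw [hi]; rfl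
      simp only [coordRestrict, LinearMap.domRestrict_apply, LinearMap.proj_apply] at h
      linear_combination h
    · push_neg at hC
      obtain ⟨i, j, hij, a, ha⟩ := hC
      refine ⟨i, j, hij, a, -1, Or.inr (by norm_num), fun v hv => ?_⟩
      have h := DFunLike.congr_fun ha ⟨v, hv⟩
      simp only [coordRestrict, LinearMap.domRestrict_apply, LinearMap.proj_apply,
        LinearMap.smul_apply, smul_eq_mul] at h
      linear_combination -h
  obtain ⟨i, j, hij, c₁, c₂, hc, hv⟩ := key
  rcases lt_or_gt_of_ne hij with h | h
  · exact ⟨i, j, h, c₁, c₂, hc, hv⟩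
  · exact ⟨j, i, h, c₂, c₁, hc.symm, fun v hv' => by linear_combination hv v hv'⟩

/-- pair of vectors, parametrized projective line of combinations -/
def Wvec (v₁ v₂ : Fin n → F) (s : Option F) : Fin n → F :=
  s.elim v₂ (fun c => v₁ + c • v₂)

lemma span_pair_cond {Q : Submodule F (Fin n → F)} {v₁ v₂ : Fin n → F}
    (h1 : v₁ ∉ Q) (h2 : v₂ ∉ Q ⊔ Submodule.span F {v₁}) :
    ∀ a b : F, a • v₁ + b • v₂ ∈ Q → a = 0 ∧ b = 0 := by
  intro a b hab
  have hb : b = 0 := by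
    by_contra hb
    apply h2
    have he : v₂ = b⁻¹ • (a • v₁ + b • v₂) - (b⁻¹ * a) • v₁ := by
      rw [smul_add, smul_smul, smul_smul, inv_mul_cancel₀ hb, one_smul]
      abel
    rw [he]
    exact Submodule.sub_mem _ (Submodule.mem_sup_left (Q.smul_mem _ hab))
      (Submodule.mem_sup_right (Submodule.smul_mem _ _ (Submodule.mem_span_singleton_self v₁)))
  subst hb
  refine ⟨?_, rfl⟩
  by_contra ha
  apply h1
  have h := Q.smul_mem a⁻¹ (by simpa using hab)
  rwa [smul_smul, inv_mul_cancel₀ ha, one_smul] at h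

lemma Wvec_mem {P : Submodule F (Fin n → F)} {v₁ v₂ : Fin n → F}
    (h1 : v₁ ∈ P) (h2 : v₂ ∈ P) (s : Option F) : Wvec v₁ v₂ s ∈ P := by
  cases s with
  | none => exact h2
  | some c => exact P.add_mem h1 (P.smul_mem c h2)

lemma Wvec_smul_not_mem {Q : Submodule F (Fin n → F)} {v₁ v₂ : Fin n → F}
    (hL : ∀ a b : F, a • v₁ + b • v₂ ∈ Q → a = 0 ∧ b = 0)
    {b : F} {s : Option F} (h : b • Wvec v₁ v₂ s ∈ Q) : b = 0 := by
  cases s with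
  | none => exact ((hL 0 b (by simpa [Wvec] using h)).2)
  | some c =>
      have : b • v₁ + (b * c) • v₂ ∈ Q := by
        have he : b • v₁ + (b * c) • v₂ = b • Wvec v₁ v₂ (some c) := by
          simp only [Wvec, Option.elim, smul_add, smul_smul]
        rw [he]; exact h
      exact (hL b (b * c) this).1

lemma Wvec_not_mem {Q : Submodule F (Fin n → F)} {v₁ v₂ : Fin n → F}
    (hL : ∀ a b : F, a • v₁ + b • v₂ ∈ Q → a = 0 ∧ b = 0)
    (s : Option F) : Wvec v₁ v₂ s ∉ Q := by
  intro h
  have := Wvec_smul_not_mem hL (b := 1) (by simpa using h)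
  norm_num at this

lemma Wvec_inj {Q : Submodule F (Fin n → F)} {v₁ v₂ : Fin n → F}
    (hL : ∀ a b : F, a • v₁ + b • v₂ ∈ Q → a = 0 ∧ b = 0)
    {s s' : Option F} (h : Wvec v₁ v₂ s' ∈ Q ⊔ Submodule.span F {Wvec v₁ v₂ s}) :
    s' = s := by
  obtain ⟨y, hy, w, hw, hsum⟩ := Submodule.mem_sup.1 h
  rw [Submodule.mem_span_singleton] at hw
  obtain ⟨c, rfl⟩ := hw
  have hy' : Wvec v₁ v₂ s' - c • Wvec v₁ v₂ s ∈ Q := by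
    have : Wvec v₁ v₂ s' - c • Wvec v₁ v₂ s = y := by rw [← hsum]; abel
    rw [this]; exact hy
  match s, s' with
  | none, none => rfl
  | none, some c' =>
      exfalso
      have he : (1 : F) • v₁ + (c' - c) • v₂ = Wvec v₁ v₂ (some c') - c • Wvec v₁ v₂ none := by
        simp only [Wvec, Option.elim, one_smul, sub_smul]
        abel
      have := (hL 1 (c' - c) (he ▸ hy')).1
      norm_num at this
  | some c'', none =>
      exfalso
      have he : (-c) • v₁ + (1 - c * c'') • v₂ = Wvec v₁ v₂ none - c • Wvec v₁ v₂ (some c'') := by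
        simp only [Wvec, Option.elim, neg_smul, sub_smul, one_smul, smul_add, smul_smul]
        abel
      have h2 := hL (-c) (1 - c * c'') (he ▸ hy')
      have hc0 : c = 0 := by have := h2.1; simpa [neg_eq_zero] using this
      have := h2.2
      rw [hc0] at this
      norm_num at this
  | some c'', some c' =>
      have he : (1 - c) • v₁ + (c' - c * c'') • v₂ =
          Wvec v₁ v₂ (some c') - c • Wvec v₁ v₂ (some c'') := by
        simp only [Wvec, Option.elim, sub_smul, one_smul, smul_add, smul_smul]
        abel
      have h2 := hL (1 - c) (c' - c * c'') (he ▸ hy')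
      have hc1 : c = 1 := by have := h2.1; linear_combination -this
      have := h2.2
      rw [hc1] at this
      have : c' = c'' := by linear_combination this
      rw [this]

end aux

/-- If `X`, `Y` are projective `[n,k]_q` codes with `dim (X ∩ Y) = k - 2` and
`q ≥ n(n-1)/2`, then there exist `q + 1` distinct projective `[n,k]_q` codes each
adjacent (in the Grassmann graph) to both `X` and `Y`. -/
theorem stmt9 (q : ℕ) (F : Type*) [Field F] [Fintype F] (hq : Fintype.card F = q)
    (n k : ℕ) (hk1 : 1 < k) (hk2 : k < n - 1) (hqn : n * (n - 1) / 2 ≤ q)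
    (X Y : Submodule F (Fin n → F))
    (hX : finrank F X = k) (hXp : IsProjectiveCode X)
    (hY : finrank F Y = k) (hYp : IsProjectiveCode Y)
    (hXY : finrank F (X ⊓ Y : Submodule F (Fin n → F)) = k - 2) :
    ∃ S : Finset (Submodule F (Fin n → F)), S.card = q + 1 ∧
      ∀ Z ∈ S, finrank F Z = k ∧ IsProjectiveCode Z ∧
        finrank F (Z ⊓ X : Submodule F (Fin n → F)) = k - 1 ∧
        finrank F (Z ⊓ Y : Submodule F (Fin n → F)) = k - 1 := by
  classical
  have hn4 : 4 ≤ n := by omega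
  have hk2' : 2 ≤ k := hk1
  set D := X ⊓ Y with hDdef
  have hDX : D ≤ X := inf_le_left
  have hDY : D ≤ Y := inf_le_right
  have hfinD : finrank F D = k - 2 := hXY
  -- choose x₁ x₂ in X, y₁ y₂ in Y
  have hgen : ∀ P Q : Submodule F (Fin n → F), finrank F P = k → finrank F Q = k →
      P ⊓ Q = D → ∃ v₁ v₂ : Fin n → F, v₁ ∈ P ∧ v₂ ∈ P ∧ v₁ ∉ Q ∧
        v₂ ∉ Q ⊔ Submodule.span F {v₁} := by
    intro P Q hP hQ hPQ
    have h1 : ¬ P ≤ Q := by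
      intro h
      have he : P ⊓ Q = P := inf_eq_left.2 h
      rw [hPQ] at he
      have hfp : finrank F D = k := by rw [he]; exact hP
      omega
    obtain ⟨v₁, hv₁P, hv₁Q⟩ := SetLike.not_le_iff_exists.1 h1
    have h2 : ¬ P ≤ Q ⊔ Submodule.span F {v₁} := by
      intro h
      have hle : P ≤ D ⊔ Submodule.span F {v₁} := by
        intro x hx
        obtain ⟨y, hy, w, hw, hsum⟩ := Submodule.mem_sup.1 (h hx)
        rw [Submodule.mem_span_singleton] at hw
        obtain ⟨c, rfl⟩ := hw
        have hyP : y ∈ P := by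
          have he : y = x - c • v₁ := by rw [← hsum]; abel
          rw [he]; exact P.sub_mem hx (P.smul_mem c hv₁P)
        have hyD : y ∈ D := by rw [← hPQ]; exact ⟨hyP, hy⟩
        exact Submodule.mem_sup.2 ⟨y, hyD, c • v₁,
          Submodule.smul_mem _ _ (Submodule.mem_span_singleton_self v₁), hsum⟩
      have hm := Submodule.finrank_mono hle
      have hv₁D : v₁ ∉ D := fun hc => hv₁Q (hPQ ▸ hc : v₁ ∈ P ⊓ Q).2
      rw [hP, finrank_sup_span_singleton_s9 D hv₁D, hfinD] at hm
      omega
    obtain ⟨v₂, hv₂P, hv₂⟩ := SetLike.not_le_iff_exists.1 h2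
    exact ⟨v₁, v₂, hv₁P, hv₂P, hv₁Q, hv₂⟩
  obtain ⟨x₁, x₂, hx₁X, hx₂X, hx₁Y, hx₂⟩ := hgen X Y hX hY rfl
  obtain ⟨y₁, y₂, hy₁Y, hy₂Y, hy₁X, hy₂⟩ := hgen Y X hY hX (by rw [inf_comm])
  have L1 : ∀ a b : F, a • x₁ + b • x₂ ∈ Y → a = 0 ∧ b = 0 := span_pair_cond hx₁Y hx₂
  have L1' : ∀ a b : F, a • y₁ + b • y₂ ∈ X → a = 0 ∧ b = 0 := span_pair_cond hy₁X hy₂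
  set Xv : Option F → (Fin n → F) := Wvec x₁ x₂ with hXvdef
  set Yv : Option F → (Fin n → F) := Wvec y₁ y₂ with hYvdef
  have hXvX : ∀ s, Xv s ∈ X := Wvec_mem hx₁X hx₂X
  have hYvY : ∀ t, Yv t ∈ Y := Wvec_mem hy₁Y hy₂Y
  have hXvnY : ∀ s, Xv s ∉ Y := Wvec_not_mem L1
  have hYvnX : ∀ t, Yv t ∉ X := Wvec_not_mem L1'
  set A : Option F → Submodule F (Fin n → F) := fun s => D ⊔ Submodule.span F {Xv s} with hAdef
  set B : Option F → Submodule F (Fin n → F) := fun t => D ⊔ Submodule.span F {Yv t} with hBdef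
  set Z : Option F × Option F → Submodule F (Fin n → F) :=
    fun p => A p.1 ⊔ Submodule.span F {Yv p.2} with hZdef
  have hAX : ∀ s, A s ≤ X := fun s => sup_le hDX
    ((Submodule.span_singleton_le_iff_mem _ _).2 (hXvX s))
  have hBY : ∀ t, B t ≤ Y := fun t => sup_le hDY
    ((Submodule.span_singleton_le_iff_mem _ _).2 (hYvY t))
  have hfinA : ∀ s, finrank F (A s) = k - 1 := by
    intro s
    have hnm : Xv s ∉ D := fun hc => hXvnY s (hDY hc)
    rw [hAdef]
    rw [finrank_sup_span_singleton_s9 D hnm, hfinD]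
    omega
  have hfinB : ∀ t, finrank F (B t) = k - 1 := by
    intro t
    have hnm : Yv t ∉ D := fun hc => hYvnX t (hDX hc)
    rw [hBdef]
    rw [finrank_sup_span_singleton_s9 D hnm, hfinD]
    omega
  have hYvnA : ∀ s t, Yv t ∉ A s := fun s t hc => hYvnX t (hAX s hc)
  have hfinZ : ∀ p, finrank F (Z p) = k := by
    intro p
    rw [hZdef]
    rw [finrank_sup_span_singleton_s9 (A p.1) (hYvnA p.1 p.2), hfinA]
    omega
  have hZmem : ∀ p v, v ∈ Z p → ∃ d ∈ D, ∃ a b : F, v = d + a • Xv p.1 + b • Yv p.2 := by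
    intro p v hv
    obtain ⟨w, hw, u, hu, hsum⟩ := Submodule.mem_sup.1 hv
    rw [Submodule.mem_span_singleton] at hu
    obtain ⟨b, rfl⟩ := hu
    obtain ⟨d, hd, u', hu', hsum'⟩ := Submodule.mem_sup.1 hw
    rw [Submodule.mem_span_singleton] at hu'
    obtain ⟨a, rfl⟩ := hu'
    exact ⟨d, hd, a, b, by rw [← hsum, ← hsum']⟩
  have hAleZ : ∀ p, A p.1 ≤ Z p := fun p => le_sup_left
  have hBleZ : ∀ p, B p.2 ≤ Z p := by
    intro p
    rw [hBdef, hZdef]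
    exact sup_le (le_trans le_sup_left le_sup_left) le_sup_right
  have hZX : ∀ p, Z p ⊓ X = A p.1 := by
    intro p
    refine le_antisymm ?_ (le_inf (hAleZ p) (hAX p.1))
    rintro v ⟨hv1, hv2⟩
    obtain ⟨d, hd, a, b, rfl⟩ := hZmem p v hv1
    have hbY : b • Yv p.2 ∈ X := by
      have he : b • Yv p.2 = (d + a • Xv p.1 + b • Yv p.2) - d - a • Xv p.1 := by abel
      rw [he]
      exact X.sub_mem (X.sub_mem hv2 (hDX hd)) (X.smul_mem a (hXvX p.1))
    have hb0 : b = 0 := Wvec_smul_not_mem L1' hbY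
    rw [hb0, zero_smul, add_zero]
    exact Submodule.add_mem _ (Submodule.mem_sup_left hd)
      (Submodule.mem_sup_right (Submodule.smul_mem _ _ (Submodule.mem_span_singleton_self _)))
  have hZY : ∀ p, Z p ⊓ Y = B p.2 := by
    intro p
    refine le_antisymm ?_ (le_inf (hBleZ p) (hBY p.2))
    rintro v ⟨hv1, hv2⟩
    obtain ⟨d, hd, a, b, rfl⟩ := hZmem p v hv1
    have haX : a • Xv p.1 ∈ Y := by
      have he : a • Xv p.1 = (d + a • Xv p.1 + b • Yv p.2) - d - b • Yv p.2 := by abel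
      rw [he]
      exact Y.sub_mem (Y.sub_mem hv2 (hDY hd)) (Y.smul_mem b (hYvY p.2))
    have ha0 : a = 0 := Wvec_smul_not_mem L1 haX
    rw [ha0, zero_smul, add_zero]
    refine Submodule.add_mem _ (Submodule.mem_sup_left hd) ?_
    exact Submodule.mem_sup_right (Submodule.smul_mem _ _ (Submodule.mem_span_singleton_self _))
  have hZinj : Function.Injective Z := by
    intro p p' h
    have h1 : A p.1 = A p'.1 := by rw [← hZX p, ← hZX p', h]
    have h2 : B p.2 = B p'.2 := by rw [← hZY p, ← hZY p', h]
    have hs : p.1 = p'.1 := by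
      have hm : Xv p.1 ∈ Y ⊔ Submodule.span F {Xv p'.1} := by
        have : Xv p.1 ∈ A p'.1 := h1 ▸ (Submodule.mem_sup_right
          (Submodule.mem_span_singleton_self _))
        exact sup_le_sup_right hDY _ this
      exact Wvec_inj L1 hm
    have ht : p.2 = p'.2 := by
      have hm : Yv p.2 ∈ X ⊔ Submodule.span F {Yv p'.2} := by
        have : Yv p.2 ∈ B p'.2 := h2 ▸ (Submodule.mem_sup_right
          (Submodule.mem_span_singleton_self _))
        exact sup_le_sup_right hDX _ this
      exact Wvec_inj L1' hm
    exact Prod.ext hs ht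
  -- badness
  set BadP : Fin n → Fin n → (Option F × Option F) → Prop := fun i j p =>
    ∃ c₁ c₂ : F, (c₁ ≠ 0 ∨ c₂ ≠ 0) ∧ ∀ v ∈ Z p, c₁ * v i + c₂ * v j = 0 with hBadPdef
  have hML : ∀ i j : Fin n, i ≠ j → ∀ p p' : Option F × Option F,
      BadP i j p → BadP i j p' → p.1 = p'.1 → p = p' := by
    rintro i j hij ⟨s, t⟩ ⟨s', t'⟩ ⟨c₁, c₂, hc, hg⟩ ⟨c₁', c₂', hc', hg'⟩ h1
    simp only at h1
    subst h1
    suffices ht : t = t' by rw [ht]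
    by_contra htne
    rcases eq_or_ne (c₁ * c₂' - c₁' * c₂) 0 with hdet | hdet
    · -- proportional witnesses: contradiction with Y projective
      obtain ⟨l, hl, e1, e2⟩ : ∃ l : F, l ≠ 0 ∧ c₁' = l * c₁ ∧ c₂' = l * c₂ := by
        rcases eq_or_ne c₁ 0 with h0 | h0
        · have hc2 : c₂ ≠ 0 := by tauto
          have hc1' : c₁' = 0 := by
            have hz : c₁' * c₂ = 0 := by rw [h0] at hdet; linear_combination -hdet
            exact (mul_eq_zero.1 hz).resolve_right hc2
          refine ⟨c₂' / c₂, ?_, ?_, ?_⟩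
          · intro hzz
            have : c₂' = 0 := by field_simp at hzz; simpa using hzz
            tauto
          · rw [h0, hc1', mul_zero]
          · field_simp
        · refine ⟨c₁' / c₁, ?_, ?_, ?_⟩
          · intro hzz
            have hc1' : c₁' = 0 := by field_simp at hzz; simpa using hzz
            have hc2' : c₂' = 0 := by
              have : c₁ * c₂' = 0 := by rw [hc1'] at hdet; linear_combination hdet
              exact (mul_eq_zero.1 this).resolve_left h0
            tauto
          · field_simp
          · field_simp
            linear_combination hdet
      have hBB : B t ⊔ Submodule.span F {Yv t'} = Y := by
        have hle : B t ⊔ Submodule.span F {Yv t'} ≤ Y :=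
          sup_le (hBY t) ((Submodule.span_singleton_le_iff_mem _ _).2 (hYvY t'))
        refine Submodule.eq_of_le_of_finrank_le hle ?_
        have hYvnB : Yv t' ∉ B t := by
          intro hc
          exact htne (Wvec_inj L1' (sup_le_sup_right hDX _ hc)).symm
        rw [hY, finrank_sup_span_singleton_s9 (B t) hYvnB, hfinB t]
        omega
      have hvY : ∀ v ∈ Y, c₁ * v i + c₂ * v j = 0 := by
        intro v hv
        rw [← hBB] at hv
        obtain ⟨v₁, hv₁, v₂, hv₂, rfl⟩ := Submodule.mem_sup.1 hv
        have g1 := hg v₁ (hBleZ (s, t) hv₁)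
        have hv₂' : v₂ ∈ Z (s, t') := Submodule.mem_sup_right hv₂
        have g2' := hg' v₂ hv₂'
        have g2 : c₁ * v₂ i + c₂ * v₂ j = 0 := by
          have hz : l * (c₁ * v₂ i + c₂ * v₂ j) = 0 := by
            rw [e1, e2] at g2'
            linear_combination g2'
          exact (mul_eq_zero.1 hz).resolve_left hl
        have : (v₁ + v₂) i = v₁ i + v₂ i := rfl
        rw [this]
        have : (v₁ + v₂) j = v₁ j + v₂ j := rfl
        rw [this]
        linear_combination g1 + g2
      exact vanish_contra hYp hij hc hvY
    · -- independent witnesses: contradiction with X projective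
      have hAv : ∀ v ∈ A s, v i = 0 ∧ v j = 0 := by
        intro v hv
        have g1 := hg v (hAleZ (s, t) hv)
        have g2 := hg' v (hAleZ (s, t') hv)
        constructor
        · have hz : (c₁ * c₂' - c₁' * c₂) * v i = 0 := by
            linear_combination c₂' * g1 - c₂ * g2
          exact (mul_eq_zero.1 hz).resolve_left hdet
        · have hz : (c₁ * c₂' - c₁' * c₂) * v j = 0 := by
            linear_combination c₁ * g2 - c₁' * g1
          exact (mul_eq_zero.1 hz).resolve_left hdet
      obtain ⟨x₀, hx₀X, hx₀A⟩ : ∃ x₀ ∈ X, x₀ ∉ A s := by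
        by_contra hcon
        push_neg at hcon
        have hle : X ≤ A s := hcon
        have hm := Submodule.finrank_mono hle
        rw [hX, hfinA s] at hm
        omega
      have hXeq : A s ⊔ Submodule.span F {x₀} = X := by
        refine Submodule.eq_of_le_of_finrank_le
          (sup_le (hAX s) ((Submodule.span_singleton_le_iff_mem _ _).2 hx₀X)) ?_
        rw [hX, finrank_sup_span_singleton_s9 (A s) hx₀A, hfinA s]
        omega
      have hdecomp : ∀ v ∈ X, ∃ w ∈ A s, ∃ c : F, v = w + c • x₀ := by
        intro v hv
        rw [← hXeq] at hv
        obtain ⟨w, hw, u, hu, hsum⟩ := Submodule.mem_sup.1 hv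
        rw [Submodule.mem_span_singleton] at hu
        obtain ⟨c, rfl⟩ := hu
        exact ⟨w, hw, c, hsum.symm⟩
      have hx₀i : x₀ i ≠ 0 := by
        intro h0
        apply hXp.1 i
        ext ⟨v, hv⟩
        obtain ⟨w, hw, c, rfl⟩ := hdecomp v hv
        simp only [coordRestrict, LinearMap.domRestrict_apply, LinearMap.proj_apply,
          LinearMap.zero_apply]
        have : (w + c • x₀) i = w i + c * x₀ i := rfl
        rw [this, (hAv w hw).1, h0, mul_zero, add_zero]
      apply hXp.2 i j hij (x₀ j * (x₀ i)⁻¹)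
      ext ⟨v, hv⟩
      obtain ⟨w, hw, c, rfl⟩ := hdecomp v hv
      simp only [coordRestrict, LinearMap.domRestrict_apply, LinearMap.proj_apply,
        LinearMap.smul_apply, smul_eq_mul]
      have e1 : (w + c • x₀) i = w i + c * x₀ i := rfl
      have e2 : (w + c • x₀) j = w j + c * x₀ j := rfl
      rw [e1, e2, (hAv w hw).1, (hAv w hw).2, zero_add, zero_add]
      field_simp
  -- counting
  set T : Finset (Option F × Option F) :=
    Finset.univ.filter (fun p => ¬ IsProjectiveCode (Z p)) with hTdef
  have hTcard : T.card ≤ n.choose 2 * (q + 1) := by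
    have hwit : ∀ p ∈ T, ∃ i j : Fin n, i < j ∧ BadP i j p := by
      intro p hp
      have hnp : ¬ IsProjectiveCode (Z p) := (Finset.mem_filter.1 hp).2
      obtain ⟨i, j, hij, c₁, c₂, hc, hv⟩ := not_proj_witness hnp (by omega)
      exact ⟨i, j, hij, c₁, c₂, hc, hv⟩
    haveI : Nonempty (Fin n) := ⟨⟨0, by omega⟩⟩
    choose! fi fj hfij hfbad using hwit
    have hinj : ∀ p ∈ T, ∀ p' ∈ T,
        ((s(fi p, fj p), p.1) : Sym2 (Fin n) × Option F) = (s(fi p', fj p'), p'.1) →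
        p = p' := by
      intro p hp p' hp' he
      have he1 : s(fi p, fj p) = s(fi p', fj p') := congrArg Prod.fst he
      have he2 : p.1 = p'.1 := congrArg Prod.snd he
      rw [Sym2.eq_iff] at he1
      have hiq : fi p = fi p' ∧ fj p = fj p' := by
        rcases he1 with h | ⟨ha, hb⟩
        · exact h
        · exfalso
          have l1 := hfij p hp
          have l2 := hfij p' hp'
          rw [ha, hb] at l1
          exact absurd (l1.trans l2) (lt_irrefl _)
      have hb1 := hfbad p hp
      rw [hiq.1, hiq.2] at hb1
      exact hML (fi p') (fj p') (ne_of_lt (hfij p' hp')) p p'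
        hb1 (hfbad p' hp') he2
    have := Finset.card_le_card_of_injOn
      (f := fun p => ((s(fi p, fj p), p.1) : Sym2 (Fin n) × Option F))
      (t := (Finset.univ.filter (fun z : Sym2 (Fin n) => ¬ z.IsDiag)) ×ˢ Finset.univ)
      (fun p hp => by
        refine Finset.mem_product.2 ⟨Finset.mem_filter.2 ⟨Finset.mem_univ _, ?_⟩,
          Finset.mem_univ _⟩
        rw [Sym2.isDiag_iff_proj_eq]
        exact ne_of_lt (hfij p hp))
      (fun p hp p' hp' he => hinj p hp p' hp' he)
    calc T.card ≤ _ := this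
      _ = n.choose 2 * (q + 1) := by
        rw [Finset.card_product]
        congr 1
        · rw [← Fintype.card_subtype, Sym2.card_subtype_not_diag, Fintype.card_fin]
        · rw [Finset.card_univ, Fintype.card_option, hq]
  have hchoose : n.choose 2 ≤ q := by
    rw [Nat.choose_two_right]
    exact hqn
  have hGood : q + 1 ≤ (Finset.univ \ T).card := by
    have hcu : (Finset.univ : Finset (Option F × Option F)).card = (q + 1) * (q + 1) := by
      rw [Finset.card_univ, Fintype.card_prod, Fintype.card_option, hq]
    have hT2 : T.card ≤ q * (q + 1) :=
      le_trans hTcard (Nat.mul_le_mul_right _ hchoose)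
    have he : (q + 1) * (q + 1) = q * (q + 1) + (q + 1) := by ring
    set M := q * (q + 1) with hM
    rw [Finset.card_sdiff_of_subset (Finset.subset_univ T), hcu, he]
    omega
  obtain ⟨S₀, hS₀sub, hS₀card⟩ := Finset.exists_subset_card_eq hGood
  refine ⟨S₀.image Z, ?_, ?_⟩
  · rw [Finset.card_image_of_injective _ hZinj, hS₀card]
  · intro W hW
    obtain ⟨p, hp, rfl⟩ := Finset.mem_image.1 hW
    have hpT : p ∉ T := (Finset.mem_sdiff.1 (hS₀sub hp)).2
    have hproj : IsProjectiveCode (Z p) := by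
      by_contra h
      exact hpT (Finset.mem_filter.2 ⟨Finset.mem_univ _, h⟩)
    refine ⟨hfinZ p, hproj, ?_, ?_⟩
    · rw [hZX p]; exact hfinA p.1
    · rw [hZY p]; exact hfinB p.2
end

section
/- Suppose q ≥ n(n-1)/2 and 1 < k < n - 1. For every projective [n,k]_q code X and every subspace U ⊆ X with dim U < k - 2, there exists a projective [n,k-1]_q code X' with U ⊆ X' ⊆ X. -/
open Module

/-- A nontrivial finite-dimensional vector space over a finite field is not covered by
at most `|F|` proper subspaces. -/
lemma covering_lemma {F : Type*} [Field F] [Fintype F] {V : Type*} [AddCommGroup V] [Module F V]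
    [FiniteDimensional F V] (h0 : 0 < Module.finrank F V)
    {ι : Type*} [Fintype ι] (hι : Fintype.card ι ≤ Fintype.card F)
    (W : ι → Submodule F V) (hW : ∀ i, W i ≠ ⊤) :
    ∃ v : V, ∀ i, v ∉ W i := by
  classical
  by_contra hcon
  push_neg at hcon
  haveI : Finite V := Module.finite_of_finite F
  haveI : Fintype V := Fintype.ofFinite V
  set q := Fintype.card F with hqdef
  have hq2 : 2 ≤ q := Fintype.one_lt_card
  set m := Module.finrank F V with hm
  have hcardV : Fintype.card V = q ^ m := card_eq_pow_finrank
  have hsub : ∀ i, Fintype.card (W i) ≤ q ^ (m - 1) := by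
    intro i
    have h1 : Fintype.card (W i) = q ^ (Module.finrank F (W i)) := card_eq_pow_finrank
    have h2 : Module.finrank F (W i) < m :=
      Submodule.finrank_lt (hW i)
    rw [h1]
    exact Nat.pow_le_pow_right (by omega) (by omega)
  have hsubset : (Finset.univ.erase (0:V)) ⊆
      Finset.univ.biUnion (fun i => ((W i : Set V).toFinset.erase 0)) := by
    intro v hv
    have hv0 : v ≠ 0 := (Finset.mem_erase.mp hv).1
    obtain ⟨i, hi⟩ := hcon v
    exact Finset.mem_biUnion.mpr
      ⟨i, Finset.mem_univ i, Finset.mem_erase.mpr ⟨hv0, Set.mem_toFinset.mpr hi⟩⟩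
  have hcard := (Finset.card_le_card hsubset).trans Finset.card_biUnion_le
  have h1 : (Finset.univ.erase (0:V)).card = q ^ m - 1 := by
    rw [Finset.card_erase_of_mem (Finset.mem_univ _), Finset.card_univ, hcardV]
  have h2 : ∀ i : ι, ((W i : Set V).toFinset.erase 0).card ≤ q ^ (m-1) - 1 := by
    intro i
    have hz : (0:V) ∈ (W i : Set V).toFinset := Set.mem_toFinset.mpr (W i).zero_mem
    rw [Finset.card_erase_of_mem hz, Set.toFinset_card]
    have hcc : Fintype.card ↑(W i : Set V) = Fintype.card (W i) := Fintype.card_congr' rfl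
    have := hsub i
    omega
  have hsum : (Finset.univ : Finset ι).sum (fun i => ((W i : Set V).toFinset.erase 0).card)
      ≤ Fintype.card ι * (q ^ (m-1) - 1) := by
    calc _ ≤ (Finset.univ : Finset ι).sum (fun _ => q ^ (m-1) - 1) :=
          Finset.sum_le_sum (fun i _ => h2 i)
      _ = Fintype.card ι * (q ^ (m-1) - 1) := by
          rw [Finset.sum_const, Finset.card_univ, smul_eq_mul]
  have hs1 : 1 ≤ q ^ (m-1) := Nat.one_le_pow _ _ (by omega)
  have hqm : q * q ^ (m-1) = q ^ m := by
    rw [← pow_succ']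
    congr 1
    omega
  have hmul : q * (q ^ (m-1) - 1) + q = q ^ m := by
    have hd := Nat.mul_add q (q ^ (m-1) - 1) 1
    rw [Nat.mul_one] at hd
    rw [← hd, show q ^ (m-1) - 1 + 1 = q ^ (m-1) by omega, hqm]
  have hA : Fintype.card ι * (q ^ (m-1) - 1) ≤ q * (q ^ (m-1) - 1) :=
    Nat.mul_le_mul_right _ hι
  rw [h1] at hcard
  have final : q ^ m - 1 ≤ q * (q ^ (m-1) - 1) := le_trans hcard (le_trans hsum hA)
  omega

lemma finrank_ker_of_ne_zero {F V : Type*} [Field F] [AddCommGroup V] [Module F V]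
    [FiniteDimensional F V] (f : V →ₗ[F] F) (hf : f ≠ 0) :
    Module.finrank F (LinearMap.ker f) = Module.finrank F V - 1 := by
  obtain ⟨x, hx⟩ := DFunLike.ne_iff.mp hf
  simp only [LinearMap.zero_apply] at hx
  have hsurj : Function.Surjective f := by
    intro c
    exact ⟨(c / f x) • x, by rw [map_smul, smul_eq_mul, div_mul_cancel₀ c hx]⟩
  have h1 := LinearMap.finrank_range_add_finrank_ker f
  rw [LinearMap.range_eq_top.mpr hsurj, finrank_top, Module.finrank_self] at h1
  omega

set_option maxHeartbeats 1000000 in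
set_option synthInstance.maxHeartbeats 400000 in
/-- If `q ≥ n(n-1)/2`, then for every projective `[n,k]_q` code `X` and every subspace
`U ⊆ X` with `dim U < k - 2`, there is a projective `[n,k-1]_q` code `X'` with
`U ⊆ X' ⊆ X`. -/
theorem stmt10 (q : ℕ) (F : Type*) [Field F] [Fintype F] (hq : Fintype.card F = q)
    (n k : ℕ) (hk1 : 1 < k) (hk2 : k < n - 1) (hqn : n * (n - 1) / 2 ≤ q)
    (X : Submodule F (Fin n → F)) (hX : finrank F X = k) (hXp : IsProjectiveCode X)
    (U : Submodule F (Fin n → F)) (hUX : U ≤ X) (hU : finrank F U < k - 2) :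
    ∃ X' : Submodule F (Fin n → F), finrank F X' = k - 1 ∧ IsProjectiveCode X' ∧
      U ≤ X' ∧ X' ≤ X := by
  classical
  have hk3 : 3 ≤ k := by omega
  have hn : 5 ≤ n := by omega
  set g : Fin n → (X →ₗ[F] F) := fun i => coordRestrict X i with hg
  have hg0 : ∀ i, g i ≠ 0 := hXp.1
  have hgprop : ∀ i j, i ≠ j → ∀ a : F, g j ≠ a • g i := hXp.2
  have hkerg : ∀ i, finrank F (LinearMap.ker (g i)) = k - 1 := fun i => by
    rw [finrank_ker_of_ne_zero _ (hg0 i), hX]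
  set K : Fin n → Fin n → Submodule F X :=
    fun i j => LinearMap.ker (g i) ⊓ LinearMap.ker (g j) with hK
  have hKrank : ∀ i j, k - 2 ≤ finrank F (K i j) := by
    intro i j
    have h1 := Submodule.finrank_sup_add_finrank_inf_eq
      (LinearMap.ker (g i)) (LinearMap.ker (g j))
    have h2 : finrank F ↥(LinearMap.ker (g i) ⊔ LinearMap.ker (g j)) ≤ k := by
      rw [← hX]; exact Submodule.finrank_le _
    rw [hkerg i, hkerg j] at h1
    have : K i j = LinearMap.ker (g i) ⊓ LinearMap.ker (g j) := rfl
    rw [this]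
    omega
  set U' : Submodule F X := U.comap X.subtype with hU'def
  have hU'rank : finrank F U' = finrank F U :=
    (Submodule.comapSubtypeEquivOfLe hUX).finrank_eq
  have hQrank : finrank F (X ⧸ U') = k - finrank F U := by
    have := Submodule.finrank_quotient_add_finrank U'
    rw [hU'rank, hX] at this; omega
  set T : Fin n → Fin n → Submodule F (X ⧸ U') := fun i j => (K i j).map U'.mkQ with hT
  have hTsymm : ∀ i j, (fun i j => Submodule.dualAnnihilator (T i j)) i j
      = (fun i j => Submodule.dualAnnihilator (T i j)) j i := by
    intro i j
    simp only [hT, hK, inf_comm]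
  set Wf : Sym2 (Fin n) → Submodule F (Module.Dual F (X ⧸ U')) :=
    Sym2.lift ⟨fun i j => Submodule.dualAnnihilator (T i j), hTsymm⟩ with hWf
  have hWf_mk : ∀ i j, Wf s(i,j) = Submodule.dualAnnihilator (T i j) := fun i j => rfl
  have hWproper : ∀ p : {a : Sym2 (Fin n) // ¬ a.IsDiag}, Wf p.1 ≠ ⊤ := by
    rintro ⟨p, hp⟩
    induction p using Sym2.ind with
    | _ i j =>
      rw [Sym2.mk_isDiag_iff] at hp
      rw [hWf_mk]
      have hTne : T i j ≠ ⊥ := by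
        intro hbot
        have hle : K i j ≤ U' := by
          rw [← Submodule.ker_mkQ U']
          intro x hx
          have hmem : U'.mkQ x ∈ T i j := Submodule.mem_map_of_mem hx
          rw [hbot, Submodule.mem_bot] at hmem
          exact LinearMap.mem_ker.mpr hmem
        have h3 := Submodule.finrank_mono hle
        have h4 := hKrank i j
        rw [hU'rank] at h3
        omega
      obtain ⟨x, hxT, hx0⟩ := Submodule.exists_mem_ne_zero_of_ne_bot hTne
      intro htop
      obtain ⟨φ, hφ⟩ : ∃ φ : Module.Dual F (X ⧸ U'), φ x ≠ 0 := by
        by_contra hc; push_neg at hc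
        exact hx0 ((Module.forall_dual_apply_eq_zero_iff F x).mp hc)
      have hmem : φ ∈ Submodule.dualAnnihilator (T i j) := htop ▸ Submodule.mem_top
      rw [Submodule.mem_dualAnnihilator] at hmem
      exact hφ (hmem x hxT)
  have hcardι : Fintype.card {a : Sym2 (Fin n) // ¬ a.IsDiag} ≤ Fintype.card F := by
    rw [Sym2.card_subtype_not_diag, Fintype.card_fin, hq, Nat.choose_two_right]
    exact hqn
  have hdualrank : 0 < finrank F (Module.Dual F (X ⧸ U')) := by
    rw [Subspace.dual_finrank_eq, hQrank]; omega
  obtain ⟨φ, hφ⟩ := covering_lemma hdualrank hcardι (fun p => Wf p.1) hWproper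
  set ψ : X →ₗ[F] F := φ.comp U'.mkQ with hψ
  have hKnotle : ∀ i j, i ≠ j → ¬ (K i j ≤ LinearMap.ker ψ) := by
    intro i j hij hle
    apply hφ ⟨s(i,j), by rw [Sym2.mk_isDiag_iff]; exact hij⟩
    rw [hWf_mk, Submodule.mem_dualAnnihilator]
    rintro y ⟨x, hx, rfl⟩
    exact hle hx
  have hψ0 : ψ ≠ 0 := by
    intro h0
    refine hKnotle ⟨0, by omega⟩ ⟨1, by omega⟩ (by simp [Fin.ext_iff]) ?_
    rw [h0, LinearMap.ker_zero]
    exact le_top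
  have hHrank : finrank F (LinearMap.ker ψ) = k - 1 := by
    rw [finrank_ker_of_ne_zero _ hψ0, hX]
  set H := LinearMap.ker ψ with hH
  set X' : Submodule F (Fin n → F) := H.map X.subtype with hX'
  have hX'le : X' ≤ X := by
    rintro _ ⟨v, hv, rfl⟩; exact v.2
  have hX'rank : finrank F X' = k - 1 := by
    rw [hX', Submodule.finrank_map_subtype_eq, hHrank]
  -- if a coordinate relation holds on X', then H is contained in the kernel of the
  -- corresponding functional on X
  have key : ∀ (f : X →ₗ[F] F), (∀ v : X, v ∈ H → f v = 0) → f ≠ 0 →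
      H = LinearMap.ker f := by
    intro f hf hfne
    refine Submodule.eq_of_le_of_finrank_eq (fun v hv => LinearMap.mem_ker.mpr (hf v hv)) ?_
    rw [hHrank, finrank_ker_of_ne_zero _ hfne, hX]
  refine ⟨X', hX'rank, ⟨?_, ?_⟩, ?_, hX'le⟩
  · -- nondegenerate
    intro i hzero
    obtain ⟨j, hij⟩ : ∃ j : Fin n, i ≠ j := by
      by_cases h : i = ⟨0, by omega⟩
      · exact ⟨⟨1, by omega⟩, by rw [h]; simp [Fin.ext_iff]⟩
      · exact ⟨⟨0, by omega⟩, h⟩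
    have hfz : ∀ v : X, v ∈ H → g i v = 0 := by
      intro v hv
      have hmem : (v : Fin n → F) ∈ X' := ⟨v, hv, rfl⟩
      have := congrFun (congrArg DFunLike.coe hzero) ⟨(v : Fin n → F), hmem⟩
      simpa [coordRestrict, g] using this
    have heq := key (g i) hfz (hg0 i)
    exact hKnotle i j hij (heq ▸ inf_le_left)
  · -- projective
    intro i j hij a heq
    have hfz : ∀ v : X, v ∈ H → (g j - a • g i) v = 0 := by
      intro v hv
      have hmem : (v : Fin n → F) ∈ X' := ⟨v, hv, rfl⟩
      have h1 := congrFun (congrArg DFunLike.coe heq) ⟨(v : Fin n → F), hmem⟩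
      simp only [coordRestrict, LinearMap.domRestrict_apply, LinearMap.proj_apply,
        LinearMap.smul_apply, smul_eq_mul] at h1
      simp only [LinearMap.sub_apply, LinearMap.smul_apply, smul_eq_mul,
        coordRestrict, LinearMap.domRestrict_apply, LinearMap.proj_apply, g]
      rw [sub_eq_zero]
      exact h1
    have hne : g j - a • g i ≠ 0 := sub_ne_zero.mpr (hgprop i j hij a)
    have heqH := key _ hfz hne
    apply hKnotle i j hij
    rw [heqH]
    intro v hv
    obtain ⟨h1, h2⟩ := Submodule.mem_inf.mp hv
    rw [LinearMap.mem_ker] at h1 h2 ⊢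
    simp [LinearMap.sub_apply, LinearMap.smul_apply, h1, h2]
  · -- U ≤ X'
    intro u hu
    refine ⟨⟨u, hUX hu⟩, ?_, rfl⟩
    show ψ ⟨u, hUX hu⟩ = 0
    rw [hψ, LinearMap.comp_apply]
    have : U'.mkQ ⟨u, hUX hu⟩ = 0 := (Submodule.Quotient.mk_eq_zero U').mpr hu
    rw [this, map_zero]
end

section
/- Suppose q > 2 and min{(q^k - 1)/(q - 1), (q^{n-k} - 1)/(q - 1)} ≥ n, with 1 < k < n - 1. Then there exist projective [n,k]_q codes X and Y with dim(X ∩ Y) = max{0, 2k - n}. -/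
open Module Matrix

section Aux

variable {F : Type*} [Field F]

theorem coordRestrict_apply' {n : ℕ} (C : Submodule F (Fin n → F)) (i : Fin n) (x : C) :
    coordRestrict C i x = (x : Fin n → F) i := rfl

theorem isProjective_of_rows {n k : ℕ} (M : Matrix (Fin n) (Fin k) F)
    (h0 : ∀ i, M i ≠ 0)
    (hp : ∀ i j : Fin n, i ≠ j → ∀ d : F, M j ≠ d • M i) :
    IsProjectiveCode (LinearMap.range M.mulVecLin) := by
  have key : ∀ (i : Fin n) (t : Fin k),
      coordRestrict (LinearMap.range M.mulVecLin) i
        ⟨M.mulVecLin (Pi.single t 1), LinearMap.mem_range_self _ _⟩ = M i t := by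
    intro i t
    rw [coordRestrict_apply']
    show M.mulVec (Pi.single t 1) i = M i t
    simp [Matrix.mulVec_single]
  constructor
  · intro i hi
    apply h0 i
    funext t
    have h := key i t
    rw [hi] at h
    simpa using h.symm
  · intro i j hij d hd
    apply hp i j hij d
    funext t
    have h1 := key j t
    have h2 := key i t
    rw [hd] at h1
    rw [LinearMap.smul_apply, h2] at h1
    simpa using h1.symm

theorem master {k m : ℕ} (hk : 0 < k)
    (a : Fin m → (Fin k → F)) (lam : F) (hl0 : lam ≠ 0) (hl1 : lam ≠ 1)
    (ha0 : ∀ j, a j ≠ 0)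
    (haa : ∀ j j' : Fin m, j ≠ j' → ∀ d : F, a j' ≠ d • a j)
    (hae : ∀ (j : Fin m) (i : Fin k) (d : F), a j ≠ d • (Pi.single i 1 : Fin k → F))
    (hker : finrank F (LinearMap.ker (Matrix.of a).mulVecLin) = 2 * k - (k + m)) :
    ∃ X Y : Submodule F (Fin (k + m) → F),
      finrank F X = k ∧ IsProjectiveCode X ∧
      finrank F Y = k ∧ IsProjectiveCode Y ∧
      finrank F (X ⊓ Y : Submodule F (Fin (k + m) → F)) = 2 * k - (k + m) := by
  classical
  clear hk
  have hlt : ∀ i : Fin (k + m), ¬ (i : ℕ) < k → (i : ℕ) - k < m := by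
    intro i h
    have := i.isLt
    omega
  have hlow : ∀ t : Fin k, (t : ℕ) < k + m := fun t => t.isLt.trans_le (Nat.le_add_right k m)
  have hhigh : ∀ j : Fin m, k + (j : ℕ) < k + m := fun j => Nat.add_lt_add_left j.isLt k
  let row : (Fin m → Fin k → F) → Fin (k + m) → Fin k → F := fun c i =>
    if h : (i : ℕ) < k then Pi.single (⟨i, h⟩ : Fin k) 1 else c ⟨(i : ℕ) - k, hlt i h⟩
  let a' : Fin m → Fin k → F := fun j => lam • a j
  have ha0' : ∀ j, a' j ≠ 0 := by
    intro j h
    have h2 : lam • a j = 0 := h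
    rcases smul_eq_zero.1 h2 with h3 | h3
    · exact hl0 h3
    · exact ha0 j h3
  have haa' : ∀ j j' : Fin m, j ≠ j' → ∀ d : F, a' j' ≠ d • a' j := by
    intro j j' hne d h
    apply haa j j' hne d
    have h2 : lam • a j' = lam • (d • a j) := by
      rw [show lam • (d • a j) = d • (lam • a j) from smul_comm _ _ _]
      exact h
    exact smul_right_injective _ hl0 h2
  have hae' : ∀ (j : Fin m) (i : Fin k) (d : F), a' j ≠ d • (Pi.single i 1 : Fin k → F) := by
    intro j i d h
    apply hae j i (lam⁻¹ * d)
    have h2 : lam • a j = d • (Pi.single i 1 : Fin k → F) := h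
    have h3 : a j = lam⁻¹ • (lam • a j) := by
      rw [smul_smul, inv_mul_cancel₀ hl0, one_smul]
    rw [h3, h2, smul_smul]
  have hsingle0 : ∀ t : Fin k, (Pi.single t 1 : Fin k → F) ≠ 0 := by
    intro t h
    have := congrFun h t
    simp at this
  have hrow0 : ∀ (c : Fin m → Fin k → F), (∀ j, c j ≠ 0) → ∀ i, row c i ≠ 0 := by
    intro c hc i
    simp only [row]
    split
    · apply hsingle0
    · apply hc
  have hrowp : ∀ (c : Fin m → Fin k → F), (∀ j, c j ≠ 0) →
      (∀ j j' : Fin m, j ≠ j' → ∀ d : F, c j' ≠ d • c j) →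
      (∀ (j : Fin m) (i : Fin k) (d : F), c j ≠ d • (Pi.single i 1 : Fin k → F)) →
      ∀ i i' : Fin (k + m), i ≠ i' → ∀ d : F, row c i' ≠ d • row c i := by
    intro c hc0 hcc hce i i' hne d
    simp only [row]
    split <;> split
    · rename_i h' h
      intro heq
      have hne2 : (⟨(i : ℕ), h⟩ : Fin k) ≠ ⟨(i' : ℕ), h'⟩ := by
        intro hcon
        apply hne
        apply Fin.ext
        simpa [Fin.ext_iff] using hcon
      have := congrFun heq ⟨(i' : ℕ), h'⟩
      rw [Pi.single_eq_same, Pi.smul_apply, Pi.single_eq_of_ne (Ne.symm hne2)] at this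
      simp at this
    · rename_i h' h
      intro heq
      have hd : d ≠ 0 := by
        rintro rfl
        rw [zero_smul] at heq
        exact hsingle0 _ heq
      apply hce ⟨(i : ℕ) - k, hlt i h⟩ ⟨(i' : ℕ), h'⟩ d⁻¹
      rw [heq, smul_smul, inv_mul_cancel₀ hd, one_smul]
    · exact hce _ _ d
    · apply hcc
      intro hcon
      apply hne
      apply Fin.ext
      have h1 := i.isLt
      have h2 := i'.isLt
      have : (i : ℕ) - k = (i' : ℕ) - k := by simpa [Fin.ext_iff] using hcon
      rename_i h' h
      omega
  have coordAny : ∀ (c : Fin m → Fin k → F) (v : Fin k → F) (i : Fin (k + m)),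
      (Matrix.of (row c)).mulVecLin v i =
        if h : (i : ℕ) < k then v ⟨i, h⟩ else c ⟨(i : ℕ) - k, hlt i h⟩ ⬝ᵥ v := by
    intro c v i
    show (row c) i ⬝ᵥ v = _
    simp only [row]
    split
    · rw [single_dotProduct, one_mul]
    · rfl
  have coordLow : ∀ (c : Fin m → Fin k → F) (v : Fin k → F) (t : Fin k),
      (Matrix.of (row c)).mulVecLin v ⟨(t : ℕ), hlow t⟩ = v t := by
    intro c v t
    rw [coordAny, dif_pos t.isLt]
  have coordHigh : ∀ (c : Fin m → Fin k → F) (v : Fin k → F) (j : Fin m),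
      (Matrix.of (row c)).mulVecLin v ⟨k + (j : ℕ), hhigh j⟩ = c j ⬝ᵥ v := by
    intro c v j
    rw [coordAny, dif_neg (by exact Nat.not_lt.2 (Nat.le_add_right k j))]
    congr 1
    exact congrArg c (Fin.ext (by simp))
  have hinj : ∀ c : Fin m → Fin k → F, Function.Injective (Matrix.of (row c)).mulVecLin := by
    intro c
    rw [← LinearMap.ker_eq_bot, Submodule.eq_bot_iff]
    intro v hv
    rw [LinearMap.mem_ker] at hv
    funext t
    have h1 := coordLow c v t
    rw [hv] at h1
    simpa using h1.symm
  have hsmuldot : ∀ (x v : Fin k → F), (lam • x) ⬝ᵥ v = lam * (x ⬝ᵥ v) := by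
    intro x v
    rw [smul_dotProduct]
    rfl
  refine ⟨LinearMap.range (Matrix.of (row a)).mulVecLin,
    LinearMap.range (Matrix.of (row a')).mulVecLin, ?_, ?_, ?_, ?_, ?_⟩
  · rw [LinearMap.finrank_range_of_inj (hinj a)]
    simp [Module.finrank_pi]
  · exact isProjective_of_rows _ (hrow0 a ha0) (hrowp a ha0 haa hae)
  · rw [LinearMap.finrank_range_of_inj (hinj a')]
    simp [Module.finrank_pi]
  · exact isProjective_of_rows _ (hrow0 a' ha0') (hrowp a' ha0' haa' hae')
  · have hXY : LinearMap.range (Matrix.of (row a)).mulVecLin ⊓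
        LinearMap.range (Matrix.of (row a')).mulVecLin =
        Submodule.map (Matrix.of (row a)).mulVecLin
          (LinearMap.ker (Matrix.of a).mulVecLin) := by
      apply le_antisymm
      · rintro x ⟨⟨v, rfl⟩, w, hw⟩
        have hvw : w = v := by
          funext t
          calc w t = (Matrix.of (row a')).mulVecLin w ⟨(t : ℕ), hlow t⟩ :=
                (coordLow a' w t).symm
            _ = (Matrix.of (row a)).mulVecLin v ⟨(t : ℕ), hlow t⟩ := congrFun hw _
            _ = v t := coordLow a v t
        subst hvw
        refine Submodule.mem_map.2 ⟨w, ?_, rfl⟩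
        rw [LinearMap.mem_ker]
        funext j
        have h2 := congrFun hw ⟨k + (j : ℕ), hhigh j⟩
        rw [coordHigh, coordHigh] at h2
        have h3 : lam * (a j ⬝ᵥ w) = a j ⬝ᵥ w := by
          rw [← hsmuldot]
          exact h2
        have h4 : (lam - 1) * (a j ⬝ᵥ w) = 0 := by
          rw [sub_mul, one_mul, h3, sub_self]
        have h5 : a j ⬝ᵥ w = 0 := by
          rcases mul_eq_zero.1 h4 with h | h
          · exact absurd (sub_eq_zero.1 h) hl1
          · exact h
        exact h5
      · rintro x hx
        obtain ⟨v, hv, rfl⟩ := Submodule.mem_map.1 hx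
        rw [LinearMap.mem_ker] at hv
        refine Submodule.mem_inf.2 ⟨⟨v, rfl⟩, ⟨v, ?_⟩⟩
        funext i
        rw [coordAny, coordAny]
        by_cases hik : (i : ℕ) < k
        · rw [dif_pos hik, dif_pos hik]
        · rw [dif_neg hik, dif_neg hik]
          have h5 : a ⟨(i : ℕ) - k, hlt i hik⟩ ⬝ᵥ v = 0 := congrFun hv _
          show (lam • a ⟨(i : ℕ) - k, hlt i hik⟩) ⬝ᵥ v = a ⟨(i : ℕ) - k, hlt i hik⟩ ⬝ᵥ v
          rw [hsmuldot, h5, mul_zero]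
    rw [hXY, ← hker]
    exact (Submodule.equivMapOfInjective _ (hinj a) _).symm.finrank_eq

end Aux

/-- If `q > 2` and `min {[k]_q, [n-k]_q} ≥ n` with `1 < k < n - 1`, then there exist
projective `[n,k]_q` codes `X` and `Y` with `dim (X ∩ Y) = max {0, 2k - n}`
(expressed via truncated subtraction: `2 * k - n`). -/
theorem stmt12 (q : ℕ) (F : Type*) [Field F] [Fintype F] (hq : Fintype.card F = q)
    (n k : ℕ) (hk1 : 1 < k) (hk2 : k < n - 1) (hq2 : 2 < q)
    (hmin : n ≤ min ((q ^ k - 1) / (q - 1)) ((q ^ (n - k) - 1) / (q - 1))) :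
    ∃ X Y : Submodule F (Fin n → F),
      finrank F X = k ∧ IsProjectiveCode X ∧
      finrank F Y = k ∧ IsProjectiveCode Y ∧
      finrank F (X ⊓ Y : Submodule F (Fin n → F)) = 2 * k - n := by
  classical
  subst hq
  have hn2 : k + 2 ≤ n := by omega
  obtain ⟨m, rfl⟩ : ∃ m, n = k + m := ⟨n - k, by omega⟩
  have hm2 : 2 ≤ m := by omega
  have hk0 : 0 < k := by omega
  haveI : NeZero k := ⟨by omega⟩
  haveI : NeZero m := ⟨by omega⟩
  haveI : Nontrivial (Fin k) := by
    constructor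
    exact ⟨⟨0, by omega⟩, ⟨1, by omega⟩, by simp [Fin.ext_iff]⟩
  have hmin1 : k + m ≤ (Fintype.card F ^ k - 1) / (Fintype.card F - 1) :=
    le_trans hmin (min_le_left _ _)
  -- choose c with c ≠ 0 and 1 + c ≠ 0
  obtain ⟨c, hc0, hc1⟩ : ∃ c : F, c ≠ 0 ∧ 1 + c ≠ 0 := by
    obtain ⟨c, hc⟩ : ∃ c : F, c ∉ ({0, -1} : Finset F) := by
      by_contra h
      push_neg at h
      have huniv : (Finset.univ : Finset F) ⊆ {0, -1} := fun x _ => h x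
      have h1 := Finset.card_le_card huniv
      rw [Finset.card_univ] at h1
      have h2 : ({0, -1} : Finset F).card ≤ 2 :=
        (Finset.card_insert_le _ _).trans (by simp)
      omega
    simp only [Finset.mem_insert, Finset.mem_singleton] at hc
    push_neg at hc
    exact ⟨c, hc.1, fun h => hc.2 (eq_neg_of_add_eq_zero_right h)⟩
  set lam : F := 1 + c with hlam
  have hl0 : lam ≠ 0 := hc1
  have hl1 : lam ≠ 1 := fun h => hc0 (by rwa [hlam, add_eq_left] at h)
  -- the explicit family of rows
  set b : Fin k → Fin k → F :=
    fun t => if t = 0 then 1 else 1 + c • (Pi.single t 1 : Fin k → F) with hbdef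
  have hbapp : ∀ t s : Fin k, b t s = if t = 0 then 1 else if s = t then 1 + c else 1 := by
    intro t s
    rw [hbdef]
    by_cases h1 : t = 0
    · simp [h1]
    · simp only [h1, if_false, Pi.add_apply, Pi.one_apply, Pi.smul_apply, Pi.single_apply,
        smul_eq_mul]
      split_ifs <;> simp
  have hbC : ∀ t s : Fin k, b t s ≠ 0 := by
    intro t s
    rw [hbapp]
    split_ifs
    · exact one_ne_zero
    · exact hc1
    · exact one_ne_zero
  have hb0 : ∀ t, b t ≠ 0 := fun t h => hbC t t (by rw [h]; rfl)
  have hbcol0 : ∀ t, b t 0 = 1 := by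
    intro t
    rw [hbapp]
    split_ifs with h1 h2
    · rfl
    · exact absurd h2.symm h1
    · rfl
  have hbe : ∀ (t i : Fin k) (d : F), b t ≠ d • (Pi.single i 1 : Fin k → F) := by
    intro t i d h
    obtain ⟨s, hs⟩ := exists_ne i
    apply hbC t s
    have := congrFun h s
    rw [Pi.smul_apply, Pi.single_eq_of_ne hs] at this
    simpa using this
  have hbb : ∀ t t' : Fin k, t ≠ t' → ∀ d : F, b t' ≠ d • b t := by
    intro t t' hne d h
    have h0 : b t' 0 = d * b t 0 := by
      have := congrFun h 0
      rwa [Pi.smul_apply, smul_eq_mul] at this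
    rw [hbcol0, hbcol0, mul_one] at h0
    subst h0
    rw [one_smul] at h
    by_cases ht' : t' = 0
    · subst ht'
      have ht : t ≠ 0 := fun hcon => hne (hcon.trans rfl)
      have := congrFun h t
      rw [hbapp, hbapp] at this
      rw [if_pos rfl, if_neg ht, if_pos rfl] at this
      exact hc0 (left_eq_add.1 this)
    · have := congrFun h t'
      rw [hbapp, hbapp] at this
      rw [if_neg ht', if_pos rfl] at this
      by_cases ht : t = 0
      · rw [if_pos ht] at this
        exact hc0 (add_eq_left.1 this)
      · rw [if_neg ht, if_neg (Ne.symm hne)] at this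
        exact hc0 (add_eq_left.1 this)
  have hbdot : ∀ (t : Fin k) (v : Fin k → F),
      b t ⬝ᵥ v = (∑ s, v s) + (if t = 0 then 0 else c * v t) := by
    intro t v
    by_cases h1 : t = 0
    · subst h1
      simp only [dotProduct, hbapp, if_pos rfl]
      simp
    · simp only [dotProduct, hbapp, if_neg h1]
      have hterm : ∀ s : Fin k, (if s = t then 1 + c else 1) * v s
          = v s + (if s = t then c * v s else 0) := by
        intro s
        split_ifs <;> ring
      rw [Finset.sum_congr rfl (fun s _ => hterm s), Finset.sum_add_distrib,
        Finset.sum_ite_eq' Finset.univ t]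
      simp
  have hbspan : ∀ v : Fin k → F, (∀ t, b t ⬝ᵥ v = 0) → v = 0 := by
    intro v hv
    have h0 : (∑ s, v s) = 0 := by
      have := hv 0
      rwa [hbdot, if_pos rfl, add_zero] at this
    have hvt : ∀ t : Fin k, t ≠ 0 → v t = 0 := by
      intro t ht
      have := hv t
      rw [hbdot, if_neg ht, h0, zero_add] at this
      exact (mul_eq_zero.1 this).resolve_left hc0
    funext t
    by_cases ht : t = 0
    · subst ht
      rw [Finset.sum_eq_single 0 (fun s _ hs => hvt s hs) (by simp)] at h0
      simpa using h0
    · simpa using hvt t ht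
  rcases le_or_gt m k with hmk | hmk
  · -- case m ≤ k : the kernel has dimension k - m since the map is surjective
    have hcast : ∀ j : Fin m, (j : ℕ) < k := fun j => lt_of_lt_of_le j.isLt hmk
    refine master hk0 (fun j => b ⟨(j : ℕ), hcast j⟩) lam hl0 hl1
      (fun j => hb0 _) ?_ (fun j i d => hbe _ i d) ?_
    · intro j j' hne d
      exact hbb _ _ (fun hcon => hne (Fin.ext (by simpa [Fin.ext_iff] using hcon))) d
    · -- surjectivity of the associated map
      have hsurj : Function.Surjective
          ((Matrix.of (fun j : Fin m => b ⟨(j : ℕ), hcast j⟩)).mulVecLin) := by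
        intro w
        set v₁ : Fin k → F := fun t =>
          if h : (t : ℕ) < m ∧ (t : ℕ) ≠ 0 then (w ⟨(t : ℕ), h.1⟩ - w 0) / c else 0 with hv₁
        set v₀ : Fin k → F := Pi.single (0 : Fin k) (w 0 - ∑ s, v₁ s) with hv₀
        refine ⟨v₁ + v₀, ?_⟩
        have hsum : ∑ s, (v₁ + v₀) s = w 0 := by
          simp only [Pi.add_apply]
          rw [Finset.sum_add_distrib]
          have hzz : ∑ s, v₀ s = w 0 - ∑ s, v₁ s := by
            rw [hv₀]
            simp [Finset.sum_pi_single']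
          rw [hzz]
          ring
        funext j
        show b ⟨(j : ℕ), hcast j⟩ ⬝ᵥ _ = w j
        rw [hbdot, hsum]
        by_cases hj : (⟨(j : ℕ), hcast j⟩ : Fin k) = 0
        · rw [if_pos hj]
          have hj0 : j = 0 := by
            apply Fin.ext
            have h := congrArg Fin.val hj
            rw [Fin.val_zero] at h
            rw [Fin.val_zero]
            exact h
          rw [hj0, add_zero]
        · rw [if_neg hj]
          have ht0 : (j : ℕ) ≠ 0 := by
            intro hcon
            exact hj (Fin.ext (by simpa using hcon))
          have hv1 : v₁ ⟨(j : ℕ), hcast j⟩ = (w j - w 0) / c := by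
            simp only [hv₁]
            rw [dif_pos (show ((⟨(j : ℕ), hcast j⟩ : Fin k) : ℕ) < m ∧
                ((⟨(j : ℕ), hcast j⟩ : Fin k) : ℕ) ≠ 0 from ⟨j.isLt, ht0⟩)]
          have hv0j : v₀ ⟨(j : ℕ), hcast j⟩ = 0 := by
            rw [hv₀]
            exact Pi.single_eq_of_ne hj _
          rw [Pi.add_apply, hv1, hv0j, add_zero, mul_comm c, div_mul_cancel₀ _ hc0]
          ring
      have h1 := LinearMap.finrank_range_add_finrank_ker
        ((Matrix.of (fun j : Fin m => b ⟨(j : ℕ), hcast j⟩)).mulVecLin)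
      rw [LinearMap.range_eq_top.2 hsurj, finrank_top] at h1
      simp only [Module.finrank_pi, Fintype.card_fin] at h1
      omega
  · -- case k < m : extra rows are chosen from new projective points; kernel is trivial
    haveI : Finite (Projectivization F (Fin k → F)) := Quotient.finite _
    haveI : Fintype (Projectivization F (Fin k → F)) := Fintype.ofFinite _
    set P := Projectivization F (Fin k → F) with hPdef
    have hsingle0 : ∀ t : Fin k, (Pi.single t 1 : Fin k → F) ≠ 0 := by
      intro t h
      have := congrFun h t
      simp at this
    -- proportional nonzero vectors give the same projective point
    have hmkprop : ∀ (v w : Fin k → F) (hv : v ≠ 0) (hw : w ≠ 0) (d : F), v = d • w →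
        Projectivization.mk F v hv = Projectivization.mk F w hw := by
      intro v w hv hw d h
      have hd : d ≠ 0 := by rintro rfl; rw [zero_smul] at h; exact hv h
      exact (Projectivization.mk_eq_mk_iff F v w hv hw).2 ⟨Units.mk0 d hd, by rw [h]; rfl⟩
    -- cardinality of the projective space
    have hcardP : k + m ≤ Fintype.card P := by
      have e : (Fˣ × P) ≃ {v : Fin k → F // v ≠ 0} := by
        refine Equiv.ofBijective (fun up => ⟨(up.1 : F) • up.2.rep,
          smul_ne_zero (Units.ne_zero up.1) up.2.rep_nonzero⟩) ⟨?_, ?_⟩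
        · rintro ⟨u, p⟩ ⟨u', p'⟩ h
          simp only [Subtype.mk_eq_mk] at h
          have hp : p = p' := by
            have h1 : Projectivization.mk F ((u : F) • p.rep)
                (smul_ne_zero (Units.ne_zero u) p.rep_nonzero) = p := by
              conv_rhs => rw [← Projectivization.mk_rep p]
              exact (Projectivization.mk_eq_mk_iff F _ _ _ p.rep_nonzero).2 ⟨u, rfl⟩
            have h2 : Projectivization.mk F ((u' : F) • p'.rep)
                (smul_ne_zero (Units.ne_zero u') p'.rep_nonzero) = p' := by
              conv_rhs => rw [← Projectivization.mk_rep p']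
              exact (Projectivization.mk_eq_mk_iff F _ _ _ p'.rep_nonzero).2 ⟨u', rfl⟩
            rw [← h1, ← h2]
            congr 1
          subst hp
          have h3 : ((u : F) - (u' : F)) • p.rep = 0 := by
            rw [sub_smul, h, sub_self]
          rcases smul_eq_zero.1 h3 with h4 | h4
          · exact Prod.ext (Units.ext (sub_eq_zero.1 h4)) rfl
          · exact absurd h4 p.rep_nonzero
        · rintro ⟨v, hv⟩
          obtain ⟨u, hu⟩ := (Projectivization.mk_eq_mk_iff F v
            (Projectivization.mk F v hv).rep hv (Projectivization.rep_nonzero _)).1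
            (by rw [Projectivization.mk_rep])
          exact ⟨(u, Projectivization.mk F v hv), Subtype.ext hu⟩
      have hcard : (Fintype.card F - 1) * Fintype.card P = Fintype.card F ^ k - 1 := by
        have h1 := Fintype.card_congr e
        rw [Fintype.card_prod, Fintype.card_units] at h1
        rw [Fintype.card_subtype_compl, Fintype.card_subtype_eq] at h1
        simpa using h1
      have hq1 : 0 < Fintype.card F - 1 := by omega
      rw [← hcard, Nat.mul_div_cancel_left _ hq1] at hmin1
      convert hmin1 using 2
    -- the set of used projective points
    set T : Finset P :=
      (Finset.image (fun t : Fin k =>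
        Projectivization.mk F (Pi.single t 1 : Fin k → F) (hsingle0 t)) Finset.univ) ∪
      (Finset.image (fun t : Fin k => Projectivization.mk F (b t) (hb0 t)) Finset.univ)
      with hTdef
    have hTcard : T.card ≤ 2 * k := by
      refine (Finset.card_union_le _ _).trans ?_
      have h1 := Finset.card_image_le (f := fun t : Fin k =>
        Projectivization.mk F (Pi.single t 1 : Fin k → F) (hsingle0 t)) (s := Finset.univ)
      have h2 := Finset.card_image_le (f := fun t : Fin k =>
        Projectivization.mk F (b t) (hb0 t)) (s := Finset.univ)
      simp only [Finset.card_univ, Fintype.card_fin] at h1 h2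
      omega
    have hTmem1 : ∀ t : Fin k,
        Projectivization.mk F (Pi.single t 1 : Fin k → F) (hsingle0 t) ∈ T := by
      intro t
      rw [hTdef]
      exact Finset.mem_union_left _ (Finset.mem_image.2 ⟨t, Finset.mem_univ t, rfl⟩)
    have hTmem2 : ∀ t : Fin k, Projectivization.mk F (b t) (hb0 t) ∈ T := by
      intro t
      rw [hTdef]
      exact Finset.mem_union_right _ (Finset.mem_image.2 ⟨t, Finset.mem_univ t, rfl⟩)
    -- choose new projective points outside T
    obtain ⟨emb⟩ : Nonempty (Fin (m - k) ↪ {p : P // p ∉ T}) := by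
      apply Function.Embedding.nonempty_of_card_le
      have hcc : Fintype.card {p : P // p ∉ T} = Fintype.card P - T.card := by
        simp [Fintype.card_subtype_compl]
      rw [Fintype.card_fin, hcc]
      omega
    set a : Fin m → Fin k → F := fun j =>
      if h : (j : ℕ) < k then b ⟨(j : ℕ), h⟩
      else ((emb ⟨(j : ℕ) - k, by omega⟩ : {p : P // p ∉ T}) : P).rep with hadef
    have harep : ∀ (j : Fin m) (h : ¬ (j : ℕ) < k),
        a j = ((emb ⟨(j : ℕ) - k, by omega⟩ : {p : P // p ∉ T}) : P).rep := by
      intro j h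
      rw [hadef]
      simp only [dif_neg h]
    have hab : ∀ (j : Fin m) (h : (j : ℕ) < k), a j = b ⟨(j : ℕ), h⟩ := by
      intro j h
      rw [hadef]
      simp only [dif_pos h]
    have ha0 : ∀ j, a j ≠ 0 := by
      intro j
      by_cases hjk : (j : ℕ) < k
      · rw [hab j hjk]
        apply hb0
      · rw [harep j hjk]
        apply Projectivization.rep_nonzero
    have hae : ∀ (j : Fin m) (i : Fin k) (d : F), a j ≠ d • (Pi.single i 1 : Fin k → F) := by
      intro j i d h
      by_cases hjk : (j : ℕ) < k
      · rw [hab j hjk] at h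
        exact hbe _ i d h
      · rw [harep j hjk] at h
        set p := (emb ⟨(j : ℕ) - k, by omega⟩ : {p : P // p ∉ T})
        have : Projectivization.mk F p.1.rep p.1.rep_nonzero =
            Projectivization.mk F (Pi.single i 1 : Fin k → F) (hsingle0 i) :=
          hmkprop _ _ _ _ d h
        rw [Projectivization.mk_rep] at this
        exact p.2 (this ▸ hTmem1 i)
    have haa : ∀ j j' : Fin m, j ≠ j' → ∀ d : F, a j' ≠ d • a j := by
      intro j j' hne d h
      by_cases hjk : (j : ℕ) < k <;> by_cases hjk' : (j' : ℕ) < k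
      · rw [hab j hjk, hab j' hjk'] at h
        exact hbb _ _ (fun hcon => hne (Fin.ext (by simpa [Fin.ext_iff] using hcon))) d h
      · rw [hab j hjk, harep j' hjk'] at h
        set p := (emb ⟨(j' : ℕ) - k, by omega⟩ : {p : P // p ∉ T})
        have : Projectivization.mk F p.1.rep p.1.rep_nonzero =
            Projectivization.mk F (b ⟨(j : ℕ), hjk⟩) (hb0 _) := hmkprop _ _ _ _ d h
        rw [Projectivization.mk_rep] at this
        exact p.2 (this ▸ hTmem2 _)
      · rw [harep j hjk, hab j' hjk'] at h
        set p := (emb ⟨(j : ℕ) - k, by omega⟩ : {p : P // p ∉ T})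
        have hd : d ≠ 0 := by
          rintro rfl
          rw [zero_smul] at h
          exact hb0 _ h
        have h2 : p.1.rep = d⁻¹ • b ⟨(j' : ℕ), hjk'⟩ := by
          rw [h, smul_smul, inv_mul_cancel₀ hd, one_smul]
        have : Projectivization.mk F p.1.rep p.1.rep_nonzero =
            Projectivization.mk F (b ⟨(j' : ℕ), hjk'⟩) (hb0 _) := hmkprop _ _ _ _ d⁻¹ h2
        rw [Projectivization.mk_rep] at this
        exact p.2 (this ▸ hTmem2 _)
      · rw [harep j hjk, harep j' hjk'] at h
        set p := (emb ⟨(j : ℕ) - k, by omega⟩ : {p : P // p ∉ T}) with hp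
        set p' := (emb ⟨(j' : ℕ) - k, by omega⟩ : {p : P // p ∉ T}) with hp'
        have : Projectivization.mk F p'.1.rep p'.1.rep_nonzero =
            Projectivization.mk F p.1.rep p.1.rep_nonzero := hmkprop _ _ _ _ d h
        rw [Projectivization.mk_rep, Projectivization.mk_rep] at this
        have hemb : (⟨(j : ℕ) - k, by omega⟩ : Fin (m - k)) =
            (⟨(j' : ℕ) - k, by omega⟩ : Fin (m - k)) := by
          apply emb.injective
          apply Subtype.ext
          rw [hp, hp'] at this
          exact this.symm
        apply hne
        apply Fin.ext
        have h1 := j.isLt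
        have h2 := j'.isLt
        have h3 : (j : ℕ) - k = (j' : ℕ) - k := by simpa [Fin.ext_iff] using hemb
        omega
    refine master hk0 a lam hl0 hl1 ha0 haa hae ?_
    have hkerbot : LinearMap.ker (Matrix.of a).mulVecLin = ⊥ := by
      rw [Submodule.eq_bot_iff]
      intro v hv
      rw [LinearMap.mem_ker] at hv
      apply hbspan
      intro t
      have h1 : a ⟨(t : ℕ), lt_trans t.isLt hmk⟩ ⬝ᵥ v = 0 := congrFun hv _
      rw [hab _ (show ((⟨(t : ℕ), lt_trans t.isLt hmk⟩ : Fin m) : ℕ) < k from t.isLt)] at h1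
      have h2 : (⟨((⟨(t : ℕ), lt_trans t.isLt hmk⟩ : Fin m) : ℕ), t.isLt⟩ : Fin k) = t :=
        Fin.ext rfl
      rwa [h2] at h1
    rw [hkerbot, finrank_bot]
    omega
end

section
/- Suppose q ≥ n(n-1)/2 and 1 < k < n - 1. Then the graph Π(n,k)_q of projective [n,k]_q codes (restriction of the Grassmann graph) is connected, its diameter equals min{k, n-k}, and the distance between any two projective codes X and Y in Π(n,k)_q equals k - dim(X ∩ Y); moreover if this distance is m, there are at least [m]_q·[m-1]_q···[2]_q distinct geodesics in Π(n,k)_q joining X and Y. -/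
open Module

/-- The graph `Π(n,k)_q` of projective `[n,k]_q` codes: vertices are projective codes,
two codes being adjacent iff their intersection has dimension `k - 1`. -/
def ProjCodeGraph (F : Type*) [Field F] (n k : ℕ) :
    SimpleGraph {C : Submodule F (Fin n → F) // finrank F C = k ∧ IsProjectiveCode C} where
  Adj X Y := X ≠ Y ∧ finrank F (X.1 ⊓ Y.1 : Submodule F (Fin n → F)) = k - 1
  symm := by
    constructor
    rintro X Y ⟨h1, h2⟩
    exact ⟨h1.symm, by rwa [inf_comm]⟩
  loopless := by constructor; rintro X ⟨h1, -⟩; exact h1 rfl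

set_option linter.unusedSectionVars false
set_option linter.deprecated false
set_option linter.unusedVariables false
set_option maxHeartbeats 1600000
set_option synthInstance.maxHeartbeats 1000000

namespace Stmt13


variable {F : Type*} [Field F] [Fintype F] {n : ℕ}

instance : Finite (Submodule F (Fin n → F)) :=
  Finite.of_injective (fun p => (p : Set (Fin n → F))) SetLike.coe_injective

noncomputable instance {V : Type*} [Finite V] (s : Set V) : Fintype ↥s := Fintype.ofFinite _

noncomputable instance {V : Type*} [Finite V] {R : Type*} [Semiring R] [AddCommMonoid V]
    [Module R V] (S : Submodule R V) : Fintype ↥S := Fintype.ofFinite _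

lemma toFinset_card_submodule {V : Type*} [AddCommGroup V] [Module F V] [Finite V]
    (S : Submodule F V) [inst : Fintype ↥(S : Set V)] :
    (S : Set V).toFinset.card = Fintype.card F ^ finrank F S := by
  rw [Set.toFinset_card]
  haveI : Fintype ↥S := Fintype.ofFinite _
  have h1 : @Fintype.card ↥(S : Set V) inst = Fintype.card ↥S :=
    @Fintype.card_congr _ _ inst _ (Equiv.subtypeEquivRight fun x => Iff.rfl)
  rw [h1]
  exact card_eq_pow_finrank

lemma finrank_le_n (S : Submodule F (Fin n → F)) : finrank F S ≤ n := by
  have := Submodule.finrank_le S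
  rwa [Module.finrank_pi, Fintype.card_fin] at this

-- three-subspace inequality used for the distance lower bound
lemma inf_step (A B C : Submodule F (Fin n → F)) :
    finrank F (A ⊓ B : Submodule F (Fin n → F)) + finrank F (B ⊓ C : Submodule F (Fin n → F))
      ≤ finrank F B + finrank F (A ⊓ C : Submodule F (Fin n → F)) := by
  have h1 := Submodule.finrank_sup_add_finrank_inf_eq (A ⊓ B) (B ⊓ C)
  have h2 : (A ⊓ B) ⊓ (B ⊓ C) ≤ A ⊓ C := by
    refine le_inf (le_trans inf_le_left inf_le_left) (le_trans inf_le_right inf_le_right)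
  have h3 : (A ⊓ B) ⊔ (B ⊓ C) ≤ B := sup_le inf_le_right inf_le_left
  have h4 := Submodule.finrank_mono h2
  have h5 := Submodule.finrank_mono h3
  omega

lemma finrank_inf_le_left (A B : Submodule F (Fin n → F)) :
    finrank F (A ⊓ B : Submodule F (Fin n → F)) ≤ finrank F A :=
  Submodule.finrank_mono inf_le_left

lemma finrank_inf_le_right (A B : Submodule F (Fin n → F)) :
    finrank F (A ⊓ B : Submodule F (Fin n → F)) ≤ finrank F B :=
  Submodule.finrank_mono inf_le_right

-- dimension of intersection with a kernel of a functional not vanishing on S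
lemma finrank_inf_ker (S : Submodule F (Fin n → F)) (r : (Fin n → F) →ₗ[F] F)
    (hr : ∃ x ∈ S, r x ≠ 0) :
    finrank F (S ⊓ LinearMap.ker r : Submodule F (Fin n → F)) + 1 = finrank F S := by
  have hker : Submodule.comap S.subtype (S ⊓ LinearMap.ker r) = LinearMap.ker (r.domRestrict S) := by
    ext ⟨x, hx⟩
    simp [LinearMap.mem_ker, LinearMap.domRestrict_apply, hx]
  have e1 : finrank F (S ⊓ LinearMap.ker r : Submodule F (Fin n → F))
      = finrank F (LinearMap.ker (r.domRestrict S)) := by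
    rw [← hker]
    exact (Submodule.comapSubtypeEquivOfLe inf_le_left).finrank_eq.symm
  have e2 := LinearMap.finrank_range_add_finrank_ker (r.domRestrict S)
  have hrange : finrank F (LinearMap.range (r.domRestrict S)) = 1 := by
    obtain ⟨x, hx, hrx⟩ := hr
    have hne : LinearMap.range (r.domRestrict S) ≠ ⊥ := by
      intro h
      have : r.domRestrict S ⟨x, hx⟩ = 0 := by
        have : r.domRestrict S ⟨x, hx⟩ ∈ LinearMap.range (r.domRestrict S) :=
          LinearMap.mem_range_self _ _
        rw [h] at this
        simpa using this
      simp [LinearMap.domRestrict_apply] at this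
      exact hrx this
    have hle : finrank F (LinearMap.range (r.domRestrict S)) ≤ 1 := by
      have := Submodule.finrank_le (LinearMap.range (r.domRestrict S))
      simpa [finrank_self] using this
    have hge : 1 ≤ finrank F (LinearMap.range (r.domRestrict S)) := by
      rcases Nat.eq_zero_or_pos (finrank F (LinearMap.range (r.domRestrict S))) with h | h
      · exact absurd (Submodule.finrank_eq_zero.mp h) hne
      · exact h
    omega
  omega



variable {F : Type*} [Field F] [Fintype F] {n : ℕ}

noncomputable local instance : DecidableEq F := Classical.decEq _

noncomputable local instance : DecidableEq ((Fin n → F) →ₗ[F] F) := Classical.decEq _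

instance : Finite ((Fin n → F) →ₗ[F] F) :=
  Finite.of_injective (fun f => (f : (Fin n → F) → F)) DFunLike.coe_injective

noncomputable instance : Fintype ((Fin n → F) →ₗ[F] F) := Fintype.ofFinite _

/-- representative "bad" functionals for the (unordered) pair `i < j`. -/
noncomputable def reps (F : Type*) [Field F] [Fintype F] {n : ℕ} (i j : Fin n) :
    Finset ((Fin n → F) →ₗ[F] F) :=
  insert (LinearMap.proj i)
    ((Finset.univ : Finset F).image fun a => LinearMap.proj j - a • LinearMap.proj i)

lemma card_reps (i j : Fin n) : (reps F i j).card ≤ Fintype.card F + 1 := by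
  classical
  refine le_trans (Finset.card_insert_le _ _) ?_
  have := Finset.card_image_le (s := (Finset.univ : Finset F))
    (f := fun a => (LinearMap.proj j : (Fin n → F) →ₗ[F] F) - a • LinearMap.proj i)
  simp only [Finset.card_univ] at this
  omega

lemma coordRestrict_eq_smul_iff (Z : Submodule F (Fin n → F)) (i j : Fin n) (a : F) :
    coordRestrict Z j = a • coordRestrict Z i ↔ ∀ z ∈ Z, z j = a * z i := by
  constructor
  · intro h z hz
    have := congrFun (congrArg DFunLike.coe h) ⟨z, hz⟩
    simpa [coordRestrict] using this
  · intro h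
    ext ⟨z, hz⟩
    simpa [coordRestrict] using h z hz

lemma coordRestrict_eq_zero_iff (Z : Submodule F (Fin n → F)) (i : Fin n) :
    coordRestrict Z i = 0 ↔ ∀ z ∈ Z, z i = 0 := by
  constructor
  · intro h z hz
    have := congrFun (congrArg DFunLike.coe h) ⟨z, hz⟩
    simpa [coordRestrict] using this
  · intro h
    ext ⟨z, hz⟩
    simpa [coordRestrict] using h z hz

lemma exists_rep_of_not_projective (hn : 2 ≤ n) (Z : Submodule F (Fin n → F))
    (h : ¬ IsProjectiveCode Z) :
    ∃ i j : Fin n, i < j ∧ ∃ r ∈ reps F i j, ∀ z ∈ Z, r z = 0 := by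
  classical
  rw [IsProjectiveCode, not_and_or] at h
  have key : ∃ i j : Fin n, i ≠ j ∧ ∃ a : F, ∀ z ∈ Z, z j = a * z i := by
    rcases h with h | h
    · rw [IsNondegenerateCode] at h
      push_neg at h
      obtain ⟨i, hi⟩ := h
      have hzi : ∀ z ∈ Z, z i = 0 := (coordRestrict_eq_zero_iff Z i).mp hi
      have : ∃ j : Fin n, j ≠ i := by
        rcases eq_or_ne (i : ℕ) 0 with h0 | h0
        · exact ⟨⟨1, by omega⟩, by simp [Fin.ext_iff, h0]⟩
        · exact ⟨⟨0, by omega⟩, by simp [Fin.ext_iff]; omega⟩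
      obtain ⟨j, hj⟩ := this
      exact ⟨j, i, hj, 0, fun z hz => by simp [hzi z hz]⟩
    · push_neg at h
      obtain ⟨i, j, hij, a, ha⟩ := h
      exact ⟨i, j, hij, a, (coordRestrict_eq_smul_iff Z i j a).mp ha⟩
  obtain ⟨i, j, hij, a, ha⟩ := key
  rcases lt_or_gt_of_ne hij with hlt | hgt
  · refine ⟨i, j, hlt, LinearMap.proj j - a • LinearMap.proj i, ?_, ?_⟩
    · exact Finset.mem_insert_of_mem (Finset.mem_image_of_mem _ (Finset.mem_univ a))
    · intro z hz
      simp [ha z hz, sub_eq_zero]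
  · rcases eq_or_ne a 0 with rfl | ha0
    · refine ⟨j, i, hgt, LinearMap.proj j, Finset.mem_insert_self _ _, ?_⟩
      intro z hz
      simpa using ha z hz
    · refine ⟨j, i, hgt, LinearMap.proj i - a⁻¹ • LinearMap.proj j, ?_, ?_⟩
      · exact Finset.mem_insert_of_mem (Finset.mem_image_of_mem _ (Finset.mem_univ a⁻¹))
      · intro z hz
        simp only [LinearMap.sub_apply, LinearMap.smul_apply, LinearMap.proj_apply,
          smul_eq_mul]
        rw [ha z hz]
        field_simp
        simp

lemma rep_nonvanish (X : Submodule F (Fin n → F)) (hX : IsProjectiveCode X)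
    (i j : Fin n) (hij : i ≠ j) (r : (Fin n → F) →ₗ[F] F) (hr : r ∈ reps F i j) :
    ∃ x ∈ X, r x ≠ 0 := by
  classical
  rcases Finset.mem_insert.mp hr with rfl | hr
  · by_contra hc
    push_neg at hc
    exact hX.1 i ((coordRestrict_eq_zero_iff X i).mpr (by simpa using hc))
  · obtain ⟨a, -, rfl⟩ := Finset.mem_image.mp hr
    by_contra hc
    push_neg at hc
    refine hX.2 i j hij a ((coordRestrict_eq_smul_iff X i j a).mpr ?_)
    intro z hz
    have h2 := hc z hz
    simp only [LinearMap.sub_apply, LinearMap.smul_apply, LinearMap.proj_apply,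
      smul_eq_mul] at h2
    exact sub_eq_zero.mp h2



variable {F : Type*} [Field F] [Fintype F] {n : ℕ}

lemma finrank_ker_dual {V : Type*} [AddCommGroup V] [Module F V] [FiniteDimensional F V]
    (f : V →ₗ[F] F) (hf : f ≠ 0) :
    finrank F (LinearMap.ker f) + 1 = finrank F V := by
  have e2 := LinearMap.finrank_range_add_finrank_ker f
  have hne : LinearMap.range f ≠ ⊥ := by
    intro h
    exact hf (LinearMap.range_eq_bot.mp h)
  have hle : finrank F (LinearMap.range f) ≤ 1 := by
    have := Submodule.finrank_le (LinearMap.range f)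
    simpa [finrank_self] using this
  have hge : 1 ≤ finrank F (LinearMap.range f) := by
    rcases Nat.eq_zero_or_pos (finrank F (LinearMap.range f)) with h | h
    · exact absurd (Submodule.finrank_eq_zero.mp h) hne
    · exact h
  omega

lemma finrank_map_subtype (X : Submodule F (Fin n → F)) (P : Submodule F ↥X) :
    finrank F (P.map X.subtype) = finrank F P :=
  (Submodule.equivMapOfInjective X.subtype X.injective_subtype P).finrank_eq.symm

section CandFacts

variable {q k m : ℕ} {X Y : Submodule F (Fin n → F)}
lemma cand_facts (hXk : finrank F X = k) (hYk : finrank F Y = k)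
    (hW : finrank F (X ⊓ Y : Submodule F (Fin n → F)) + m = k) (hm : 1 ≤ m)
    (g : Module.Dual F ↥X) (y : Fin n → F)
    (hg : g ∈ (Submodule.comap X.subtype (X ⊓ Y)).dualAnnihilator) (hg0 : g ≠ 0)
    (hy : y ∈ Y) (hyW : y ∉ (X ⊓ Y : Submodule F (Fin n → F))) :
    (LinearMap.ker g).map X.subtype ≤ X ∧
    (X ⊓ Y : Submodule F (Fin n → F)) ≤ (LinearMap.ker g).map X.subtype ∧
    finrank F ((LinearMap.ker g).map X.subtype) + 1 = k ∧
    y ∉ X ∧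
    finrank F ((LinearMap.ker g).map X.subtype ⊔ Submodule.span F {y} : Submodule F (Fin n → F)) = k ∧
    X ⊓ ((LinearMap.ker g).map X.subtype ⊔ Submodule.span F {y}) = (LinearMap.ker g).map X.subtype ∧
    ((LinearMap.ker g).map X.subtype ⊔ Submodule.span F {y}) ⊓ Y
      = (X ⊓ Y : Submodule F (Fin n → F)) ⊔ Submodule.span F {y} ∧
    finrank F ((((LinearMap.ker g).map X.subtype ⊔ Submodule.span F {y}) ⊓ Y :
        Submodule F (Fin n → F))) + m = k + 1 ∧
    ((LinearMap.ker g).map X.subtype ⊔ Submodule.span F {y}) ≠ X ∧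
    y ∈ ((LinearMap.ker g).map X.subtype ⊔ Submodule.span F {y}) := by
  classical
  set H : Submodule F (Fin n → F) := (LinearMap.ker g).map X.subtype with hH
  set Z : Submodule F (Fin n → F) := H ⊔ Submodule.span F {y} with hZ
  have hyX : y ∉ X := fun hx => hyW ⟨hx, hy⟩
  have hy0 : y ≠ 0 := fun h => hyX (h ▸ X.zero_mem)
  have hHX : H ≤ X := Submodule.map_subtype_le _ _
  have hWH : (X ⊓ Y : Submodule F (Fin n → F)) ≤ H := by
    intro w hw
    refine Submodule.mem_map.mpr ⟨⟨w, hw.1⟩, ?_, rfl⟩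
    exact (Submodule.mem_dualAnnihilator g).mp hg ⟨w, hw.1⟩ (by simpa [Submodule.mem_comap] using hw.2)
  have hHrk : finrank F H + 1 = k := by
    rw [hH, finrank_map_subtype]
    rw [← hXk]
    exact finrank_ker_dual g hg0
  have hyZ : y ∈ Z := Submodule.mem_sup_right (Submodule.mem_span_singleton_self y)
  have hHsp : H ⊓ Submodule.span F {y} = ⊥ := by
    rw [Submodule.eq_bot_iff]
    rintro v ⟨hvH, hvs⟩
    obtain ⟨c, rfl⟩ := Submodule.mem_span_singleton.mp hvs
    rcases eq_or_ne c 0 with rfl | hc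
    · simp
    · exact absurd (by simpa [smul_smul, hc] using Submodule.smul_mem H c⁻¹ hvH : y ∈ H)
        (fun h => hyX (hHX h))
  have hZrk : finrank F Z = k := by
    have := Submodule.finrank_sup_add_finrank_inf_eq H (Submodule.span F {y})
    rw [hHsp, ← hZ] at this
    simp only [finrank_bot] at this
    rw [finrank_span_singleton hy0] at this
    omega
  have hZneX : Z ≠ X := fun h => hyX (h ▸ hyZ)
  have hXZ : X ⊓ Z = H := by
    have hle1 : H ≤ X ⊓ Z := le_inf hHX le_sup_left
    have hne : finrank F (X ⊓ Z : Submodule F (Fin n → F)) ≠ k := by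
      intro hk2
      have h1 : X ⊓ Z = X := by
        apply Submodule.eq_of_le_of_finrank_le inf_le_left
        rw [hXk, hk2]
      have hXleZ : X ≤ Z := by rw [← h1]; exact inf_le_right
      have : X = Z := Submodule.eq_of_le_of_finrank_le hXleZ (by rw [hXk, hZrk])
      exact hZneX this.symm
    have hle2 : finrank F (X ⊓ Z : Submodule F (Fin n → F)) ≤ k := by
      have := Submodule.finrank_mono (inf_le_left : X ⊓ Z ≤ X)
      omega
    exact (Submodule.eq_of_le_of_finrank_le hle1 (by omega)).symm
  have hWsp : (X ⊓ Y : Submodule F (Fin n → F)) ⊓ Submodule.span F {y} = ⊥ := by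
    rw [Submodule.eq_bot_iff]
    rintro v ⟨hvH, hvs⟩
    obtain ⟨c, rfl⟩ := Submodule.mem_span_singleton.mp hvs
    rcases eq_or_ne c 0 with rfl | hc
    · simp
    · exact absurd (by simpa [smul_smul, hc] using
        Submodule.smul_mem (X ⊓ Y) c⁻¹ hvH : y ∈ X ⊓ Y) hyW
  have hUrk : finrank F ((X ⊓ Y) ⊔ Submodule.span F {y} : Submodule F (Fin n → F)) + m
      = k + 1 := by
    have := Submodule.finrank_sup_add_finrank_inf_eq (X ⊓ Y : Submodule F (Fin n → F))
      (Submodule.span F {y})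
    rw [hWsp] at this
    simp only [finrank_bot] at this
    rw [finrank_span_singleton hy0] at this
    omega
  have hUle : (X ⊓ Y : Submodule F (Fin n → F)) ⊔ Submodule.span F {y} ≤ Z ⊓ Y := by
    refine sup_le (le_inf (le_trans hWH le_sup_left) inf_le_right) ?_
    refine Submodule.span_le.mpr ?_
    intro v hv
    rcases hv with rfl
    exact ⟨hyZ, hy⟩
  have hZYH : (Z ⊓ Y) ⊓ H = X ⊓ Y := by
    apply le_antisymm
    · exact le_inf (le_trans inf_le_right hHX) (le_trans inf_le_left inf_le_right)
    · exact le_inf (le_trans (le_inf (le_trans hWH le_sup_left) inf_le_right)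
        (le_refl _)) hWH
  have hZYle : finrank F (Z ⊓ Y : Submodule F (Fin n → F)) + m ≤ k + 1 := by
    have h1 := Submodule.finrank_sup_add_finrank_inf_eq (Z ⊓ Y : Submodule F (Fin n → F)) H
    rw [hZYH] at h1
    have h2 : (Z ⊓ Y : Submodule F (Fin n → F)) ⊔ H ≤ Z := sup_le inf_le_left le_sup_left
    have h3 := Submodule.finrank_mono h2
    omega
  have hZY : Z ⊓ Y = (X ⊓ Y : Submodule F (Fin n → F)) ⊔ Submodule.span F {y} := by
    symm
    apply Submodule.eq_of_le_of_finrank_le hUle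
    omega
  have hZYrk : finrank F (Z ⊓ Y : Submodule F (Fin n → F)) + m = k + 1 := by
    rw [hZY]; exact hUrk
  exact ⟨hHX, hWH, hHrk, hyX, hZrk, hXZ, hZY, hZYrk, hZneX, hyZ⟩

end CandFacts

-- chunk D : the counting step lemma

lemma pow_sub_div (q m : ℕ) (hq : 2 ≤ q) :
    (q - 1) * ((q ^ m - 1) / (q - 1)) = q ^ m - 1 :=
  Nat.mul_div_cancel' (by simpa using Nat.sub_dvd_pow_sub_pow q 1 m)

lemma arith_int (qz Pz Rz Cz Lz : ℤ) (hq : 2 ≤ qz) (hPR : qz * Rz = Pz)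
    (hP : qz * qz ≤ Pz) (hR : 1 ≤ Rz) (hC0 : 0 ≤ Cz) (hCq : Cz ≤ qz)
    (hL : (qz - 1) * Lz = Pz - 1) :
    Lz * ((qz - 1) * (qz - 1)) + Cz * ((qz + 1) * ((qz - 1) * (Rz - 1)))
      ≤ (Pz - 1) * (Pz - 1) := by
  have hR1 : (0:ℤ) ≤ Rz - 1 := by linarith
  have hq1 : (0:ℤ) ≤ qz - 1 := by linarith
  have hPq : qz ≤ Pz := by nlinarith
  have h2 : Cz * ((qz + 1) * ((qz - 1) * (Rz - 1)))
      ≤ qz * ((qz + 1) * ((qz - 1) * (Rz - 1))) := by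
    apply mul_le_mul_of_nonneg_right hCq
    exact mul_nonneg (by linarith) (mul_nonneg hq1 hR1)
  have h4 : qz * (Rz - 1) = Pz - qz := by rw [← hPR]; ring
  have h3 : qz * ((qz + 1) * ((qz - 1) * (Rz - 1))) = (qz * qz - 1) * (Pz - qz) := by
    rw [← h4]; ring
  have h5 : (qz * qz - 1) * (Pz - qz) ≤ (Pz - 1) * (Pz - qz) :=
    mul_le_mul_of_nonneg_right (by linarith) (by linarith)
  have h6 : Lz * ((qz - 1) * (qz - 1)) = (Pz - 1) * (qz - 1) := by
    calc Lz * ((qz - 1) * (qz - 1)) = ((qz - 1) * Lz) * (qz - 1) := by ring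
    _ = (Pz - 1) * (qz - 1) := by rw [hL]
  have h7 : (Pz - 1) * (qz - 1) + (Pz - 1) * (Pz - qz) = (Pz - 1) * (Pz - 1) := by ring
  linarith

lemma arith_key (q m L C : ℕ) (hq : 2 ≤ q) (hm : 2 ≤ m) (hCq : C ≤ q)
    (hL : (q - 1) * L = q ^ m - 1) :
    L * ((q - 1) * (q - 1)) + C * ((q + 1) * ((q - 1) * (q ^ (m - 1) - 1)))
      ≤ (q ^ m - 1) * (q ^ m - 1) := by
  have hPR : q * q ^ (m - 1) = q ^ m := by
    rw [← pow_succ']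
    congr 1
    omega
  have hR : 1 ≤ q ^ (m - 1) := Nat.one_le_pow _ _ (by omega)
  have hP : q * q ≤ q ^ m := by
    calc q * q = q ^ 2 := (sq q).symm
    _ ≤ q ^ m := Nat.pow_le_pow_right (by omega) hm
  have hP1 : 1 ≤ q ^ m := Nat.one_le_pow _ _ (by omega)
  have h := arith_int q (q ^ m) (q ^ (m - 1)) C L (by exact_mod_cast hq)
    (by exact_mod_cast hPR) (by exact_mod_cast hP) (by exact_mod_cast hR)
    (by positivity) (by exact_mod_cast hCq)
    (by zify [Nat.one_le_two_pow, hP1, show 1 ≤ q by omega] at hL ⊢; exact_mod_cast hL)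
  zify [hP1, hR, show 1 ≤ q by omega]
  exact_mod_cast h

section Step

variable {q k m : ℕ}

lemma step_lemma (hq : Fintype.card F = q) (hn2 : 2 ≤ n) (hC : n * (n - 1) / 2 ≤ q)
    (X Y : Submodule F (Fin n → F))
    (hXk : finrank F X = k) (hYk : finrank F Y = k)
    (hXp : IsProjectiveCode X) (hYp : IsProjectiveCode Y)
    (hW : finrank F (X ⊓ Y : Submodule F (Fin n → F)) + m = k) (hm2 : 2 ≤ m) :
    ∃ S : Finset (Submodule F (Fin n → F)),
      (q ^ m - 1) / (q - 1) ≤ S.card ∧ ∀ Z ∈ S, finrank F Z = k ∧ IsProjectiveCode Z ∧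
        Z ≠ X ∧ finrank F (X ⊓ Z : Submodule F (Fin n → F)) + 1 = k ∧
        finrank F (Z ⊓ Y : Submodule F (Fin n → F)) + m = k + 1 := by
  classical
  have hq2 : 2 ≤ q := hq ▸ Fintype.one_lt_card
  set w := finrank F (X ⊓ Y : Submodule F (Fin n → F)) with hw
  haveI : Finite (Module.Dual F ↥X) :=
    Finite.of_injective (fun f => (f : ↥X → F)) DFunLike.coe_injective
  haveI : Fintype (Module.Dual F ↥X) := Fintype.ofFinite _
  set Wc : Submodule F ↥X := Submodule.comap X.subtype (X ⊓ Y) with hWc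
  set A : Submodule F (Module.Dual F ↥X) := Wc.dualAnnihilator with hAdef
  -- dimension of the annihilator
  have hWcrk : finrank F Wc = w := by
    rw [hWc, hw]
    exact (Submodule.comapSubtypeEquivOfLe (inf_le_left : X ⊓ Y ≤ X)).finrank_eq
  have hArk : finrank F A + w = k := by
    have h1 : finrank F (↥X ⧸ Wc) = finrank F Wc.dualAnnihilator :=
      (Subspace.quotEquivAnnihilator Wc).finrank_eq
    have h2 := Submodule.finrank_quotient_add_finrank Wc
    rw [h1] at h2
    rw [hXk] at h2
    rw [← hAdef] at h2
    omega
  set Gfin : Finset (Module.Dual F ↥X) := (A : Set (Module.Dual F ↥X)).toFinset.erase 0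
    with hGfin
  set Yfin : Finset (Fin n → F) :=
    (Y : Set (Fin n → F)).toFinset \ ((X ⊓ Y : Submodule F (Fin n → F)) : Set (Fin n → F)).toFinset
    with hYfin
  have hGcard : Gfin.card = q ^ (k - w) - 1 := by
    have h0 : (0 : Module.Dual F ↥X) ∈ (A : Set (Module.Dual F ↥X)).toFinset := by
      rw [Set.mem_toFinset]; exact A.zero_mem
    rw [hGfin, Finset.card_erase_of_mem h0, toFinset_card_submodule, hq]
    have hA2 : finrank F ↥A = k - w := by omega
    rw [hA2]
  have hYcard : Yfin.card = q ^ k - q ^ w := by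
    rw [hYfin, Finset.card_sdiff_of_subset (Set.toFinset_subset_toFinset.mpr
      (inf_le_right : X ⊓ Y ≤ Y))]
    rw [toFinset_card_submodule, toFinset_card_submodule, hq, hYk, ← hw]
  set Zof : Module.Dual F ↥X × (Fin n → F) → Submodule F (Fin n → F) :=
    fun p => (LinearMap.ker p.1).map X.subtype ⊔ Submodule.span F {p.2} with hZof
  set cand : Finset (Module.Dual F ↥X × (Fin n → F)) := Gfin ×ˢ Yfin with hcand
  have hmem : ∀ p ∈ cand, p.1 ∈ A ∧ p.1 ≠ 0 ∧ p.2 ∈ Y ∧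
      p.2 ∉ (X ⊓ Y : Submodule F (Fin n → F)) := by
    intro p hp
    rw [hcand, Finset.mem_product] at hp
    obtain ⟨hp1, hp2⟩ := hp
    rw [hGfin, Finset.mem_erase, Set.mem_toFinset] at hp1
    rw [hYfin, Finset.mem_sdiff, Set.mem_toFinset, Set.mem_toFinset] at hp2
    exact ⟨hp1.2, hp1.1, hp2.1, hp2.2⟩
  have hfacts : ∀ p ∈ cand,
      finrank F (Zof p) = k ∧ Zof p ≠ X ∧
      X ⊓ Zof p = (LinearMap.ker p.1).map X.subtype ∧
      finrank F ((LinearMap.ker p.1).map X.subtype) + 1 = k ∧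
      (X ⊓ Y : Submodule F (Fin n → F)) ≤ (LinearMap.ker p.1).map X.subtype ∧
      finrank F (Zof p ⊓ Y : Submodule F (Fin n → F)) + m = k + 1 ∧
      p.2 ∈ Zof p ∧ p.2 ∈ Y ∧ p.2 ∉ (X ⊓ Y : Submodule F (Fin n → F)) := by
    intro p hp
    obtain ⟨h1, h2, h3, h4⟩ := hmem p hp
    obtain ⟨f1, f2, f3, f4, f5, f6, f7, f8, f9, f10⟩ :=
      cand_facts (m := m) hXk hYk hW (by omega) p.1 p.2 h1 h2 h3 h4
    exact ⟨f5, f9, f6, f3, f2, f8, f10, h3, h4⟩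

  -- the good candidates, the bad candidates, and the resulting codes
  set good : Finset (Module.Dual F ↥X × (Fin n → F)) :=
    cand.filter (fun p => IsProjectiveCode (Zof p)) with hgoodd
  set S : Finset (Submodule F (Fin n → F)) := good.image Zof with hSd
  -- fiber bound over good candidates
  have hfiber : ∀ Z₀ ∈ S, (good.filter (fun p => Zof p = Z₀)).card
      ≤ (q - 1) * (q ^ (w + 1) - q ^ w) := by
    intro Z₀ hZ₀
    obtain ⟨p₀, hp₀, hp₀Z⟩ := Finset.mem_image.mp hZ₀
    have hp₀c : p₀ ∈ cand := Finset.mem_of_mem_filter _ hp₀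
    obtain ⟨f1, f2, f3, f4, f5, f6, f7, f8, f9⟩ := hfacts p₀ hp₀c
    have hXZrk : finrank F (X ⊓ Z₀ : Submodule F (Fin n → F)) + 1 = k := by
      rw [← hp₀Z, f3]; exact f4
    have hWXZ : (X ⊓ Y : Submodule F (Fin n → F)) ≤ X ⊓ Z₀ := by
      rw [← hp₀Z, f3]; exact f5
    set Hc : Submodule F ↥X := Submodule.comap X.subtype (X ⊓ Z₀) with hHcd
    have hHcrk : finrank F Hc + 1 = k := by
      rw [hHcd]
      rw [(Submodule.comapSubtypeEquivOfLe (inf_le_left : X ⊓ Z₀ ≤ X)).finrank_eq]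
      exact hXZrk
    have hAnnrk : finrank F Hc.dualAnnihilator = 1 := by
      have h1 : finrank F (↥X ⧸ Hc) = finrank F Hc.dualAnnihilator :=
        (Subspace.quotEquivAnnihilator Hc).finrank_eq
      have h2 := Submodule.finrank_quotient_add_finrank Hc
      rw [h1, hXk] at h2
      omega
    set Fg : Finset (Module.Dual F ↥X) :=
      (Hc.dualAnnihilator : Set (Module.Dual F ↥X)).toFinset.erase 0 with hFgd
    have hFgcard : Fg.card = q - 1 := by
      have h0 : (0 : Module.Dual F ↥X) ∈ (Hc.dualAnnihilator : Set (Module.Dual F ↥X)).toFinset := by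
        rw [Set.mem_toFinset]; exact Submodule.zero_mem _
      rw [hFgd, Finset.card_erase_of_mem h0, toFinset_card_submodule, hq, hAnnrk, pow_one]
    have hZ₀Yrk : finrank F (Z₀ ⊓ Y : Submodule F (Fin n → F)) = w + 1 := by
      have := f6
      rw [hp₀Z] at this
      omega
    have hWZY : (X ⊓ Y : Submodule F (Fin n → F)) ≤ Z₀ ⊓ Y :=
      le_inf (le_trans hWXZ inf_le_right) inf_le_right
    set Fy : Finset (Fin n → F) :=
      ((Z₀ ⊓ Y : Submodule F (Fin n → F)) : Set (Fin n → F)).toFinset \ ((X ⊓ Y : Submodule F (Fin n → F)) : Set (Fin n → F)).toFinset with hFyd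
    have hFycard : Fy.card = q ^ (w + 1) - q ^ w := by
      rw [hFyd, Finset.card_sdiff_of_subset (Set.toFinset_subset_toFinset.mpr hWZY),
        toFinset_card_submodule, toFinset_card_submodule, hq, hZ₀Yrk, ← hw]
    have hsub : good.filter (fun p => Zof p = Z₀) ⊆ Fg ×ˢ Fy := by
      intro p hp
      rw [Finset.mem_filter] at hp
      obtain ⟨hpg, hpZ⟩ := hp
      have hpc : p ∈ cand := Finset.mem_of_mem_filter _ hpg
      obtain ⟨k1, k2, k3, k4, k5, k6, k7, k8, k9⟩ := hfacts p hpc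
      rw [Finset.mem_product]
      refine ⟨?_, ?_⟩
      · rw [hFgd, Finset.mem_erase, Set.mem_toFinset]
        refine ⟨(hmem p hpc).2.1, ?_⟩
        rw [SetLike.mem_coe, Submodule.mem_dualAnnihilator]
        intro v hv
        rw [hHcd, Submodule.mem_comap] at hv
        have hv2 : (↑v : Fin n → F) ∈ (LinearMap.ker p.1).map X.subtype := by
          rw [← k3, hpZ]; exact hv
        obtain ⟨u, hu, huv⟩ := Submodule.mem_map.mp hv2
        have : u = v := Subtype.ext (by simpa using huv)
        rw [← this]; exact hu
      · rw [hFyd, Finset.mem_sdiff, Set.mem_toFinset, Set.mem_toFinset]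
        exact ⟨⟨hpZ ▸ k7, k8⟩, k9⟩
    calc (good.filter (fun p => Zof p = Z₀)).card ≤ (Fg ×ˢ Fy).card :=
          Finset.card_le_card hsub
      _ = Fg.card * Fy.card := Finset.card_product _ _
      _ = (q - 1) * (q ^ (w + 1) - q ^ w) := by rw [hFgcard, hFycard]
  have hgoodub : good.card ≤ ((q - 1) * (q ^ (w + 1) - q ^ w)) * S.card := by
    refine Finset.card_le_mul_card_image good _ ?_
    intro b hb
    exact hfiber b hb
  -- pairs of coordinates
  set P2 : Finset (Fin n × Fin n) := Finset.univ.filter (fun p => p.1 < p.2) with hP2d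
  set P2' : Finset (Fin n × Fin n) := Finset.univ.filter (fun p => p.2 < p.1) with hP2'd
  have hswap : P2.card = P2'.card := by
    refine Finset.card_bij' (fun p _ => (p.2, p.1)) (fun p _ => (p.2, p.1)) ?_ ?_ ?_ ?_
    · intro a ha; rw [hP2d, Finset.mem_filter] at ha; rw [hP2'd, Finset.mem_filter]
      exact ⟨Finset.mem_univ _, ha.2⟩
    · intro a ha; rw [hP2'd, Finset.mem_filter] at ha; rw [hP2d, Finset.mem_filter]
      exact ⟨Finset.mem_univ _, ha.2⟩
    · intro a _; rfl
    · intro a _; rfl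
  have hunion : P2 ∪ P2' = Finset.univ.filter (fun p : Fin n × Fin n => p.1 ≠ p.2) := by
    ext p
    rw [Finset.mem_union, hP2d, hP2'd, Finset.mem_filter, Finset.mem_filter, Finset.mem_filter]
    constructor
    · rintro (⟨-, h⟩ | ⟨-, h⟩)
      · exact ⟨Finset.mem_univ _, ne_of_lt h⟩
      · exact ⟨Finset.mem_univ _, (ne_of_lt h).symm⟩
    · rintro ⟨-, h⟩
      rcases lt_or_gt_of_ne h with h' | h'
      · exact Or.inl ⟨Finset.mem_univ _, h'⟩
      · exact Or.inr ⟨Finset.mem_univ _, h'⟩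
  have hdisj : Disjoint P2 P2' := by
    rw [Finset.disjoint_left]
    intro p h1 h2
    rw [hP2d, Finset.mem_filter] at h1
    rw [hP2'd, Finset.mem_filter] at h2
    exact absurd h2.2 (not_lt_of_gt h1.2)
  have hP2card : 2 * P2.card + n = n * n := by
    have h1 : P2.card + P2'.card = (P2 ∪ P2').card :=
      (Finset.card_union_of_disjoint hdisj).symm
    have h2 : Finset.univ.filter (fun p : Fin n × Fin n => p.1 ≠ p.2)
        = (Finset.univ : Finset (Fin n)).offDiag := by
      ext p
      rw [Finset.mem_filter, Finset.mem_offDiag]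
      simp
    have h3 := Finset.offDiag_card (Finset.univ : Finset (Fin n))
    rw [Finset.card_univ, Fintype.card_fin] at h3
    rw [hunion, h2, h3] at h1
    have h4 : n ≤ n * n := Nat.le_mul_of_pos_left n (by omega)
    omega
  have hP2q : P2.card ≤ q := by
    have hnn : n * (n - 1) = 2 * P2.card := by
      rcases n with _ | n'
      · omega
      · have h5 : (n' + 1) * (n' + 1) = (n' + 1) * n' + (n' + 1) := by ring
        have h6 : (n' + 1) * (n' + 1 - 1) = (n' + 1) * n' := by norm_num
        omega
    rw [hnn] at hC
    omega
  -- bound on bad candidates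
  have hbadsub : cand.filter (fun p => ¬ IsProjectiveCode (Zof p)) ⊆
      P2.biUnion (fun ij => (reps F ij.1 ij.2).biUnion (fun r =>
        cand.filter (fun p => ∀ z ∈ Zof p, r z = 0))) := by
    intro p hp
    rw [Finset.mem_filter] at hp
    obtain ⟨hpc, hpn⟩ := hp
    obtain ⟨i, j, hij, r, hr, hrz⟩ := exists_rep_of_not_projective hn2 (Zof p) hpn
    rw [Finset.mem_biUnion]
    refine ⟨(i, j), ?_, Finset.mem_biUnion.mpr ⟨r, hr, Finset.mem_filter.mpr ⟨hpc, hrz⟩⟩⟩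
    rw [hP2d, Finset.mem_filter]
    exact ⟨Finset.mem_univ _, hij⟩
  have hbadfib : ∀ ij ∈ P2, ∀ r ∈ reps F ij.1 ij.2,
      (cand.filter (fun p => ∀ z ∈ Zof p, r z = 0)).card
        ≤ (q - 1) * (q ^ (k - 1) - q ^ w) := by
    intro ij hij r hr
    rcases Finset.eq_empty_or_nonempty
      (cand.filter (fun p => ∀ z ∈ Zof p, r z = 0)) with he | ⟨p₀, hp₀⟩
    · rw [he]; simp
    · have hp₀c : p₀ ∈ cand := Finset.mem_of_mem_filter _ hp₀
      have hp₀r : ∀ z ∈ Zof p₀, r z = 0 := (Finset.mem_filter.mp hp₀).2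
      have hijne : ij.1 ≠ ij.2 := by
        rw [hP2d, Finset.mem_filter] at hij
        exact ne_of_lt hij.2
      obtain ⟨f1, f2, f3, f4, f5, f6, f7, f8, f9⟩ := hfacts p₀ hp₀c
      have hrX := rep_nonvanish X hXp ij.1 ij.2 hijne r hr
      have hrY := rep_nonvanish Y hYp ij.1 ij.2 hijne r hr
      have hXkr : finrank F (X ⊓ LinearMap.ker r : Submodule F (Fin n → F)) + 1 = k := by
        rw [finrank_inf_ker X r hrX, hXk]
      have hYkr : finrank F (Y ⊓ LinearMap.ker r : Submodule F (Fin n → F)) + 1 = k := by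
        rw [finrank_inf_ker Y r hrY, hYk]
      have hZker : Zof p₀ ≤ LinearMap.ker r := by
        intro z hz
        rw [LinearMap.mem_ker]
        exact hp₀r z hz
      have hWker : (X ⊓ Y : Submodule F (Fin n → F)) ≤ LinearMap.ker r :=
        le_trans f5 (le_trans le_sup_left hZker)
      set Hc : Submodule F ↥X := Submodule.comap X.subtype (X ⊓ LinearMap.ker r) with hHcd
      have hHcrk : finrank F Hc + 1 = k := by
        rw [hHcd]
        rw [(Submodule.comapSubtypeEquivOfLe
          (inf_le_left : X ⊓ LinearMap.ker r ≤ X)).finrank_eq]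
        exact hXkr
      have hAnnrk : finrank F Hc.dualAnnihilator = 1 := by
        have h1 : finrank F (↥X ⧸ Hc) = finrank F Hc.dualAnnihilator :=
          (Subspace.quotEquivAnnihilator Hc).finrank_eq
        have h2 := Submodule.finrank_quotient_add_finrank Hc
        rw [h1, hXk] at h2
        omega
      set Fg : Finset (Module.Dual F ↥X) :=
        (Hc.dualAnnihilator : Set (Module.Dual F ↥X)).toFinset.erase 0 with hFgd
      have hFgcard : Fg.card = q - 1 := by
        have h0 : (0 : Module.Dual F ↥X)
            ∈ (Hc.dualAnnihilator : Set (Module.Dual F ↥X)).toFinset := by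
          rw [Set.mem_toFinset]; exact Submodule.zero_mem _
        rw [hFgd, Finset.card_erase_of_mem h0, toFinset_card_submodule, hq, hAnnrk, pow_one]
      have hWYr : (X ⊓ Y : Submodule F (Fin n → F)) ≤ Y ⊓ LinearMap.ker r :=
        le_inf inf_le_right hWker
      set Fy : Finset (Fin n → F) :=
        ((Y ⊓ LinearMap.ker r : Submodule F (Fin n → F)) : Set (Fin n → F)).toFinset \ ((X ⊓ Y : Submodule F (Fin n → F)) : Set (Fin n → F)).toFinset with hFyd
      have hFycard : Fy.card = q ^ (k - 1) - q ^ w := by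
        rw [hFyd, Finset.card_sdiff_of_subset (Set.toFinset_subset_toFinset.mpr hWYr),
          toFinset_card_submodule, toFinset_card_submodule, hq, ← hw]
        congr 2
        omega
      have hsub : cand.filter (fun p => ∀ z ∈ Zof p, r z = 0) ⊆ Fg ×ˢ Fy := by
        intro p hp
        rw [Finset.mem_filter] at hp
        obtain ⟨hpc, hpr⟩ := hp
        obtain ⟨k1, k2, k3, k4, k5, k6, k7, k8, k9⟩ := hfacts p hpc
        have hZkerp : Zof p ≤ LinearMap.ker r := by
          intro z hz
          rw [LinearMap.mem_ker]
          exact hpr z hz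
        have hHler : (LinearMap.ker p.1).map X.subtype ≤ X ⊓ LinearMap.ker r := by
          refine le_inf (Submodule.map_subtype_le _ _) (le_trans le_sup_left hZkerp)
        have hHeq : (LinearMap.ker p.1).map X.subtype = X ⊓ LinearMap.ker r := by
          apply Submodule.eq_of_le_of_finrank_le hHler
          omega
        rw [Finset.mem_product]
        refine ⟨?_, ?_⟩
        · rw [hFgd, Finset.mem_erase, Set.mem_toFinset]
          refine ⟨(hmem p hpc).2.1, ?_⟩
          rw [SetLike.mem_coe, Submodule.mem_dualAnnihilator]
          intro v hv
          rw [hHcd, Submodule.mem_comap] at hv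
          have hv2 : (↑v : Fin n → F) ∈ (LinearMap.ker p.1).map X.subtype := by
            rw [hHeq]; exact hv
          obtain ⟨u, hu, huv⟩ := Submodule.mem_map.mp hv2
          have : u = v := Subtype.ext (by simpa using huv)
          rw [← this]; exact hu
        · rw [hFyd, Finset.mem_sdiff, Set.mem_toFinset, Set.mem_toFinset]
          exact ⟨⟨k8, hZkerp k7⟩, k9⟩
      calc (cand.filter (fun p => ∀ z ∈ Zof p, r z = 0)).card ≤ (Fg ×ˢ Fy).card :=
            Finset.card_le_card hsub
        _ = Fg.card * Fy.card := Finset.card_product _ _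
        _ = (q - 1) * (q ^ (k - 1) - q ^ w) := by rw [hFgcard, hFycard]
  have hbadcard : (cand.filter (fun p => ¬ IsProjectiveCode (Zof p))).card
      ≤ P2.card * ((q + 1) * ((q - 1) * (q ^ (k - 1) - q ^ w))) := by
    calc (cand.filter (fun p => ¬ IsProjectiveCode (Zof p))).card
        ≤ (P2.biUnion (fun ij => (reps F ij.1 ij.2).biUnion (fun r =>
            cand.filter (fun p => ∀ z ∈ Zof p, r z = 0)))).card :=
          Finset.card_le_card hbadsub
      _ ≤ ∑ ij ∈ P2, ((reps F ij.1 ij.2).biUnion (fun r =>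
            cand.filter (fun p => ∀ z ∈ Zof p, r z = 0))).card :=
          Finset.card_biUnion_le
      _ ≤ ∑ ij ∈ P2, (q + 1) * ((q - 1) * (q ^ (k - 1) - q ^ w)) := by
          refine Finset.sum_le_sum ?_
          intro ij hij
          calc ((reps F ij.1 ij.2).biUnion (fun r =>
              cand.filter (fun p => ∀ z ∈ Zof p, r z = 0))).card
              ≤ ∑ r ∈ reps F ij.1 ij.2,
                  (cand.filter (fun p => ∀ z ∈ Zof p, r z = 0)).card :=
                Finset.card_biUnion_le
            _ ≤ ∑ r ∈ reps F ij.1 ij.2, (q - 1) * (q ^ (k - 1) - q ^ w) :=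
                Finset.sum_le_sum (fun r hr => hbadfib ij hij r hr)
            _ = (reps F ij.1 ij.2).card * ((q - 1) * (q ^ (k - 1) - q ^ w)) := by
                rw [Finset.sum_const, smul_eq_mul]
            _ ≤ (q + 1) * ((q - 1) * (q ^ (k - 1) - q ^ w)) := by
                have := card_reps (F := F) ij.1 ij.2
                rw [hq] at this
                exact Nat.mul_le_mul_right _ (by omega)
      _ = P2.card * ((q + 1) * ((q - 1) * (q ^ (k - 1) - q ^ w))) := by
          rw [Finset.sum_const, smul_eq_mul]
  -- counting conclusion
  have hgb : good.card + (cand.filter (fun p => ¬ IsProjectiveCode (Zof p))).card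
      = cand.card := by
    rw [hgoodd]
    exact Finset.card_filter_add_card_filter_not _
  have hcandcard : cand.card = (q ^ m - 1) * (q ^ k - q ^ w) := by
    rw [hcand, Finset.card_product, hGcard, hYcard]
    congr 3
    omega
  have hq1le : 1 ≤ q := by omega
  obtain ⟨q', rfl⟩ : ∃ q', q = 1 + q' := ⟨q - 1, by omega⟩
  -- abbreviations for the subtraction identities
  have e1 : (1 + q') ^ (w + 1) - (1 + q') ^ w = (1 + q') ^ w * ((1 + q') - 1) := by
    have h : (1 + q') ^ (w + 1) = (1 + q') ^ w + (1 + q') ^ w * q' := by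
      rw [pow_succ]; ring
    have h2 : (1 + q') ^ w * ((1 + q') - 1) = (1 + q') ^ w * q' := by
      congr 1; omega
    omega
  have hpowm : ∀ a b : ℕ, a + b = k → (1 + q') ^ k - (1 + q') ^ a
      = (1 + q') ^ a * ((1 + q') ^ b - 1) := by
    intro a b hab
    have h : (1 + q') ^ k = (1 + q') ^ a * (1 + q') ^ b := by
      rw [← pow_add, hab]
    have h1 : 1 ≤ (1 + q') ^ b := Nat.one_le_pow _ _ (by omega)
    obtain ⟨s, hs⟩ : ∃ s, (1 + q') ^ b = 1 + s := ⟨(1 + q') ^ b - 1, by omega⟩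
    have h2 : (1 + q') ^ a * (1 + s) = (1 + q') ^ a + (1 + q') ^ a * s := by ring
    rw [hs] at h
    rw [hs]
    simp only [Nat.add_sub_cancel_left]
    omega
  have e2 : (1 + q') ^ k - (1 + q') ^ w = (1 + q') ^ w * ((1 + q') ^ m - 1) :=
    hpowm w m (by omega)
  have e3 : (1 + q') ^ (k - 1) - (1 + q') ^ w
      = (1 + q') ^ w * ((1 + q') ^ (m - 1) - 1) := by
    have h : (1 + q') ^ (k - 1) = (1 + q') ^ (w + (m - 1)) := by
      congr 1; omega
    rw [h]
    have h2 : (1 + q') ^ (w + (m - 1)) = (1 + q') ^ w * (1 + q') ^ (m - 1) := by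
      rw [pow_add]
    have h1 : 1 ≤ (1 + q') ^ (m - 1) := Nat.one_le_pow _ _ (by omega)
    obtain ⟨s, hs⟩ : ∃ s, (1 + q') ^ (m - 1) = 1 + s := ⟨(1 + q') ^ (m - 1) - 1, by omega⟩
    rw [hs] at h2 ⊢
    have h3 : (1 + q') ^ w * (1 + s) = (1 + q') ^ w + (1 + q') ^ w * s := by ring
    simp only [Nat.add_sub_cancel_left]
    omega
  set L : ℕ := ((1 + q') ^ m - 1) / ((1 + q') - 1) with hLd
  have hL : ((1 + q') - 1) * L = (1 + q') ^ m - 1 := pow_sub_div (1 + q') m (by omega)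
  have key := arith_key (1 + q') m L P2.card (by omega) hm2 hP2q hL
  have hstep1 : L * (((1 + q') - 1) * ((1 + q') ^ (w + 1) - (1 + q') ^ w))
      + P2.card * (((1 + q') + 1) * (((1 + q') - 1) * ((1 + q') ^ (k - 1) - (1 + q') ^ w)))
      ≤ cand.card := by
    rw [hcandcard, e1, e2, e3]
    calc L * (((1 + q') - 1) * ((1 + q') ^ w * ((1 + q') - 1)))
        + P2.card * (((1 + q') + 1) * (((1 + q') - 1)
            * ((1 + q') ^ w * ((1 + q') ^ (m - 1) - 1))))
        = (L * (((1 + q') - 1) * ((1 + q') - 1))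
            + P2.card * (((1 + q') + 1) * (((1 + q') - 1) * ((1 + q') ^ (m - 1) - 1))))
            * (1 + q') ^ w := by ring
      _ ≤ (((1 + q') ^ m - 1) * ((1 + q') ^ m - 1)) * (1 + q') ^ w :=
          Nat.mul_le_mul_right _ key
      _ = ((1 + q') ^ m - 1) * ((1 + q') ^ w * ((1 + q') ^ m - 1)) := by ring
  have hfibpos : 0 < ((1 + q') - 1) * ((1 + q') ^ (w + 1) - (1 + q') ^ w) := by
    rw [e1]
    have : 0 < (1 + q') ^ w := Nat.pow_pos (by omega)
    have hq'pos : 0 < q' := by omega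
    have : (1 + q') - 1 = q' := by omega
    rw [this]
    positivity
  have hgoodlb : L * (((1 + q') - 1) * ((1 + q') ^ (w + 1) - (1 + q') ^ w)) ≤ good.card := by
    omega
  have hLS : L ≤ S.card := by
    have h1 : L * (((1 + q') - 1) * ((1 + q') ^ (w + 1) - (1 + q') ^ w))
        ≤ (((1 + q') - 1) * ((1 + q') ^ (w + 1) - (1 + q') ^ w)) * S.card := by
      omega
    rw [mul_comm] at h1
    exact Nat.le_of_mul_le_mul_left h1 hfibpos
  refine ⟨S, hLS, ?_⟩
  intro Z hZ
  obtain ⟨p, hp, hpZ⟩ := Finset.mem_image.mp hZ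
  have hpc : p ∈ cand := Finset.mem_of_mem_filter _ hp
  have hpproj : IsProjectiveCode (Zof p) := by
    rw [hgoodd, Finset.mem_filter] at hp
    exact hp.2
  obtain ⟨f1, f2, f3, f4, f5, f6, f7, f8, f9⟩ := hfacts p hpc
  refine ⟨hpZ ▸ f1, hpZ ▸ hpproj, hpZ ▸ f2, ?_, hpZ ▸ f6⟩
  rw [← hpZ, f3]
  exact f4


end Step
-- chunk E : Vandermonde constructions

section Vandermonde

variable {q k : ℕ}
variable (t : Fin n → F)

/-- the "shifted Reed–Solomon" encoding map. -/
noncomputable def Vmap (a s : ℕ) : (Fin a → F) →ₗ[F] (Fin n → F) where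
  toFun c := fun i => ∑ j : Fin a, c j * t i ^ (s + (j : ℕ))
  map_add' c d := by
    funext i
    simp [add_mul, Finset.sum_add_distrib]
  map_smul' r c := by
    funext i
    simp [Finset.mul_sum, mul_assoc]

lemma Vmap_apply (a s : ℕ) (c : Fin a → F) (i : Fin n) :
    Vmap t a s c i = ∑ j : Fin a, c j * t i ^ (s + (j : ℕ)) := rfl

/-- zero-padding of coefficients. -/
def pad (a s : ℕ) (c : Fin a → F) : ℕ → F := fun j =>
  if h : s ≤ j ∧ j < s + a then c ⟨j - s, by omega⟩ else 0

lemma pad_apply_mem (a s : ℕ) (c : Fin a → F) (j : ℕ) (h : s ≤ j ∧ j < s + a) :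
    pad a s c j = c ⟨j - s, by omega⟩ := by
  simp only [pad]
  rw [dif_pos h]

lemma pad_apply_not_mem (a s : ℕ) (c : Fin a → F) (j : ℕ) (h : ¬ (s ≤ j ∧ j < s + a)) :
    pad a s c j = 0 := by
  simp only [pad]
  rw [dif_neg h]

lemma sum_pad (a s : ℕ) (hsa : s + a ≤ n) (c : Fin a → F) (i : Fin n) :
    ∑ j : Fin n, pad a s c (j : ℕ) * t i ^ (j : ℕ) = Vmap t a s c i := by
  classical
  have hemb : Function.Injective (fun (j' : Fin a) =>
      (⟨s + (j' : ℕ), by have := j'.isLt; omega⟩ : Fin n)) := by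
    intro x y hxy
    have : s + (x : ℕ) = s + (y : ℕ) := congrArg Fin.val hxy
    exact Fin.ext (by omega)
  set A : Finset (Fin n) :=
    (Finset.univ : Finset (Fin a)).image (fun (j' : Fin a) =>
      (⟨s + (j' : ℕ), by have := j'.isLt; omega⟩ : Fin n)) with hA
  have hmemA : ∀ j : Fin n, j ∈ A ↔ s ≤ (j : ℕ) ∧ (j : ℕ) < s + a := by
    intro j
    rw [hA, Finset.mem_image]
    constructor
    · rintro ⟨j', -, rfl⟩
      have := j'.isLt
      simp only
      omega
    · rintro ⟨h1, h2⟩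
      exact ⟨⟨(j : ℕ) - s, by omega⟩, Finset.mem_univ _, Fin.ext (by simp <;> omega)⟩
  have hzero : ∀ j ∈ (Finset.univ : Finset (Fin n)), j ∉ A →
      pad a s c (j : ℕ) * t i ^ (j : ℕ) = 0 := by
    intro j _ hj
    rw [hmemA] at hj
    rw [pad_apply_not_mem a s c _ (by omega)]
    ring
  rw [← Finset.sum_subset (Finset.subset_univ A) hzero]
  rw [hA, Finset.sum_image (fun x _ y _ h => hemb h)]
  rw [Vmap_apply]
  refine Finset.sum_congr rfl ?_
  intro j' _
  have hj' := j'.isLt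
  congr 1
  rw [pad_apply_mem a s c _ (by simp <;> omega)]
  apply congrArg
  exact Fin.ext (by simp)

lemma pad_cancel (ht : Function.Injective t) (u v : ℕ → F)
    (h : ∀ i : Fin n, ∑ j : Fin n, u (j : ℕ) * t i ^ (j : ℕ)
      = ∑ j : Fin n, v (j : ℕ) * t i ^ (j : ℕ)) :
    ∀ j : Fin n, u (j : ℕ) = v (j : ℕ) := by
  classical
  have hz : (fun j : Fin n => u (j : ℕ) - v (j : ℕ)) = 0 := by
    apply Matrix.eq_zero_of_forall_index_sum_mul_pow_eq_zero ht
    intro i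
    have hh := h i
    simp only [sub_mul]
    rw [Finset.sum_sub_distrib, hh]
    ring
  intro j
  have := congrFun hz j
  simp only [Pi.zero_apply] at this
  exact sub_eq_zero.mp this

lemma Vmap_inj (a s : ℕ) (hsa : s + a ≤ n) (ht : Function.Injective t) :
    Function.Injective (Vmap t a s) := by
  rw [← LinearMap.ker_eq_bot]
  rw [LinearMap.ker_eq_bot']
  intro c hc
  have h0 : ∀ j : Fin n, pad a s c (j : ℕ) = 0 := by
    apply pad_cancel t ht (fun j => pad a s c j) (fun _ => 0)
    intro i
    rw [sum_pad t a s hsa c i, hc]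
    simp
  funext j'
  have hj' := j'.isLt
  have h1 := h0 ⟨s + (j' : ℕ), by omega⟩
  rw [pad_apply_mem a s c _ (by simp <;> omega)] at h1
  rw [show c j' = c ⟨(↑(⟨s + (j' : ℕ), by omega⟩ : Fin n)) - s, by simp <;> omega⟩ from
    congrArg c (Fin.ext (by simp))]
  exact h1

lemma Vmap_finrank (a s : ℕ) (hsa : s + a ≤ n) (ht : Function.Injective t) :
    finrank F (LinearMap.range (Vmap t a s)) = a := by
  rw [LinearMap.finrank_range_of_inj (Vmap_inj t a s hsa ht)]
  simp [Module.finrank_pi]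

lemma Vmap_single (a s : ℕ) (j₀ : Fin a) (i : Fin n) :
    Vmap t a s (fun j => if j = j₀ then 1 else 0) i = t i ^ (s + (j₀ : ℕ)) := by
  classical
  rw [Vmap_apply]
  rw [Finset.sum_eq_single j₀]
  · simp
  · intro b _ hb; simp [hb]
  · intro hb; exact absurd (Finset.mem_univ _) hb

lemma Vmap_projective (a s : ℕ) (ha : 2 ≤ a) (ht : Function.Injective t)
    (ht0 : ∀ i, t i ≠ 0) :
    IsProjectiveCode (LinearMap.range (Vmap t a s)) := by
  classical
  set C := LinearMap.range (Vmap t a s) with hC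
  have hmem0 : ∀ i : Fin n, ∃ x ∈ C, x i = t i ^ s ∧
      ∀ i' : Fin n, x i' = t i' ^ s := by
    intro i
    refine ⟨Vmap t a s (fun j => if j = ⟨0, by omega⟩ then 1 else 0),
      LinearMap.mem_range_self _ _, ?_, ?_⟩
    · rw [Vmap_single]; norm_num
    · intro i'; rw [Vmap_single]; norm_num
  constructor
  · intro i h
    rw [coordRestrict_eq_zero_iff] at h
    obtain ⟨x, hx, hxi, -⟩ := hmem0 i
    exact pow_ne_zero s (ht0 i) (by rw [← hxi]; exact h x hx)
  · intro i j hij a' ha'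
    rw [coordRestrict_eq_smul_iff] at ha'
    obtain ⟨x0, hx0C, -, hx0⟩ := hmem0 i
    have e0 : t j ^ s = a' * t i ^ s := by
      have hv := ha' x0 hx0C
      rw [hx0 j, hx0 i] at hv
      exact hv
    set x1 : Fin n → F := Vmap t a s (fun j' => if j' = ⟨1, by omega⟩ then 1 else 0) with hx1d
    have hx1C : x1 ∈ C := LinearMap.mem_range_self _ _
    have hx1 : ∀ i' : Fin n, x1 i' = t i' ^ (s + 1) := by
      intro i'; rw [hx1d, Vmap_single]
    have e1 : t j ^ (s + 1) = a' * t i ^ (s + 1) := by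
      have hv := ha' x1 hx1C
      rw [hx1 j, hx1 i] at hv
      exact hv
    have e1' : t j ^ s * t j = t j ^ s * t i := by
      rw [← pow_succ, e1, e0, pow_succ]
      ring
    have := mul_left_cancel₀ (pow_ne_zero s (ht0 j)) e1'
    exact hij ((ht this).symm)

lemma mem_range_of_pad (a s : ℕ) (hsa : s + a ≤ n) (x : Fin n → F) (u : ℕ → F)
    (hx : ∀ i : Fin n, x i = ∑ j : Fin n, u (j : ℕ) * t i ^ (j : ℕ))
    (hu1 : ∀ j : Fin n, (j : ℕ) < s → u (j : ℕ) = 0)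
    (hu2 : ∀ j : Fin n, s + a ≤ (j : ℕ) → u (j : ℕ) = 0) :
    x ∈ LinearMap.range (Vmap t a s) := by
  classical
  refine ⟨fun j' => u (s + (j' : ℕ)), ?_⟩
  funext i
  rw [← sum_pad t a s hsa _ i, hx i]
  refine Finset.sum_congr rfl ?_
  intro j _
  congr 1
  by_cases h : s ≤ (j : ℕ) ∧ (j : ℕ) < s + a
  · rw [pad_apply_mem _ _ _ _ h]
    exact congrArg u (by simp <;> omega)
  · rw [pad_apply_not_mem _ _ _ _ h]
    push_neg at h
    rcases Nat.lt_or_ge (j : ℕ) s with h' | h'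
    · exact (hu1 j h').symm
    · exact (hu2 j (by omega)).symm

lemma Vmap_inter (e' : ℕ) (he : e' ≤ k) (he'k : e' + k ≤ n)
    (ht : Function.Injective t) :
    LinearMap.range (Vmap t k 0) ⊓ LinearMap.range (Vmap t k e')
      = LinearMap.range (Vmap t (k - e') e') := by
  classical
  have hk0 : (0 : ℕ) + k ≤ n := by omega
  have hke : e' + (k - e') ≤ n := by omega
  apply le_antisymm
  · rintro x ⟨⟨c, hc⟩, ⟨d, hd⟩⟩
    have hpad : ∀ j : Fin n, pad k 0 c (j : ℕ) = pad k e' d (j : ℕ) := by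
      apply pad_cancel t ht
      intro i
      rw [sum_pad t k 0 hk0 c i, sum_pad t k e' he'k d i, hc, hd]
    refine mem_range_of_pad t (k - e') e' hke x (fun j => pad k 0 c j) ?_ ?_ ?_
    · intro i
      rw [sum_pad t k 0 hk0 c i, hc]
    · intro j hj
      show pad k 0 c (j : ℕ) = 0
      rw [hpad j, pad_apply_not_mem _ _ _ _ (by omega)]
    · intro j hj
      show pad k 0 c (j : ℕ) = 0
      rw [pad_apply_not_mem _ _ _ _ (by omega)]
  · rintro x ⟨c', rfl⟩
    have hx : ∀ i : Fin n, Vmap t (k - e') e' c' i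
        = ∑ j : Fin n, pad (k - e') e' c' (j : ℕ) * t i ^ (j : ℕ) :=
      fun i => (sum_pad t (k - e') e' hke c' i).symm
    constructor
    · refine mem_range_of_pad t k 0 hk0 _ (fun j => pad (k - e') e' c' j) hx ?_ ?_
      · intro j hj
        omega
      · intro j hj
        show pad (k - e') e' c' (j : ℕ) = 0
        rw [pad_apply_not_mem _ _ _ _ (by omega)]
    · refine mem_range_of_pad t k e' he'k _ (fun j => pad (k - e') e' c' j) hx ?_ ?_
      · intro j hj
        show pad (k - e') e' c' (j : ℕ) = 0
        rw [pad_apply_not_mem _ _ _ _ (by omega)]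
      · intro j hj
        show pad (k - e') e' c' (j : ℕ) = 0
        rw [pad_apply_not_mem _ _ _ _ (by omega)]

end Vandermonde
-- chunk F : walks, distances, diameter, final assembly

section Walks

variable {q k : ℕ}

instance : Finite {C : Submodule F (Fin n → F) // finrank F C = k ∧ IsProjectiveCode C} :=
  Subtype.finite

lemma walk_lower (hk : 1 ≤ k) :
    ∀ (X Y : {C : Submodule F (Fin n → F) // finrank F C = k ∧ IsProjectiveCode C})
      (p : (ProjCodeGraph F n k).Walk X Y),
      k ≤ finrank F (X.1 ⊓ Y.1 : Submodule F (Fin n → F)) + p.length := by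
  intro X Y p
  induction p with
  | nil =>
    rename_i u
    simp only [SimpleGraph.Walk.length_nil, Nat.add_zero]
    have h0 : (u.1 ⊓ u.1 : Submodule F (Fin n → F)) = u.1 := inf_idem u.1
    rw [h0, u.2.1]
  | @cons u v w h p ih =>
    obtain ⟨hne, hfr⟩ := id h
    have hstep := inf_step u.1 v.1 w.1
    have hv := v.2.1
    simp only [SimpleGraph.Walk.length_cons]
    omega

lemma walks_exist (hq : Fintype.card F = q) (hn2 : 2 ≤ n) (hCq : n * (n - 1) / 2 ≤ q)
    (hk : 1 ≤ k) :
    ∀ m : ℕ, ∀ X Y : {C : Submodule F (Fin n → F) // finrank F C = k ∧ IsProjectiveCode C},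
      finrank F (X.1 ⊓ Y.1 : Submodule F (Fin n → F)) + m = k →
      ∃ T : Finset ((ProjCodeGraph F n k).Walk X Y),
        (∀ p ∈ T, p.length = m) ∧
        ∏ j ∈ Finset.Icc 2 m, (q ^ j - 1) / (q - 1) ≤ T.card := by
  classical
  intro m
  induction m with
  | zero =>
    intro X Y hm
    have h1 : X.1 ⊓ Y.1 = X.1 := by
      apply Submodule.eq_of_le_of_finrank_le inf_le_left
      rw [X.2.1]
      omega
    have h2 : X.1 ≤ Y.1 := by rw [← h1]; exact inf_le_right
    have h3 : X = Y := Subtype.ext (Submodule.eq_of_le_of_finrank_le h2 (by rw [X.2.1, Y.2.1]))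
    subst h3
    refine ⟨{SimpleGraph.Walk.nil}, ?_, ?_⟩
    · intro p hp
      rw [Finset.mem_singleton] at hp
      subst hp
      rfl
    · rw [Finset.card_singleton, Finset.Icc_eq_empty (by omega), Finset.prod_empty]
  | succ m' ih =>
    intro X Y hm
    rcases Nat.eq_zero_or_pos m' with rfl | hm'pos
    · have hne : X ≠ Y := by
        intro h
        subst h
        rw [inf_idem, X.2.1] at hm
        omega
      have hadj : (ProjCodeGraph F n k).Adj X Y := ⟨hne, by omega⟩
      refine ⟨{SimpleGraph.Walk.cons hadj SimpleGraph.Walk.nil}, ?_, ?_⟩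
      · intro p hp
        rw [Finset.mem_singleton] at hp
        subst hp
        rfl
      · rw [Finset.card_singleton, Finset.Icc_eq_empty (by omega), Finset.prod_empty]
    · obtain ⟨S, hScard, hSprop⟩ := step_lemma (q := q) (m := m' + 1) hq hn2 hCq X.1 Y.1
        X.2.1 Y.2.1 X.2.2 Y.2.2 hm (by omega)
      set S' : Finset {C : Submodule F (Fin n → F) // finrank F C = k ∧ IsProjectiveCode C} :=
        S.attach.image (fun z => ⟨z.1, (hSprop z.1 z.2).1, (hSprop z.1 z.2).2.1⟩) with hS'd
      have hS'card : S'.card = S.card := by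
        have hinj : Function.Injective (fun z : {x // x ∈ S} =>
            (⟨z.1, (hSprop z.1 z.2).1, (hSprop z.1 z.2).2.1⟩ :
              {C : Submodule F (Fin n → F) // finrank F C = k ∧ IsProjectiveCode C})) :=
          fun a b hab => Subtype.ext (congrArg (fun x => x.1) hab)
        rw [hS'd, Finset.card_image_of_injective _ hinj, Finset.card_attach]
      have hS'prop : ∀ z ∈ S', (ProjCodeGraph F n k).Adj X z ∧
          finrank F (z.1 ⊓ Y.1 : Submodule F (Fin n → F)) + m' = k := by
        intro z hz
        rw [hS'd, Finset.mem_image] at hz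
        obtain ⟨ww, hw, rfl⟩ := hz
        obtain ⟨hp1, hp2, hp3, hp4, hp5⟩ := hSprop ww.1 ww.2
        refine ⟨⟨?_, ?_⟩, ?_⟩
        · intro hXz
          exact hp3 (congrArg (fun x => x.1) hXz).symm
        · show finrank F (X.1 ⊓ ww.1 : Submodule F (Fin n → F)) = k - 1
          omega
        · show finrank F (ww.1 ⊓ Y.1 : Submodule F (Fin n → F)) + m' = k
          omega
      have hch : ∀ z : {x // x ∈ S'}, ∃ T : Finset ((ProjCodeGraph F n k).Walk z.1 Y),
          (∀ p ∈ T, p.length = m') ∧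
          ∏ j ∈ Finset.Icc 2 m', (q ^ j - 1) / (q - 1) ≤ T.card :=
        fun z => ih z.1 Y (hS'prop z.1 z.2).2
      choose T hT1 hT2 using hch
      set Tall : Finset ((ProjCodeGraph F n k).Walk X Y) :=
        S'.attach.biUnion (fun z => (T z).image
          (fun p => SimpleGraph.Walk.cons (hS'prop z.1 z.2).1 p)) with hTd
      have hconsinj : ∀ (v : {C : Submodule F (Fin n → F) //
            finrank F C = k ∧ IsProjectiveCode C})
          (a : (ProjCodeGraph F n k).Adj X v) (p p' : (ProjCodeGraph F n k).Walk v Y),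
          SimpleGraph.Walk.cons a p = SimpleGraph.Walk.cons a p' → p = p' := by
        intro v a p p' hpp
        injection hpp
      have hdisj : ∀ z₁ ∈ S'.attach, ∀ z₂ ∈ S'.attach, z₁ ≠ z₂ →
          Disjoint ((T z₁).image (fun p => SimpleGraph.Walk.cons (hS'prop z₁.1 z₁.2).1 p))
            ((T z₂).image (fun p => SimpleGraph.Walk.cons (hS'prop z₂.1 z₂.2).1 p)) := by
        intro z₁ _ z₂ _ hz
        rw [Finset.disjoint_left]
        intro wlk hw1 hw2
        rw [Finset.mem_image] at hw1 hw2
        obtain ⟨p1, -, rfl⟩ := hw1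
        obtain ⟨p2, -, heq⟩ := hw2
        apply hz
        apply Subtype.ext
        have e1 : (SimpleGraph.Walk.cons (hS'prop z₁.1 z₁.2).1 p1).getVert 1 = z₁.1 :=
          by simp
        have e2 : (SimpleGraph.Walk.cons (hS'prop z₂.1 z₂.2).1 p2).getVert 1 = z₂.1 :=
          by simp
        rw [heq] at e2
        rw [e1] at e2
        exact e2
      have hcard : Tall.card = ∑ z ∈ S'.attach,
          ((T z).image (fun p => SimpleGraph.Walk.cons (hS'prop z.1 z.2).1 p)).card := by
        rw [hTd]
        exact Finset.card_biUnion hdisj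
      have himg : ∀ z : {x // x ∈ S'},
          ((T z).image (fun p => SimpleGraph.Walk.cons (hS'prop z.1 z.2).1 p)).card
            = (T z).card :=
        fun z => Finset.card_image_of_injective _ (hconsinj z.1 (hS'prop z.1 z.2).1)
      refine ⟨Tall, ?_, ?_⟩
      · intro p hp
        rw [hTd, Finset.mem_biUnion] at hp
        obtain ⟨z, -, hp⟩ := hp
        rw [Finset.mem_image] at hp
        obtain ⟨p', hp', rfl⟩ := hp
        rw [SimpleGraph.Walk.length_cons, hT1 z p' hp']
      · have h1 : ∏ j ∈ Finset.Icc 2 (m' + 1), (q ^ j - 1) / (q - 1)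
            = (∏ j ∈ Finset.Icc 2 m', (q ^ j - 1) / (q - 1))
              * ((q ^ (m' + 1) - 1) / (q - 1)) :=
          Finset.prod_Icc_succ_top (by omega) _
        rw [h1, hcard]
        calc (∏ j ∈ Finset.Icc 2 m', (q ^ j - 1) / (q - 1)) * ((q ^ (m' + 1) - 1) / (q - 1))
            ≤ (∏ j ∈ Finset.Icc 2 m', (q ^ j - 1) / (q - 1)) * S.card :=
              Nat.mul_le_mul_left _ hScard
          _ = S'.attach.card * (∏ j ∈ Finset.Icc 2 m', (q ^ j - 1) / (q - 1)) := by
              rw [Finset.card_attach, hS'card]; ring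
          _ = ∑ _z ∈ S'.attach, ∏ j ∈ Finset.Icc 2 m', (q ^ j - 1) / (q - 1) := by
              rw [Finset.sum_const, smul_eq_mul]
          _ ≤ ∑ z ∈ S'.attach,
              ((T z).image (fun p => SimpleGraph.Walk.cons (hS'prop z.1 z.2).1 p)).card := by
              refine Finset.sum_le_sum ?_
              intro z hzmem
              rw [himg z]
              exact hT2 z

lemma exists_extremal_pair (hq : Fintype.card F = q) (hk1 : 1 < k) (hk2 : k < n - 1)
    (hqn : n * (n - 1) / 2 ≤ q) :
    ∃ X Y : {C : Submodule F (Fin n → F) // finrank F C = k ∧ IsProjectiveCode C},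
      finrank F (X.1 ⊓ Y.1 : Submodule F (Fin n → F)) + min k (n - k) = k := by
  classical
  have hn4 : 4 ≤ n := by omega
  have hq2 : 2 ≤ q := hq ▸ Fintype.one_lt_card
  have hnq : n + 1 ≤ q := by
    have h3n : 3 * n ≤ (n - 1) * n := Nat.mul_le_mul_right n (by omega)
    have hcm : n * (n - 1) = (n - 1) * n := mul_comm _ _
    rw [hcm] at hqn
    omega
  -- choose n distinct nonzero field elements
  have hcard : n ≤ Fintype.card {x : F // ¬ x = 0} := by
    have h3 : Fintype.card {x : F // ¬ x = 0} = q - 1 := by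
      rw [Fintype.card_subtype_compl, Fintype.card_subtype_eq, hq]
    omega
  obtain ⟨emb⟩ : Nonempty (Fin n ↪ {x : F // ¬ x = 0}) :=
    Function.Embedding.nonempty_iff_card_le.mpr (by simpa [Fintype.card_fin] using hcard)
  set t : Fin n → F := fun i => (emb i).1 with htd
  have ht : Function.Injective t := fun a b h => emb.injective (Subtype.ext h)
  have ht0 : ∀ i, t i ≠ 0 := fun i => (emb i).2
  set e' : ℕ := min k (n - k) with he'd
  have he'k : e' ≤ k := min_le_left _ _
  have he'n : e' + k ≤ n := by
    have := min_le_right k (n - k)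
    omega
  have hk0n : 0 + k ≤ n := by omega
  have hken : e' + (k - e') ≤ n := by omega
  refine ⟨⟨LinearMap.range (Vmap t k 0),
      Vmap_finrank t k 0 hk0n ht, Vmap_projective t k 0 (by omega) ht ht0⟩,
    ⟨LinearMap.range (Vmap t k e'),
      Vmap_finrank t k e' he'n ht, Vmap_projective t k e' (by omega) ht ht0⟩, ?_⟩
  show finrank F (LinearMap.range (Vmap t k 0) ⊓ LinearMap.range (Vmap t k e') :
      Submodule F (Fin n → F)) + min k (n - k) = k
  rw [Vmap_inter t e' he'k he'n ht, Vmap_finrank t (k - e') e' hken ht]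
  omega

end Walks

end Stmt13

/-- If `q ≥ n(n-1)/2` and `1 < k < n - 1`, then `Π(n,k)_q` is connected, its diameter is
`min {k, n-k}`, the distance between two projective codes `X`, `Y` equals `k - dim(X ∩ Y)`,
and if this distance is `m` there are at least `[m]_q · [m-1]_q ··· [2]_q` geodesics
joining `X` and `Y`. -/
theorem stmt13 (q : ℕ) (F : Type*) [Field F] [Fintype F] (hq : Fintype.card F = q)
    (n k : ℕ) (hk1 : 1 < k) (hk2 : k < n - 1) (hqn : n * (n - 1) / 2 ≤ q) :
    (ProjCodeGraph F n k).Connected ∧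
    (ProjCodeGraph F n k).diam = min k (n - k) ∧
    ∀ X Y : {C : Submodule F (Fin n → F) // finrank F C = k ∧ IsProjectiveCode C},
      (ProjCodeGraph F n k).dist X Y =
        k - finrank F (X.1 ⊓ Y.1 : Submodule F (Fin n → F)) ∧
      ∏ j ∈ Finset.Icc 2 (k - finrank F (X.1 ⊓ Y.1 : Submodule F (Fin n → F))),
          (q ^ j - 1) / (q - 1) ≤
        Nat.card {p : (ProjCodeGraph F n k).Walk X Y //
          p.length = (ProjCodeGraph F n k).dist X Y} := by
  classical
  have hn4 : 4 ≤ n := by omega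
  have hn2 : 2 ≤ n := by omega
  have hk : 1 ≤ k := by omega
  have hq2 : 2 ≤ q := hq ▸ Fintype.one_lt_card
  obtain ⟨X₀, Y₀, hpair⟩ := Stmt13.exists_extremal_pair hq hk1 hk2 hqn
  haveI : Nonempty {C : Submodule F (Fin n → F) // finrank F C = k ∧ IsProjectiveCode C} := ⟨X₀⟩
  have hfr : ∀ X Y : {C : Submodule F (Fin n → F) // finrank F C = k ∧ IsProjectiveCode C},
      finrank F (X.1 ⊓ Y.1 : Submodule F (Fin n → F)) ≤ k := by
    intro X Y
    have h := Stmt13.finrank_inf_le_left X.1 Y.1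
    have h2 := X.2.1
    omega
  have hwalkT : ∀ X Y : {C : Submodule F (Fin n → F) // finrank F C = k ∧ IsProjectiveCode C},
      ∃ T : Finset ((ProjCodeGraph F n k).Walk X Y),
      (∀ p ∈ T, p.length = k - finrank F (X.1 ⊓ Y.1 : Submodule F (Fin n → F))) ∧
      ∏ j ∈ Finset.Icc 2 (k - finrank F (X.1 ⊓ Y.1 : Submodule F (Fin n → F))),
        (q ^ j - 1) / (q - 1) ≤ T.card := by
    intro X Y
    exact Stmt13.walks_exist hq hn2 hqn hk _ X Y (by have := hfr X Y; omega)
  have hTpos : ∀ m : ℕ, 0 < ∏ j ∈ Finset.Icc 2 m, (q ^ j - 1) / (q - 1) := by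
    intro m
    refine Finset.prod_pos ?_
    intro j hj
    rw [Finset.mem_Icc] at hj
    have h1 : q ≤ q ^ j := Nat.le_self_pow (by omega) q
    refine Nat.div_pos ?_ (by omega)
    omega
  have hdist : ∀ X Y : {C : Submodule F (Fin n → F) // finrank F C = k ∧ IsProjectiveCode C},
      (ProjCodeGraph F n k).dist X Y
      = k - finrank F (X.1 ⊓ Y.1 : Submodule F (Fin n → F)) := by
    intro X Y
    obtain ⟨T, hT1, hT2⟩ := hwalkT X Y
    obtain ⟨p₀, hp₀⟩ := Finset.card_pos.mp (lt_of_lt_of_le (hTpos _) hT2)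
    have hub := (SimpleGraph.dist_le p₀).trans (le_of_eq (hT1 p₀ hp₀))
    have hreach : (ProjCodeGraph F n k).Reachable X Y := ⟨p₀⟩
    obtain ⟨pd, hpd⟩ := hreach.exists_walk_length_eq_dist
    have hlb := Stmt13.walk_lower hk X Y pd
    rw [hpd] at hlb
    have := hfr X Y
    omega
  have hreachable : ∀ X Y : {C : Submodule F (Fin n → F) //
      finrank F C = k ∧ IsProjectiveCode C}, (ProjCodeGraph F n k).Reachable X Y := by
    intro X Y
    obtain ⟨T, hT1, hT2⟩ := hwalkT X Y
    obtain ⟨p₀, hp₀⟩ := Finset.card_pos.mp (lt_of_lt_of_le (hTpos _) hT2)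
    exact ⟨p₀⟩
  have hconn : (ProjCodeGraph F n k).Connected := by
    rw [SimpleGraph.connected_iff]
    exact ⟨hreachable, inferInstance⟩
  have hDb : ∀ X Y : {C : Submodule F (Fin n → F) // finrank F C = k ∧ IsProjectiveCode C},
      k - finrank F (X.1 ⊓ Y.1 : Submodule F (Fin n → F)) ≤ min k (n - k) := by
    intro X Y
    have h1 := Submodule.finrank_sup_add_finrank_inf_eq X.1 Y.1
    have h2 := Stmt13.finrank_le_n (X.1 ⊔ Y.1)
    have h3 := X.2.1
    have h4 := Y.2.1
    omega
  have hediam : (ProjCodeGraph F n k).ediam ≤ ((min k (n - k) : ℕ) : ℕ∞) := by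
    refine SimpleGraph.ediam_le_of_edist_le ?_
    intro u v
    obtain ⟨T, hT1, hT2⟩ := hwalkT u v
    obtain ⟨p₀, hp₀⟩ := Finset.card_pos.mp (lt_of_lt_of_le (hTpos _) hT2)
    refine le_trans (SimpleGraph.edist_le p₀) ?_
    rw [hT1 p₀ hp₀]
    exact_mod_cast Nat.cast_le.mpr (hDb u v)
  have hetop : (ProjCodeGraph F n k).ediam ≠ ⊤ :=
    ne_top_of_le_ne_top (ENat.coe_ne_top _) hediam
  have hdiam : (ProjCodeGraph F n k).diam = min k (n - k) := by
    apply le_antisymm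
    · have h5 := ENat.toNat_le_toNat hediam (ENat.coe_ne_top _)
      simpa [SimpleGraph.diam] using h5
    · have h1 : (ProjCodeGraph F n k).dist X₀ Y₀ = min k (n - k) := by
        rw [hdist X₀ Y₀]
        omega
      calc min k (n - k) = (ProjCodeGraph F n k).dist X₀ Y₀ := h1.symm
        _ ≤ _ := SimpleGraph.dist_le_diam hetop
  refine ⟨hconn, hdiam, ?_⟩
  intro X Y
  refine ⟨hdist X Y, ?_⟩
  obtain ⟨T, hT1, hT2⟩ := hwalkT X Y
  haveI : DecidableEq {C : Submodule F (Fin n → F) // finrank F C = k ∧ IsProjectiveCode C} :=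
    Classical.decEq _
  haveI : Fintype {C : Submodule F (Fin n → F) // finrank F C = k ∧ IsProjectiveCode C} :=
    Fintype.ofFinite _
  haveI : DecidableRel (ProjCodeGraph F n k).Adj := Classical.decRel _
  set T' : Finset {p : (ProjCodeGraph F n k).Walk X Y //
      p.length = (ProjCodeGraph F n k).dist X Y} :=
    T.attach.image (fun p => ⟨p.1, by rw [hdist X Y]; exact hT1 p.1 p.2⟩) with hT'd
  have hT'card : T'.card = T.card := by
    have hinj : Function.Injective (fun p : {x // x ∈ T} =>
        (⟨p.1, by rw [hdist X Y]; exact hT1 p.1 p.2⟩ :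
          {p : (ProjCodeGraph F n k).Walk X Y //
            p.length = (ProjCodeGraph F n k).dist X Y})) :=
      fun a b hab => Subtype.ext (congrArg (fun x => x.1) hab)
    rw [hT'd, Finset.card_image_of_injective _ hinj, Finset.card_attach]
  calc ∏ j ∈ Finset.Icc 2 (k - finrank F (X.1 ⊓ Y.1 : Submodule F (Fin n → F))),
        (q ^ j - 1) / (q - 1) ≤ T.card := hT2
    _ = T'.card := hT'card.symm
    _ ≤ Fintype.card {p : (ProjCodeGraph F n k).Walk X Y //
        p.length = (ProjCodeGraph F n k).dist X Y} := Finset.card_le_univ T'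
    _ = Nat.card {p : (ProjCodeGraph F n k).Walk X Y //
        p.length = (ProjCodeGraph F n k).dist X Y} := (Nat.card_eq_fintype_card).symm
end

section
/- Let q = p^m with p prime, n = (q^k - 1)/(q - 1). A vector x = (x_1,...,x_n) ∈ F_q^n is either zero or has Hamming weight q^{k-1} if and only if for every j ∈ {0,...,mk-m-1}, the elementary symmetric sum Σ_{i_1 < ... < i_{p^j}} x_{i_1}^{q-1} ··· x_{i_{p^j}}^{q-1} equals 0 in F_q. -/
/-- Lucas digit lemma: `p ∣ C(w, p^j)` iff `p ∣ w / p^j`. -/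
lemma aux_lucas (p : ℕ) (hp : p.Prime) (w j : ℕ) :
    p ∣ Nat.choose w (p ^ j) ↔ p ∣ w / p ^ j := by
  haveI := Fact.mk hp
  have h := Choose.choose_modEq_choose_mul_prod_range_choose (p := p) (n := w) (k := p ^ j) j
  have h1 : p ^ j / p ^ j = 1 := Nat.div_self (pow_pos hp.pos j)
  have h2 : ∀ i ∈ Finset.range j, Nat.choose (w / p ^ i % p) (p ^ j / p ^ i % p) = 1 := by
    intro i hi
    rw [Finset.mem_range] at hi
    have : p ^ j / p ^ i % p = 0 := by
      rw [Nat.pow_div hi.le hp.pos, Nat.pow_mod, Nat.mod_self,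
        Nat.zero_pow (by omega), Nat.zero_mod]
    rw [this, Nat.choose_zero_right]
  rw [h1, Finset.prod_congr rfl h2, Finset.prod_const_one, Nat.choose_one_right] at h
  rw [Nat.cast_one, mul_one] at h
  have h' : ((Nat.choose w (p ^ j) : ℤ) : ZMod p) = ((w / p ^ j : ℕ) : ℤ) := by
    exact_mod_cast (ZMod.intCast_eq_intCast_iff' _ _ _).mpr h
  have h'' : ((Nat.choose w (p ^ j) : ℕ) : ZMod p) = ((w / p ^ j : ℕ) : ZMod p) := by
    exact_mod_cast h'
  rw [← ZMod.natCast_eq_zero_iff, ← ZMod.natCast_eq_zero_iff, h'']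

lemma aux_digits (p w : ℕ) (hp : 1 < p) : ∀ M, (∀ j < M, p ∣ w / p ^ j) ↔ p ^ M ∣ w := by
  intro M
  induction M with
  | zero => simp
  | succ M ih =>
    constructor
    · intro h
      have hM : p ^ M ∣ w := ih.mp fun j hj => h j (by omega)
      have := (Nat.dvd_div_iff_mul_dvd hM).mp (h M (by omega))
      rw [pow_succ]; exact this
    · intro h j hj
      rcases Nat.lt_succ_iff_lt_or_eq.mp hj with hj | rfl
      · exact ih.mpr (dvd_trans (pow_dvd_pow p (by omega)) h) j hj
      · have hM : p ^ j ∣ w := dvd_trans (pow_dvd_pow p (by omega)) h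
        rw [Nat.dvd_div_iff_mul_dvd hM, mul_comm, ← pow_succ']
        exact h

lemma aux_count (q n : ℕ) (hq2 : 2 ≤ q) (F : Type*) [Field F] [Fintype F] [DecidableEq F]
    (hq : Fintype.card F = q) (x : Fin n → F) (t : ℕ) :
    ∑ s ∈ Finset.powersetCard t (Finset.univ : Finset (Fin n)),
      ∏ i ∈ s, x i ^ (q - 1) = ((hammingNorm x).choose t : F) := by
  classical
  have hx : ∀ i, x i ^ (q - 1) = if x i ≠ 0 then (1 : F) else 0 := by
    intro i
    split_ifs with h
    · rw [← hq]; exact FiniteField.pow_card_sub_one_eq_one (x i) h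
    · push_neg at h; rw [h]; exact zero_pow (by omega)
  calc ∑ s ∈ Finset.powersetCard t (Finset.univ : Finset (Fin n)),
        ∏ i ∈ s, x i ^ (q - 1)
      = ∑ s ∈ Finset.powersetCard t (Finset.univ : Finset (Fin n)),
        if ∀ i ∈ s, x i ≠ 0 then (1 : F) else 0 := by
        refine Finset.sum_congr rfl fun s _ => ?_
        simp_rw [hx]
        rw [Finset.prod_boole (M₀ := F) (p := fun i => x i ≠ 0)]
        congr
    _ = (((Finset.powersetCard t (Finset.univ : Finset (Fin n))).filter
          fun s => ∀ i ∈ s, x i ≠ 0).card : F) := by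
        rw [Finset.sum_boole]
    _ = ((Finset.powersetCard t ({i | x i ≠ 0} : Finset (Fin n))).card : F) := by
        congr 2
        ext s
        simp only [Finset.mem_filter, Finset.mem_powersetCard, Finset.subset_iff,
          Finset.mem_univ, true_and]
        tauto
    _ = ((hammingNorm x).choose t : F) := by
        rw [Finset.card_powersetCard]; rfl

/-- Let `q = p^m` with `p` prime and `n = (q^k - 1)/(q - 1)`. A vector `x ∈ F_q^n` is either
zero or has Hamming weight `q^{k-1}` if and only if for every `j ∈ {0, ..., mk - m - 1}` the
elementary symmetric sum `Σ_{i₁ < ... < i_{p^j}} x_{i₁}^{q-1} ··· x_{i_{p^j}}^{q-1}` vanishes.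
(The condition `j ∈ {0, ..., mk - m - 1}` is expressed as `j < m * k - m`.) -/
theorem stmt16 (p m q k n : ℕ) (hp : p.Prime) (hqpm : q = p ^ m)
    (hn : n = (q ^ k - 1) / (q - 1))
    (F : Type*) [Field F] [Fintype F] [DecidableEq F] (hq : Fintype.card F = q)
    (x : Fin n → F) :
    (x = 0 ∨ hammingNorm x = q ^ (k - 1)) ↔
      ∀ j : ℕ, j < m * k - m →
        ∑ s ∈ Finset.powersetCard (p ^ j) (Finset.univ : Finset (Fin n)),
          ∏ i ∈ s, x i ^ (q - 1) = 0 := by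
  have hq2 : 2 ≤ q := hq ▸ Fintype.one_lt_card
  haveI := Fact.mk hp
  -- characteristic of F is p
  have hm : m ≠ 0 := by rintro rfl; rw [hqpm, pow_zero] at hq2; omega
  obtain ⟨r, -, n', hr, hcard⟩ := FiniteField.card' F
  have hrp : r = p := by
    have h1 : r ∣ p ^ m := by
      rw [← hqpm, ← hq, hcard]; exact dvd_pow_self r n'.ne_zero
    exact (Nat.prime_dvd_prime_iff_eq hr hp).mp (hr.dvd_of_dvd_pow h1)
  haveI hcharp : CharP F p := by
    rcases CharP.exists F with ⟨c, hc⟩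
    have : c = p := by
      subst hrp
      obtain ⟨n'', hr', hcard'⟩ := @FiniteField.card F _ _ c hc
      have : c ∣ r ^ (n' : ℕ) := by
        rw [← hcard, hcard']; exact dvd_pow_self c n''.2.ne'
      exact (Nat.prime_dvd_prime_iff_eq hr' hr).mp (hr'.dvd_of_dvd_pow this)
    rwa [this] at hc
  set w := hammingNorm x with hw
  rcases Nat.eq_zero_or_pos k with rfl | hk
  · -- k = 0 : n = 0, x = 0, condition vacuous
    have hn0 : n = 0 := by simp [hn]
    constructor
    · intro _ j hj; omega
    · intro _
      left
      funext i
      exact absurd i.2 (by omega)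
  · -- k ≥ 1
    have hM : m * k - m = m * (k - 1) := by
      cases k with
      | zero => omega
      | succ k => rw [Nat.mul_succ, Nat.succ_sub_one]; omega
    set M := m * (k - 1) with hMdef
    have hqk : q ^ (k - 1) = p ^ M := by rw [hqpm, ← pow_mul]
    have hwn : w ≤ n := by
      have : w ≤ Fintype.card (Fin n) := Finset.card_filter_le _ _
      simpa using this
    have hnlt : n < 2 * q ^ (k - 1) := by
      have hsum : n = ∑ i ∈ Finset.range k, q ^ i := by
        rw [hn, Nat.geomSum_eq hq2]
      have h2 : ∑ i ∈ Finset.range k, q ^ i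
          = ∑ i ∈ Finset.range (k - 1), q ^ i + q ^ (k - 1) := by
        conv_lhs => rw [show k = (k - 1) + 1 by omega, Finset.sum_range_succ]
      have h1 : ∑ i ∈ Finset.range (k - 1), q ^ i < q ^ (k - 1) :=
        Nat.geomSum_lt hq2 fun i hi => Finset.mem_range.mp hi
      omega
    rw [hM]
    constructor
    · intro h j hj
      rw [aux_count q n hq2 F hq x, ← hw]
      rw [CharP.cast_eq_zero_iff F p, aux_lucas p hp]
      refine (aux_digits p w hp.one_lt M).mpr ?_ j hj
      rcases h with h | h
      · have : w = 0 := by rw [hw, h, hammingNorm_zero]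
        simp [this]
      · rw [h, hqk]
    · intro h
      have hdvd : p ^ M ∣ w := by
        refine (aux_digits p w hp.one_lt M).mp fun j hj => ?_
        have := h j hj
        rw [aux_count q n hq2 F hq x, ← hw, CharP.cast_eq_zero_iff F p, aux_lucas p hp] at this
        exact this
      rcases Nat.eq_zero_or_pos w with hw0 | hwpos
      · left; exact hammingNorm_eq_zero.mp hw0
      · right
        obtain ⟨c, hc⟩ := hdvd
        have hpM : 0 < p ^ M := pow_pos hp.pos M
        have hc1 : c = 1 := by
          rcases Nat.eq_zero_or_pos c with rfl | hcpos
          · omega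
          have : w < 2 * p ^ M := by rw [← hqk]; omega
          nlinarith [hc]
        rw [hqk, hc, hc1, mul_one]
end
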